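/- arXiv:0905.0437 — 8 statements merged into one kernel-verified Lean document; each statement's English description precedes it below -/
import Mathlib

section
/- Let (X_n) be a sequence of nonnegative random variables (each defined on its own probability space) and let a ∈ [0,∞]. Suppose (i) for every real b < a, P(X_n ≥ b) → 1 as n → ∞, and (ii) limsup_n E[X_n] ≤ a. Then X_n → a in probability (meaning: if a < ∞, then for every ε > 0, P(|X_n − a| > ε) → 0; if a = ∞, then for every b < ∞, P(X_n ≥ b) → 1), and E[X_n] → a. Furthermore, if a < ∞, then E|X_n − a| → 0. -/
open MeasureTheory Filter Topology ENNReal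

/-- Lemma on sequences of nonnegative random variables (each on its own probability
space): if `P(Xₙ ≥ b) → 1` for every real `b < a` and `limsup E[Xₙ] ≤ a`, then
`Xₙ → a` in probability and `E[Xₙ] → a`, and moreover `E|Xₙ - a| → 0` when `a < ∞`. -/
theorem stmt_2 {Ω : ℕ → Type*} [∀ n, MeasurableSpace (Ω n)]
    (μ : ∀ n, Measure (Ω n)) [∀ n, IsProbabilityMeasure (μ n)]
    (X : ∀ n, Ω n → ℝ) (hXmeas : ∀ n, Measurable (X n)) (hXnn : ∀ n ω, 0 ≤ X n ω)
    (a : ℝ≥0∞)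
    (h1 : ∀ b : ℝ, ENNReal.ofReal b < a →
      Tendsto (fun n => μ n {ω | b ≤ X n ω}) atTop (𝓝 1))
    (h2 : limsup (fun n => ∫⁻ ω, ENNReal.ofReal (X n ω) ∂μ n) atTop ≤ a) :
    (a ≠ ∞ → ∀ ε : ℝ, 0 < ε →
      Tendsto (fun n => μ n {ω | ε < |X n ω - a.toReal|}) atTop (𝓝 0)) ∧
    (a = ∞ → ∀ b : ℝ, Tendsto (fun n => μ n {ω | b ≤ X n ω}) atTop (𝓝 1)) ∧
    Tendsto (fun n => ∫⁻ ω, ENNReal.ofReal (X n ω) ∂μ n) atTop (𝓝 a) ∧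
    (a ≠ ∞ →
      Tendsto (fun n => ∫⁻ ω, ENNReal.ofReal |X n ω - a.toReal| ∂μ n) atTop (𝓝 0)) := by
  set E : ℕ → ℝ≥0∞ := fun n => ∫⁻ ω, ENNReal.ofReal (X n ω) ∂μ n with hE
  -- generic lower bound: level b times measure of {b ≤ X} bounds integrals from below
  have key : ∀ (b : ℝ) (n : ℕ) (f : Ω n → ℝ≥0∞), Measurable f →
      (∀ ω, b ≤ X n ω → ENNReal.ofReal b ≤ f ω) →
      ENNReal.ofReal b * μ n {ω | b ≤ X n ω} ≤ ∫⁻ ω, f ω ∂μ n := by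
    intro b n f hf hfb
    calc ENNReal.ofReal b * μ n {ω | b ≤ X n ω}
        ≤ ENNReal.ofReal b * μ n {ω | ENNReal.ofReal b ≤ f ω} :=
          mul_le_mul_right (measure_mono fun ω hω => hfb ω hω) _
      _ ≤ _ := mul_meas_ge_le_lintegral₀ hf.aemeasurable _
  -- eventual strict lower bound
  have evlb : ∀ (c : ℝ≥0∞) (b : ℝ), c < ENNReal.ofReal b → ENNReal.ofReal b < a →
      ∀ (g : ℕ → ℝ≥0∞), (∀ n, ENNReal.ofReal b * μ n {ω | b ≤ X n ω} ≤ g n) →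
      ∀ᶠ n in atTop, c < g n := by
    intro c b hcb hba g hg
    have hmul : Tendsto (fun n => ENNReal.ofReal b * μ n {ω | b ≤ X n ω}) atTop
        (𝓝 (ENNReal.ofReal b * 1)) :=
      ENNReal.Tendsto.const_mul (h1 b hba) (Or.inr ofReal_ne_top)
    rw [mul_one] at hmul
    filter_upwards [hmul.eventually_const_lt hcb] with n hn
    exact hn.trans_le (hg n)
  have hEtendsto : Tendsto E atTop (𝓝 a) := by
    rw [tendsto_order]
    constructor
    · intro c hc
      obtain ⟨d, hcd, hda⟩ := exists_between hc
      have hd : ENNReal.ofReal d.toReal = d := ENNReal.ofReal_toReal hda.ne_top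
      refine evlb c d.toReal (by rw [hd]; exact hcd) (by rw [hd]; exact hda) E
        fun n => key _ n _ (hXmeas n).ennreal_ofReal fun ω hω => ofReal_le_ofReal hω
    · intro c hc
      exact eventually_lt_of_limsup_lt (lt_of_le_of_lt h2 hc)
  have hL1full : a ≠ ∞ →
      Tendsto (fun n => ∫⁻ ω, ENNReal.ofReal |X n ω - a.toReal| ∂μ n) atTop (𝓝 0) := by
    intro ha
    set α := a.toReal with hα
    have hαnn : 0 ≤ α := toReal_nonneg
    have hoα : ENNReal.ofReal α = a := ENNReal.ofReal_toReal ha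
    set m : ℕ → ℝ≥0∞ := fun n => ∫⁻ ω, ENNReal.ofReal (min (X n ω) α) ∂μ n with hm
    have hmle : ∀ n, m n ≤ a := by
      intro n
      calc m n ≤ ∫⁻ _ω, ENNReal.ofReal α ∂μ n :=
            lintegral_mono fun ω => ofReal_le_ofReal (min_le_right _ _)
        _ = ENNReal.ofReal α := by simp
        _ = a := hoα
    have hmt : Tendsto m atTop (𝓝 a) := by
      rw [tendsto_order]
      constructor
      · intro c hc
        obtain ⟨d, hcd, hda⟩ := exists_between hc
        have hd : ENNReal.ofReal d.toReal = d := ENNReal.ofReal_toReal hda.ne_top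
        have hdα : d.toReal ≤ α := ENNReal.toReal_mono ha hda.le
        refine evlb c d.toReal (by rw [hd]; exact hcd) (by rw [hd]; exact hda) m
          fun n => key _ n _ ((hXmeas n).min measurable_const).ennreal_ofReal
            fun ω hω => ofReal_le_ofReal (le_min hω hdα)
      · intro c hc
        exact Eventually.of_forall fun n => lt_of_le_of_lt (hmle n) hc
    have hsum : ∀ n, (∫⁻ ω, ENNReal.ofReal |X n ω - α| ∂μ n) + 2 * m n = E n + a := by
      intro n
      have hptw : ∀ ω, ENNReal.ofReal |X n ω - α| + 2 * ENNReal.ofReal (min (X n ω) α)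
          = ENNReal.ofReal (X n ω) + a := by
        intro ω
        have h0 : 0 ≤ min (X n ω) α := le_min (hXnn n ω) hαnn
        have : |X n ω - α| + 2 * min (X n ω) α = X n ω + α := by
          rcases le_total (X n ω) α with h | h
          · rw [abs_of_nonpos (by linarith), min_eq_left h]; ring
          · rw [abs_of_nonneg (by linarith), min_eq_right h]; ring
        calc ENNReal.ofReal |X n ω - α| + 2 * ENNReal.ofReal (min (X n ω) α)
            = ENNReal.ofReal (|X n ω - α| + 2 * min (X n ω) α) := by
              rw [ENNReal.ofReal_add (abs_nonneg _) (by positivity),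
                ENNReal.ofReal_mul (by norm_num)]
              norm_num
          _ = ENNReal.ofReal (X n ω + α) := by rw [this]
          _ = ENNReal.ofReal (X n ω) + a := by
              rw [ENNReal.ofReal_add (hXnn n ω) hαnn, hoα]
      have hmeas1 : Measurable fun ω => ENNReal.ofReal |X n ω - α| :=
        ((hXmeas n).sub measurable_const).abs.ennreal_ofReal
      calc (∫⁻ ω, ENNReal.ofReal |X n ω - α| ∂μ n) + 2 * m n
          = ∫⁻ ω, ENNReal.ofReal |X n ω - α| + 2 * ENNReal.ofReal (min (X n ω) α) ∂μ n := by
            rw [lintegral_add_left hmeas1, lintegral_const_mul _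
              ((hXmeas n).min measurable_const).ennreal_ofReal]
        _ = ∫⁻ ω, ENNReal.ofReal (X n ω) + a ∂μ n := lintegral_congr hptw
        _ = E n + a := by
            rw [lintegral_add_right _ measurable_const]
            simp [hE]
    have hid : ∀ n, (∫⁻ ω, ENNReal.ofReal |X n ω - α| ∂μ n) = (E n + a) - 2 * m n := by
      intro n
      refine ENNReal.eq_sub_of_add_eq ?_ (hsum n)
      exact mul_ne_top (by norm_num) (lt_of_le_of_lt (hmle n) (lt_top_iff_ne_top.2 ha)).ne
    have hlim : Tendsto (fun n => (E n + a) - 2 * m n) atTop (𝓝 ((a + a) - 2 * a)) := by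
      refine ENNReal.Tendsto.sub (hEtendsto.add tendsto_const_nhds)
        (ENNReal.Tendsto.const_mul hmt (Or.inr (by norm_num))) ?_
      exact Or.inl (add_ne_top.2 ⟨ha, ha⟩)
    have : (a + a) - 2 * a = 0 := by rw [two_mul, tsub_self]
    rw [this] at hlim
    exact hlim.congr fun n => (hid n).symm
  refine ⟨?_, fun ha b => h1 b (by rw [ha]; exact ofReal_lt_top), hEtendsto, hL1full⟩
  -- convergence in probability (a ≠ ∞)
  intro ha ε hε
  have hL1 := hL1full ha
  exact by
    have hbound : ∀ n, μ n {ω | ε < |X n ω - a.toReal|} ≤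
        (∫⁻ ω, ENNReal.ofReal |X n ω - a.toReal| ∂μ n) / ENNReal.ofReal ε := by
      intro n
      refine le_trans (measure_mono fun ω hω => ?_)
        (meas_ge_le_lintegral_div ((hXmeas n).sub measurable_const).abs.ennreal_ofReal.aemeasurable
          (by simpa using hε) ofReal_ne_top)
      exact ofReal_le_ofReal (le_of_lt hω)
    have hdiv : Tendsto (fun n => (∫⁻ ω, ENNReal.ofReal |X n ω - a.toReal| ∂μ n) /
        ENNReal.ofReal ε) atTop (𝓝 (0 / ENNReal.ofReal ε)) := by
      simp_rw [ENNReal.div_eq_inv_mul]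
      exact ENNReal.Tendsto.const_mul hL1 (Or.inr (ENNReal.inv_ne_top.2 (ENNReal.ofReal_pos.2 hε).ne'))
    rw [ENNReal.zero_div] at hdiv
    exact tendsto_of_tendsto_of_tendsto_of_le_of_le tendsto_const_nhds hdiv
      (fun n => zero_le) hbound
end

section
/- Let κ be a kernel on a measure space (S,μ) with 0 < μ(S) < ∞, and define g(x) := ∑_{j=0}^∞ (T_κ^j 1)(x) ∈ [0,∞]. The following are equivalent: (i) ∫_S g dμ < ∞; (ii) there exists a measurable f : S → [0,∞) with f ∈ L¹(μ) such that f = T_κ f + 1 holds μ-a.e.; (iii) there exists a measurable f : S → [0,∞) with f ∈ L¹(μ) such that f ≥ T_κ f + 1 holds μ-a.e. Moreover, when these conditions hold, g is finite μ-a.e., g ∈ L¹(μ), g satisfies g = T_κ g + 1, and g ≤ f μ-a.e. for every nonnegative f ∈ L¹(μ) with f ≥ T_κ f + 1 a.e.; in particular g is the smallest nonnegative solution of f = T_κ f + 1. -/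
open MeasureTheory Filter Topology ENNReal

/-- The integral operator `T_κ` with kernel `κ`, acting on nonnegative functions:
`(T_κ f)(x) = ∫ κ(x,y) f(y) dμ(y)`. -/
noncomputable def Tker {S : Type*} [MeasurableSpace S] (κ : S → S → ℝ) (μ : Measure S)
    (f : S → ℝ≥0∞) : S → ℝ≥0∞ :=
  fun x => ∫⁻ y, ENNReal.ofReal (κ x y) * f y ∂μ

section Aux

variable {S : Type*} [MeasurableSpace S] {μ : Measure S} {κ : S → S → ℝ}

lemma Tker_meas [SFinite μ] (hκ : Measurable (Function.uncurry κ)) {f : S → ℝ≥0∞}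
    (hf : Measurable f) : Measurable (Tker κ μ f) :=
  Measurable.lintegral_prod_right' (f := fun p : S × S => ENNReal.ofReal (κ p.1 p.2) * f p.2)
    (hκ.ennreal_ofReal.mul (hf.comp measurable_snd))

lemma Tker_iter_meas [SFinite μ] (hκ : Measurable (Function.uncurry κ)) (j : ℕ) :
    Measurable ((Tker κ μ)^[j] (fun _ => (1 : ℝ≥0∞))) := by
  induction j with
  | zero => exact measurable_const
  | succ n ih => rw [Function.iterate_succ_apply']; exact Tker_meas hκ ih

lemma Tker_mono_ae {f h : S → ℝ≥0∞} (hfh : f ≤ᵐ[μ] h) (x : S) :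
    Tker κ μ f x ≤ Tker κ μ h x :=
  lintegral_mono_ae (hfh.mono fun y hy => mul_le_mul_right hy _)

lemma Tker_congr_ae {f h : S → ℝ≥0∞} (hfh : f =ᵐ[μ] h) (x : S) :
    Tker κ μ f x = Tker κ μ h x :=
  lintegral_congr_ae (hfh.mono fun y hy => by simp only [hy])

lemma Tker_tsum (hκ : Measurable (Function.uncurry κ)) {f : ℕ → S → ℝ≥0∞}
    (hf : ∀ n, Measurable (f n)) (x : S) :
    Tker κ μ (fun y => ∑' n, f n y) x = ∑' n, Tker κ μ (f n) x := by
  simp only [Tker]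
  rw [← lintegral_tsum (f := fun n y => ENNReal.ofReal (κ x y) * f n y) fun n =>
    ((hκ.of_uncurry_left.ennreal_ofReal.mul (hf n))).aemeasurable]
  exact lintegral_congr fun y => ENNReal.tsum_mul_left.symm

lemma Tker_finsum (hκ : Measurable (Function.uncurry κ)) {f : ℕ → S → ℝ≥0∞}
    (hf : ∀ n, Measurable (f n)) (n : ℕ) (x : S) :
    Tker κ μ (fun y => ∑ j ∈ Finset.range n, f j y) x
      = ∑ j ∈ Finset.range n, Tker κ μ (f j) x := by
  simp only [Tker, Finset.mul_sum]
  exact lintegral_finset_sum _ fun j _ =>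
    hκ.of_uncurry_left.ennreal_ofReal.mul (hf j)

end Aux

/-- Theorem (characterization of finiteness of `sus(κ)`): with
`g(x) := ∑_{j≥0} (T_κ^j 1)(x)`, the condition `∫ g dμ < ∞` is equivalent to the
existence of a nonnegative `L¹` solution of `f = T_κ f + 1` (a.e.), and to the
existence of a nonnegative `L¹` supersolution `f ≥ T_κ f + 1` (a.e.); and in that
case `g` is finite a.e., satisfies `g = T_κ g + 1`, lies in `L¹`, and is the
smallest nonnegative solution/supersolution. -/
theorem stmt_3 {S : Type*} [MeasurableSpace S] (μ : Measure S)
    (hμ0 : μ Set.univ ≠ 0) (hμfin : μ Set.univ ≠ ∞)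
    (κ : S → S → ℝ)
    (hκmeas : Measurable (Function.uncurry κ))
    (hκnn : ∀ x y, 0 ≤ κ x y)
    (hκsymm : ∀ x y, κ x y = κ y x)
    (hκint : (∫⁻ x, ∫⁻ y, ENNReal.ofReal (κ x y) ∂μ ∂μ) ≠ ∞) :
    let g : S → ℝ≥0∞ := fun x => ∑' j : ℕ, (Tker κ μ)^[j] (fun _ => 1) x
    ((∫⁻ x, g x ∂μ) ≠ ∞ ↔
        ∃ f : S → ℝ≥0∞, Measurable f ∧ (∀ x, f x ≠ ∞) ∧ (∫⁻ x, f x ∂μ) ≠ ∞ ∧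
          f =ᵐ[μ] fun x => Tker κ μ f x + 1) ∧
    ((∫⁻ x, g x ∂μ) ≠ ∞ ↔
        ∃ f : S → ℝ≥0∞, Measurable f ∧ (∀ x, f x ≠ ∞) ∧ (∫⁻ x, f x ∂μ) ≠ ∞ ∧
          ∀ᵐ x ∂μ, Tker κ μ f x + 1 ≤ f x) ∧
    ((∫⁻ x, g x ∂μ) ≠ ∞ →
        (∀ᵐ x ∂μ, g x ≠ ∞) ∧ (∀ x, g x = Tker κ μ g x + 1) ∧
        (∀ f : S → ℝ≥0∞, Measurable f → (∀ x, f x ≠ ∞) → (∫⁻ x, f x ∂μ) ≠ ∞ →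
          (∀ᵐ x ∂μ, Tker κ μ f x + 1 ≤ f x) → ∀ᵐ x ∂μ, g x ≤ f x)) := by
  have : IsFiniteMeasure μ := ⟨lt_top_iff_ne_top.2 hμfin⟩
  intro g
  set a : ℕ → S → ℝ≥0∞ := fun j => (Tker κ μ)^[j] (fun _ => 1) with ha
  have hameas : ∀ j, Measurable (a j) := Tker_iter_meas hκmeas
  have hgmeas : Measurable g := Measurable.ennreal_tsum hameas
  -- g = T g + 1
  have hg_eq : ∀ x, g x = Tker κ μ g x + 1 := by
    intro x
    have h1 : g x = a 0 x + ∑' j, a (j + 1) x :=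
      tsum_eq_zero_add' ENNReal.summable
    have h2 : (∑' j, a (j + 1) x) = Tker κ μ g x := by
      have : ∀ j, a (j + 1) = Tker κ μ (a j) := fun j =>
        Function.iterate_succ_apply' _ _ _
      simp_rw [this]
      exact (Tker_tsum hκmeas hameas x).symm
    have h0 : a 0 x = 1 := rfl
    rw [h1, h0, h2, add_comm]
  -- key minimality lemma
  have key : ∀ f : S → ℝ≥0∞, Measurable f →
      (∀ᵐ x ∂μ, Tker κ μ f x + 1 ≤ f x) → ∀ᵐ x ∂μ, g x ≤ f x := by
    intro f hfmeas hsuper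
    have hS : ∀ n : ℕ, ∀ᵐ x ∂μ, (∑ j ∈ Finset.range n, a j x) ≤ f x := by
      intro n
      induction n with
      | zero => exact ae_of_all _ fun x => by simp
      | succ n ih =>
        filter_upwards [hsuper] with x hx
        have hTS : Tker κ μ (fun y => ∑ j ∈ Finset.range n, a j y) x ≤ Tker κ μ f x :=
          Tker_mono_ae ih x
        have hsum : (∑ j ∈ Finset.range (n + 1), a j x)
            = Tker κ μ (fun y => ∑ j ∈ Finset.range n, a j y) x + 1 := by
          rw [Finset.sum_range_succ']
          have : ∀ j, a (j + 1) = Tker κ μ (a j) := fun j =>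
            Function.iterate_succ_apply' _ _ _
          simp_rw [this]
          rw [Tker_finsum hκmeas hameas n x]
          rfl
        calc (∑ j ∈ Finset.range (n + 1), a j x)
            = Tker κ μ (fun y => ∑ j ∈ Finset.range n, a j y) x + 1 := hsum
          _ ≤ Tker κ μ f x + 1 := add_le_add_left hTS 1
          _ ≤ f x := hx
    have hall : ∀ᵐ x ∂μ, ∀ n, (∑ j ∈ Finset.range n, a j x) ≤ f x :=
      (ae_all_iff).2 hS
    filter_upwards [hall] with x hx
    rw [show g x = ⨆ n, ∑ j ∈ Finset.range n, a j x from ENNReal.tsum_eq_iSup_nat]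
    exact iSup_le hx
  -- (i) → existence of a solution
  have mk_sol : (∫⁻ x, g x ∂μ) ≠ ∞ →
      ∃ f : S → ℝ≥0∞, Measurable f ∧ (∀ x, f x ≠ ∞) ∧ (∫⁻ x, f x ∂μ) ≠ ∞ ∧
        f =ᵐ[μ] fun x => Tker κ μ f x + 1 := by
    intro hgi
    have hgfin : ∀ᵐ x ∂μ, g x < ∞ := ae_lt_top hgmeas hgi
    set A : Set S := {x | g x < ∞} with hA
    have hAmeas : MeasurableSet A := measurableSet_lt hgmeas measurable_const
    refine ⟨A.indicator g, hgmeas.indicator hAmeas, ?_, ?_, ?_⟩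
    · intro x
      by_cases hx : x ∈ A
      · simpa [Set.indicator_of_mem hx] using (hx : g x < ∞).ne
      · simp [Set.indicator_of_notMem hx]
    · have heq : A.indicator g =ᵐ[μ] g :=
        hgfin.mono fun x hx => Set.indicator_of_mem (show x ∈ A from hx) g
      rwa [lintegral_congr_ae heq]
    · have heq : A.indicator g =ᵐ[μ] g :=
        hgfin.mono fun x hx => Set.indicator_of_mem (show x ∈ A from hx) g
      have hT : ∀ x, Tker κ μ (A.indicator g) x = Tker κ μ g x :=
        Tker_congr_ae heq
      calc A.indicator g =ᵐ[μ] g := heq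
        _ = fun x => Tker κ μ g x + 1 := funext hg_eq
        _ = fun x => Tker κ μ (A.indicator g) x + 1 := by
            funext x; rw [hT x]
  refine ⟨⟨mk_sol, ?_⟩, ⟨fun h => ?_, ?_⟩, fun h => ?_⟩
  · rintro ⟨f, hfm, -, hfi, hfeq⟩
    exact ne_top_of_le_ne_top hfi
      (lintegral_mono_ae (key f hfm (hfeq.mono fun x hx => hx.ge)))
  · obtain ⟨f, hfm, hffin, hfi, hfeq⟩ := mk_sol h
    exact ⟨f, hfm, hffin, hfi, hfeq.mono fun x hx => hx.ge⟩
  · rintro ⟨f, hfm, -, hfi, hsuper⟩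
    exact ne_top_of_le_ne_top hfi (lintegral_mono_ae (key f hfm hsuper))
  · exact ⟨(ae_lt_top hgmeas h).mono fun x hx => hx.ne, hg_eq,
      fun f hfm _ _ hsuper => key f hfm hsuper⟩
end

section
/- Let T be a compact self-adjoint operator on a real Hilbert space H such that 1 is a simple eigenvalue of T (its eigenspace is one-dimensional) and the remainder of the spectrum of T is contained in (−∞, 1−δ] for some δ > 0, and let ψ be a corresponding eigenvector with ‖ψ‖ = 1. Then there exist η > 0 and C < ∞ with the following property: for every bounded self-adjoint operator T' on H with ‖T' − T‖ < η such that I − T' is invertible, and for all f, g ∈ H with ‖f‖ ≤ 1 and ‖g‖ ≤ 1, there exist real numbers e₁, e₂ with |e₁| ≤ C‖T'−T‖ and |e₂| ≤ C‖T'−T‖² such that 1 − ⟨T'ψ,ψ⟩ + e₂ ≠ 0 and |⟨(I−T')⁻¹ f, g⟩ − (⟨f,ψ⟩⟨ψ,g⟩ + e₁)/(1 − ⟨T'ψ,ψ⟩ + e₂)| ≤ C. -/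
open scoped RealInnerProductSpace
open Filter

lemma cs_aux {H : Type*} [NormedAddCommGroup H] [InnerProductSpace ℝ H]
    (D : H →L[ℝ] H) (hsym : ∀ x y : H, ⟪D x, y⟫ = ⟪x, D y⟫)
    (hpos : ∀ x : H, 0 ≤ ⟪D x, x⟫) (u v : H) :
    ⟪D u, v⟫ ^ 2 ≤ ⟪D u, u⟫ * ⟪D v, v⟫ := by
  have hvu : ⟪D v, u⟫ = ⟪D u, v⟫ := (hsym v u).trans (real_inner_comm _ _)
  have key : ∀ t : ℝ, 0 ≤ ⟪D v, v⟫ * (t * t) + (2 * ⟪D u, v⟫) * t + ⟪D u, u⟫ := by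
    intro t
    have h0 := hpos (u + t • v)
    have he : ⟪D (u + t • v), u + t • v⟫
        = ⟪D v, v⟫ * (t * t) + (2 * ⟪D u, v⟫) * t + ⟪D u, u⟫ := by
      rw [map_add, map_smul]
      simp only [inner_add_left, inner_add_right, real_inner_smul_left,
        real_inner_smul_right]
      rw [hvu]; ring
    linarith [he ▸ h0]
  have hd := discrim_le_zero key
  rw [discrim] at hd
  nlinarith [hd]

set_option maxHeartbeats 1000000 in
lemma form_le_aux {H : Type*} [NormedAddCommGroup H] [InnerProductSpace ℝ H]
    [CompleteSpace H]
    (T : H →L[ℝ] H) (hsa : IsSelfAdjoint T) (hcomp : IsCompactOperator ⇑T)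
    (ψ : H) (hψ : T ψ = ψ) (hψn : ‖ψ‖ = 1)
    (hsimple : ∀ v : H, T v = v → ∃ c : ℝ, v = c • ψ)
    (δ : ℝ) (hδ : 0 < δ) (hδ2 : δ ≤ 1/2)
    (hspec : spectrum ℝ T ⊆ Set.Iic (1 - δ) ∪ {1}) :
    ∀ w : H, ⟪w, ψ⟫ = 0 → ⟪T w, w⟫ ≤ (1 - δ) * ‖w‖ ^ 2 := by
  intro w hw
  by_contra hcon
  push_neg at hcon
  have hw0 : w ≠ 0 := by
    rintro rfl; simp at hcon
  have hwn : (0:ℝ) < ‖w‖ := norm_pos_iff.mpr hw0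
  have hTsym : ∀ x y : H, ⟪T x, y⟫ = ⟪x, T y⟫ := fun x y => hsa.isSymmetric x y
  have hψψ : ⟪ψ, ψ⟫ = 1 := by
    rw [real_inner_self_eq_norm_sq, hψn]; norm_num
  set P : H →L[ℝ] H := (innerSL ℝ ψ).smulRight ψ with hPdef
  set A : H →L[ℝ] H := T - (2:ℝ) • P with hAdef
  have hAapp : ∀ v : H, A v = T v - (2 * ⟪ψ, v⟫) • ψ := by
    intro v
    simp [hAdef, hPdef, ContinuousLinearMap.smulRight_apply, smul_smul,
      ContinuousLinearMap.sub_apply]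
  have hAsym : ∀ x y : H, ⟪A x, y⟫ = ⟪x, A y⟫ := by
    intro x y
    rw [hAapp, hAapp]
    simp only [inner_sub_left, inner_sub_right, real_inner_smul_left,
      real_inner_smul_right]
    rw [hTsym x y, real_inner_comm ψ x, real_inner_comm y ψ]
    ring
  -- the Rayleigh sup of A
  set Sset : Set ℝ := (fun v : H => ⟪A v, v⟫) '' Metric.sphere (0:H) 1 with hSdef
  have hne : Sset.Nonempty := ⟨⟪A ψ, ψ⟫, ψ, by simp [hψn], rfl⟩
  have hbdd : BddAbove Sset := by
    refine ⟨‖A‖, ?_⟩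
    rintro y ⟨v, hv, rfl⟩
    have hv1 : ‖v‖ = 1 := mem_sphere_zero_iff_norm.mp hv
    calc ⟪A v, v⟫ ≤ ‖A v‖ * ‖v‖ := real_inner_le_norm _ _
      _ ≤ ‖A‖ * ‖v‖ * ‖v‖ := by
          have := A.le_opNorm v; nlinarith [norm_nonneg (A v), norm_nonneg v]
      _ = ‖A‖ := by rw [hv1]; ring
  set r := sSup Sset with hrdef
  have hrge : ∀ v : H, ‖v‖ = 1 → ⟪A v, v⟫ ≤ r := fun v hv =>
    le_csSup hbdd ⟨v, mem_sphere_zero_iff_norm.mpr hv, rfl⟩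
  set u : H := ‖w‖⁻¹ • w with hudef
  have hu : ‖u‖ = 1 := norm_smul_inv_norm hw0
  have huψ : ⟪u, ψ⟫ = 0 := by simp [hudef, real_inner_smul_left, hw]
  have hTu : 1 - δ < ⟪T u, u⟫ := by
    have h1 : ⟪T u, u⟫ = ‖w‖⁻¹ * (‖w‖⁻¹ * ⟪T w, w⟫) := by
      simp [hudef, map_smul, real_inner_smul_left, real_inner_smul_right]
    have h2 : ‖w‖⁻¹ * ‖w‖ = 1 := inv_mul_cancel₀ hwn.ne'
    have hinv : (0:ℝ) < ‖w‖⁻¹ := inv_pos.mpr hwn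
    rw [h1]
    have h3 : ‖w‖⁻¹ * ‖w‖⁻¹ * ((1 - δ) * ‖w‖ ^ 2) = 1 - δ := by
      have h4 : ‖w‖⁻¹ * ‖w‖⁻¹ * ((1 - δ) * ‖w‖ ^ 2)
          = (1 - δ) * ((‖w‖⁻¹ * ‖w‖) * (‖w‖⁻¹ * ‖w‖)) := by ring
      rw [h4, h2]; ring
    calc 1 - δ = ‖w‖⁻¹ * ‖w‖⁻¹ * ((1 - δ) * ‖w‖ ^ 2) := h3.symm
      _ < ‖w‖⁻¹ * ‖w‖⁻¹ * ⟪T w, w⟫ :=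
          mul_lt_mul_of_pos_left hcon (mul_pos hinv hinv)
      _ = ‖w‖⁻¹ * (‖w‖⁻¹ * ⟪T w, w⟫) := by ring
  have hAu : ⟪A u, u⟫ = ⟪T u, u⟫ := by
    have huψ' : ⟪ψ, u⟫ = 0 := by rw [real_inner_comm]; exact huψ
    rw [hAapp, inner_sub_left, real_inner_smul_left, huψ']
    ring
  have hr1 : 1 - δ < r := lt_of_lt_of_le hTu (hAu ▸ hrge u hu)
  have hrpos : (0:ℝ) < r := by linarith
  have hAle : ∀ v : H, ⟪A v, v⟫ ≤ r * ‖v‖ ^ 2 := by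
    intro v
    rcases eq_or_ne v 0 with rfl | hv0
    · simp
    · have hvn : (0:ℝ) < ‖v‖ := norm_pos_iff.mpr hv0
      have h1 := hrge (‖v‖⁻¹ • v) (norm_smul_inv_norm hv0)
      have h2 : ⟪A (‖v‖⁻¹ • v), ‖v‖⁻¹ • v⟫ = ‖v‖⁻¹ * (‖v‖⁻¹ * ⟪A v, v⟫) := by
        simp [map_smul, real_inner_smul_left, real_inner_smul_right]
      rw [h2] at h1
      have h3 : ‖v‖⁻¹ * ‖v‖ = 1 := inv_mul_cancel₀ hvn.ne'
      have h4 : ⟪A v, v⟫ = ‖v‖ ^ 2 * (‖v‖⁻¹ * (‖v‖⁻¹ * ⟪A v, v⟫)) := by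
        have h5 : ‖v‖ ^ 2 * (‖v‖⁻¹ * (‖v‖⁻¹ * ⟪A v, v⟫))
            = ((‖v‖⁻¹ * ‖v‖) * (‖v‖⁻¹ * ‖v‖)) * ⟪A v, v⟫ := by ring
        rw [h5, h3]; ring
      calc ⟪A v, v⟫ = ‖v‖ ^ 2 * (‖v‖⁻¹ * (‖v‖⁻¹ * ⟪A v, v⟫)) := h4
        _ ≤ ‖v‖ ^ 2 * r := mul_le_mul_of_nonneg_left h1 (sq_nonneg _)
        _ = r * ‖v‖ ^ 2 := by ring
  set D : H →L[ℝ] H := r • (1 : H →L[ℝ] H) - A with hDdef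
  have hDapp : ∀ v : H, D v = r • v - A v := by
    intro v; simp [hDdef, ContinuousLinearMap.sub_apply]
  have hDsym : ∀ x y : H, ⟪D x, y⟫ = ⟪x, D y⟫ := by
    intro x y
    rw [hDapp, hDapp]
    simp only [inner_sub_left, inner_sub_right, real_inner_smul_left,
      real_inner_smul_right]
    rw [hAsym x y]
  have hDpos : ∀ x : H, 0 ≤ ⟪D x, x⟫ := by
    intro x
    rw [hDapp]
    have := hAle x
    rw [inner_sub_left, real_inner_smul_left, real_inner_self_eq_norm_sq]
    linarith
  have hex : ∀ n : ℕ, ∃ v : H, ‖v‖ = 1 ∧ ⟪D v, v⟫ < 1/(n+1) := by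
    intro n
    have hpos' : (0:ℝ) < 1/(n+1) := by positivity
    have hlt : r - 1/(n+1) < r := by linarith
    obtain ⟨y, hy, hylt⟩ := exists_lt_of_lt_csSup hne (by rw [← hrdef]; exact hlt)
    obtain ⟨v, hv, rfl⟩ := hy
    have hv1 : ‖v‖ = 1 := mem_sphere_zero_iff_norm.mp hv
    refine ⟨v, hv1, ?_⟩
    rw [hDapp, inner_sub_left, real_inner_smul_left, real_inner_self_eq_norm_sq, hv1]
    have : (1:ℝ) ^ 2 = 1 := one_pow 2
    rw [this]
    linarith
  choose v hv1 hv2 using hex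
  have hCS := cs_aux D hDsym hDpos
  have hDn : ∀ n : ℕ, ‖D (v n)‖ ^ 2 ≤ ‖D‖ * (1/(n+1)) := by
    intro n
    have h1 := hCS (v n) (D (v n))
    rw [real_inner_self_eq_norm_sq] at h1
    have h2 : ⟪D (D (v n)), D (v n)⟫ ≤ ‖D‖ * ‖D (v n)‖ ^ 2 := by
      calc ⟪D (D (v n)), D (v n)⟫ ≤ ‖D (D (v n))‖ * ‖D (v n)‖ := real_inner_le_norm _ _
        _ ≤ (‖D‖ * ‖D (v n)‖) * ‖D (v n)‖ :=
            mul_le_mul_of_nonneg_right (D.le_opNorm _) (norm_nonneg _)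
        _ = ‖D‖ * ‖D (v n)‖ ^ 2 := by ring
    have h3 : (0:ℝ) ≤ ⟪D (v n), v n⟫ := hDpos _
    have h4 : ⟪D (v n), v n⟫ ≤ 1/(n+1) := (hv2 n).le
    have step3 : (‖D (v n)‖ ^ 2) ^ 2 ≤ (1/(n+1)) * (‖D‖ * ‖D (v n)‖ ^ 2) :=
      h1.trans (le_trans (mul_le_mul_of_nonneg_left h2 h3)
        (mul_le_mul_of_nonneg_right h4 (by positivity)))
    by_cases hx0 : ‖D (v n)‖ = 0
    · rw [hx0]
      norm_num
      positivity
    · have hx : (0:ℝ) < ‖D (v n)‖ ^ 2 :=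
        pow_pos ((norm_nonneg _).lt_of_ne (Ne.symm hx0)) 2
      have hmm : ‖D (v n)‖ ^ 2 * ‖D (v n)‖ ^ 2
          ≤ (‖D‖ * (1/(n+1))) * ‖D (v n)‖ ^ 2 := by nlinarith [step3]
      exact le_of_mul_le_mul_right hmm hx
  have hsq0 : Tendsto (fun n : ℕ => ‖D (v n)‖ ^ 2) atTop (nhds 0) := by
    have hb : Tendsto (fun n : ℕ => ‖D‖ * (1/(n+1))) atTop (nhds 0) := by
      have := tendsto_one_div_add_atTop_nhds_zero_nat.const_mul ‖D‖
      simpa using this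
    exact squeeze_zero (fun n => sq_nonneg _) hDn hb
  have hn0 : Tendsto (fun n : ℕ => ‖D (v n)‖) atTop (nhds 0) := by
    have := (Real.continuous_sqrt.tendsto 0).comp hsq0
    simpa [Function.comp_def, Real.sqrt_sq (norm_nonneg _)] using this
  have htend0 : Tendsto (fun n : ℕ => D (v n)) atTop (nhds 0) :=
    tendsto_zero_iff_norm_tendsto_zero.mpr hn0
  -- compactness
  have hK : IsCompact (closure ((⇑(T : H →ₗ[ℝ] H)) '' Metric.closedBall 0 1)) :=
    IsCompactOperator.isCompact_closure_image_closedBall (𝕜₁ := ℝ)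
      (f := (T : H →ₗ[ℝ] H)) hcomp 1
  have hmem : ∀ n : ℕ, T (v n) ∈ closure ((⇑(T : H →ₗ[ℝ] H)) '' Metric.closedBall 0 1) :=
    fun n => subset_closure ⟨v n, by simp [hv1 n], rfl⟩
  obtain ⟨y, hyK, φ₁, hφ₁, hTy⟩ := hK.tendsto_subseq hmem
  have hcmem : ∀ n : ℕ, ⟪ψ, v (φ₁ n)⟫ ∈ Set.Icc (-1:ℝ) 1 := by
    intro n
    have := abs_real_inner_le_norm ψ (v (φ₁ n))
    rw [hψn, hv1] at this
    exact abs_le.mp (by linarith)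
  obtain ⟨c, hcI, φ₂, hφ₂, hcc⟩ := (isCompact_Icc (a := (-1:ℝ)) (b := 1)).tendsto_subseq hcmem
  set θ : ℕ → ℕ := φ₁ ∘ φ₂ with hθdef
  have hθmono : StrictMono θ := hφ₁.comp hφ₂
  have htθ : Tendsto (fun n => T (v (θ n))) atTop (nhds y) :=
    hTy.comp hφ₂.tendsto_atTop
  have hcθ : Tendsto (fun n => ⟪ψ, v (θ n)⟫) atTop (nhds c) := hcc
  have hdθ : Tendsto (fun n => D (v (θ n))) atTop (nhds 0) :=
    htend0.comp hθmono.tendsto_atTop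
  have hrv : Tendsto (fun n => r • v (θ n)) atTop (nhds (y - (2*c) • ψ)) := by
    have hDv : ∀ m : ℕ, r • v m = D (v m) + T (v m) - (2 * ⟪ψ, v m⟫) • ψ := by
      intro m
      rw [hDapp, hAapp]
      abel
    simp only [hDv]
    have h1 : Tendsto (fun n => (2 * ⟪ψ, v (θ n)⟫) • ψ) atTop (nhds ((2*c) • ψ)) :=
      (hcθ.const_mul 2).smul_const ψ
    have := (hdθ.add htθ).sub h1
    simpa using this
  set z : H := r⁻¹ • (y - (2*c) • ψ) with hzdef
  have hvz : Tendsto (fun n => v (θ n)) atTop (nhds z) := by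
    have := hrv.const_smul r⁻¹
    simpa [smul_smul, inv_mul_cancel₀ hrpos.ne'] using this
  have hz1 : ‖z‖ = 1 := by
    have h1 := hvz.norm
    simp only [hv1] at h1
    exact tendsto_nhds_unique h1 tendsto_const_nhds
  have hz0 : z ≠ 0 := by intro h; rw [h] at hz1; simp at hz1
  have hTz : T z = y := tendsto_nhds_unique ((T.continuous.tendsto z).comp hvz) htθ
  have hcz : ⟪ψ, z⟫ = c := by
    have hcont : Continuous fun x : H => ⟪ψ, x⟫ :=
      Continuous.inner continuous_const continuous_id
    exact tendsto_nhds_unique ((hcont.tendsto z).comp hvz) hcθ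
  have hAz : A z = r • z := by
    rw [hAapp, hTz, hcz, hzdef, smul_smul, mul_inv_cancel₀ hrpos.ne', one_smul]
  have hzψ : ⟪z, ψ⟫ = 0 := by
    have h1 : ⟪A z, ψ⟫ = r * ⟪z, ψ⟫ := by rw [hAz, real_inner_smul_left]
    have h2 : ⟪A z, ψ⟫ = -⟪z, ψ⟫ := by
      rw [hAapp]
      have hc2 : ⟪ψ, z⟫ = ⟪z, ψ⟫ := real_inner_comm z ψ
      rw [inner_sub_left, real_inner_smul_left, hψψ, hTsym z ψ, hψ, hc2]
      ring
    have h3 : (r + 1) * ⟪z, ψ⟫ = 0 := by linarith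
    have h4 : r + 1 ≠ 0 := by linarith
    exact (mul_eq_zero.mp h3).resolve_left h4
  have hTz2 : T z = r • z := by
    have hc2 : ⟪ψ, z⟫ = 0 := by rw [real_inner_comm]; exact hzψ
    have := hAz
    rw [hAapp, hc2] at this
    simpa using this
  have hrspec : r ∈ spectrum ℝ T := by
    rw [spectrum.mem_iff]
    intro hU
    obtain ⟨uu, huu⟩ := hU
    have h1 : ((uu⁻¹ : (H →L[ℝ] H)ˣ) : H →L[ℝ] H) * ((algebraMap ℝ (H →L[ℝ] H)) r - T)
        = 1 := by rw [← huu]; exact uu.inv_mul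
    have h2 : ((algebraMap ℝ (H →L[ℝ] H)) r - T) z = 0 := by
      rw [Algebra.algebraMap_eq_smul_one]
      simp [ContinuousLinearMap.sub_apply, hTz2]
    have h3 : z = 0 := by
      have h4 : (((uu⁻¹ : (H →L[ℝ] H)ˣ) : H →L[ℝ] H) *
          ((algebraMap ℝ (H →L[ℝ] H)) r - T)) z = (1 : H →L[ℝ] H) z := by rw [h1]
      rw [ContinuousLinearMap.mul_apply, h2, map_zero] at h4
      simpa using h4.symm
    exact hz0 h3
  rcases hspec hrspec with h | h
  · rw [Set.mem_Iic] at h; linarith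
  · have hr1' : r = 1 := Set.mem_singleton_iff.mp h
    have hTz3 : T z = z := by rw [hTz2, hr1', one_smul]
    obtain ⟨c', hc'⟩ := hsimple z hTz3
    have : c' = 0 := by
      rw [hc', real_inner_smul_left, hψψ, mul_one] at hzψ
      exact hzψ
    rw [this, zero_smul] at hc'
    exact hz0 hc'

set_option maxHeartbeats 4000000 in
/-- Perturbation lemma: let `T` be a compact self-adjoint operator on a real Hilbert
space with `1` a simple eigenvalue (unit eigenvector `ψ`) and the rest of the spectrum
in `(-∞, 1-δ]`. Then there are `η > 0` and `C < ∞` such that for every self-adjoint `T'`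
with `‖T' - T‖ < η` and `I - T'` invertible, and all unit-ball vectors `f, g`,
`⟨(I - T')⁻¹ f, g⟩ = (⟨f,ψ⟩⟨ψ,g⟩ + O(‖T'-T‖)) / (1 - ⟨T'ψ,ψ⟩ + O(‖T'-T‖²)) + O(1)`. -/
theorem stmt_9 {H : Type*} [NormedAddCommGroup H] [InnerProductSpace ℝ H]
    [CompleteSpace H]
    (T : H →L[ℝ] H) (hsa : IsSelfAdjoint T) (hcomp : IsCompactOperator ⇑T)
    (ψ : H) (hψ : T ψ = ψ) (hψn : ‖ψ‖ = 1)
    (hsimple : ∀ v : H, T v = v → ∃ c : ℝ, v = c • ψ)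
    (δ : ℝ) (hδ : 0 < δ) (hspec : spectrum ℝ T ⊆ Set.Iic (1 - δ) ∪ {1}) :
    ∃ η > (0 : ℝ), ∃ C : ℝ,
      ∀ T' : H →L[ℝ] H, IsSelfAdjoint T' → ‖T' - T‖ < η →
        IsUnit ((1 : H →L[ℝ] H) - T') →
        ∀ f g : H, ‖f‖ ≤ 1 → ‖g‖ ≤ 1 →
          ∃ e₁ e₂ : ℝ, |e₁| ≤ C * ‖T' - T‖ ∧ |e₂| ≤ C * ‖T' - T‖ ^ 2 ∧
            1 - ⟪T' ψ, ψ⟫ + e₂ ≠ 0 ∧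
            |⟪(Ring.inverse ((1 : H →L[ℝ] H) - T')) f, g⟫ -
              (⟪f, ψ⟫ * ⟪ψ, g⟫ + e₁) / (1 - ⟪T' ψ, ψ⟫ + e₂)| ≤ C := by
  have hcomm : ∀ x y : H, ⟪x, y⟫ = ⟪y, x⟫ := fun x y => real_inner_comm y x
  set d : ℝ := min δ (1/2) with hddef
  have hd0 : 0 < d := lt_min hδ (by norm_num)
  have hd2 : d ≤ 1/2 := min_le_right _ _
  have hdδ : d ≤ δ := min_le_left _ _
  have hspec' : spectrum ℝ T ⊆ Set.Iic (1 - d) ∪ {1} := by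
    intro x hx
    rcases hspec hx with h | h
    · left; rw [Set.mem_Iic] at *; linarith
    · right; exact h
  have hform := form_le_aux T hsa hcomp ψ hψ hψn hsimple d hd0 hd2 hspec'
  have hψψ : ⟪ψ, ψ⟫ = 1 := by
    rw [real_inner_self_eq_norm_sq, hψn]; norm_num
  refine ⟨d/2, half_pos hd0, 64/d^2, ?_⟩
  intro T' hsa' htlt hunit f g hf hg
  set t : ℝ := ‖T' - T‖ with htdef
  have ht0 : 0 ≤ t := norm_nonneg _
  have hT'sym : ∀ x y : H, ⟪T' x, y⟫ = ⟪x, T' y⟫ := fun x y => hsa'.isSymmetric x y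
  set P : H →L[ℝ] H := (innerSL ℝ ψ).smulRight ψ with hPdef
  set Q : H →L[ℝ] H := ContinuousLinearMap.id ℝ H - P with hQdef
  set B : H →L[ℝ] H := (1 : H →L[ℝ] H) - T' with hBdef
  have hPapp : ∀ v : H, P v = ⟪ψ, v⟫ • ψ := by
    intro v; simp [hPdef]
  have hQapp : ∀ v : H, Q v = v - ⟪ψ, v⟫ • ψ := by
    intro v; simp [hQdef, ContinuousLinearMap.sub_apply, hPapp]
  have hBapp : ∀ v : H, B v = v - T' v := by
    intro v; simp [hBdef, ContinuousLinearMap.sub_apply]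
  have hB_symm : ∀ x y : H, ⟪B x, y⟫ = ⟪x, B y⟫ := by
    intro x y
    rw [hBapp, hBapp, inner_sub_left, inner_sub_right, hT'sym x y]
  have hQo : ∀ v : H, ⟪Q v, ψ⟫ = 0 := by
    intro v
    rw [hQapp, inner_sub_left, real_inner_smul_left, hψψ, mul_one, hcomm ψ v,
      sub_self]
  have hQnorm : ∀ v : H, ‖Q v‖ ≤ 2 * ‖v‖ := by
    intro v
    rw [hQapp]
    have h1 : ‖v - ⟪ψ, v⟫ • ψ‖ ≤ ‖v‖ + ‖⟪ψ, v⟫ • ψ‖ := norm_sub_le _ _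
    have h2 : ‖⟪ψ, v⟫ • ψ‖ = |⟪ψ, v⟫| := by
      rw [norm_smul, hψn, mul_one, Real.norm_eq_abs]
    have h3 : |⟪ψ, v⟫| ≤ ‖v‖ := by
      have := abs_real_inner_le_norm ψ v
      rwa [hψn, one_mul] at this
    linarith
  have hQfix : ∀ v : H, ⟪v, ψ⟫ = 0 → Q v = v := by
    intro v hv
    rw [hQapp, hcomm ψ v, hv, zero_smul, sub_zero]
  have hQψ : Q ψ = 0 := by
    rw [hQapp, hψψ, one_smul, sub_self]
  have hdecomp : ∀ v : H, v = Q v + ⟪ψ, v⟫ • ψ := by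
    intro v; rw [hQapp]; abel
  have hQsym : ∀ x y : H, ⟪Q x, y⟫ = ⟪x, Q y⟫ := by
    intro x y
    rw [hQapp, hQapp, inner_sub_left, inner_sub_right, real_inner_smul_left,
      real_inner_smul_right, hcomm x ψ]
    ring
  set Cop : H →L[ℝ] H := Q.comp (B.comp Q) + P with hCopdef
  have hCapp : ∀ v : H, Cop v = Q (B (Q v)) + P v := by
    intro v
    simp [hCopdef, ContinuousLinearMap.add_apply, ContinuousLinearMap.comp_apply]
  -- coercivity of Cop
  have hco : ∀ v : H, d/2 * ‖v‖^2 ≤ ⟪Cop v, v⟫ := by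
    intro v
    have h1 : ⟪Cop v, v⟫ = ⟪B (Q v), Q v⟫ + ⟪ψ, v⟫^2 := by
      rw [hCapp, inner_add_left, hQsym (B (Q v)) v, hPapp, real_inner_smul_left]
      ring
    have h2 : ⟪T (Q v), Q v⟫ ≤ (1 - d) * ‖Q v‖^2 := hform (Q v) (hQo v)
    have h3 : |⟪(T' - T) (Q v), Q v⟫| ≤ t * ‖Q v‖^2 := by
      calc |⟪(T' - T) (Q v), Q v⟫| ≤ ‖(T' - T) (Q v)‖ * ‖Q v‖ :=
            abs_real_inner_le_norm _ _
        _ ≤ (t * ‖Q v‖) * ‖Q v‖ :=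
            mul_le_mul_of_nonneg_right ((T' - T).le_opNorm _) (norm_nonneg _)
        _ = t * ‖Q v‖^2 := by ring
    have h4 : ⟪B (Q v), Q v⟫
        = ‖Q v‖^2 - ⟪T (Q v), Q v⟫ - ⟪(T' - T) (Q v), Q v⟫ := by
      have h5 : (T' - T) (Q v) = T' (Q v) - T (Q v) := by
        simp [ContinuousLinearMap.sub_apply]
      rw [hBapp, inner_sub_left, real_inner_self_eq_norm_sq, h5, inner_sub_left]
      ring
    have h6 : ‖v‖^2 = ‖Q v‖^2 + ⟪ψ, v⟫^2 := by
      conv_lhs => rw [hdecomp v]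
      rw [norm_add_sq_real, real_inner_smul_right, hQo v, mul_zero, norm_smul,
        hψn, mul_one, Real.norm_eq_abs, sq_abs]
      ring
    have h7 := abs_le.mp h3
    have h8 : 0 ≤ (d/2 - t) * ‖Q v‖^2 :=
      mul_nonneg (by linarith) (sq_nonneg _)
    nlinarith [sq_nonneg ⟪ψ, v⟫, sq_nonneg ‖Q v‖, h7.1, h7.2]
  have hCunit : IsUnit Cop := by
    have hc0 : (0:ℝ) < d/2 := half_pos hd0
    refine ContinuousLinearMap.isUnit_of_forall_le_norm_inner_map Cop
      (c := Real.toNNReal (d/2)) (Real.toNNReal_pos.mpr hc0) ?_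
    intro x
    rw [Real.norm_eq_abs, Real.coe_toNNReal _ hc0.le]
    have h1 := hco x
    have h2 := le_abs_self ⟪Cop x, x⟫
    nlinarith [h1, h2]
  set J : H →L[ℝ] H := Ring.inverse Cop with hJdef
  have hCJ : ∀ y : H, Cop (J y) = y := by
    intro y
    have h := Ring.mul_inverse_cancel Cop hCunit
    have h2 := congrArg (fun (S : H →L[ℝ] H) => S y) h
    simpa [ContinuousLinearMap.mul_apply] using h2
  have hJC : ∀ y : H, J (Cop y) = y := by
    intro y
    have h := Ring.inverse_mul_cancel Cop hCunit
    have h2 := congrArg (fun (S : H →L[ℝ] H) => S y) h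
    simpa [ContinuousLinearMap.mul_apply] using h2
  have hJnorm : ∀ y : H, ‖J y‖ ≤ 2/d * ‖y‖ := by
    intro y
    have h1 := hco (J y)
    rw [hCJ y] at h1
    have h2 : ⟪y, J y⟫ ≤ ‖y‖ * ‖J y‖ := real_inner_le_norm _ _
    by_cases h0 : ‖J y‖ = 0
    · rw [h0]; positivity
    · have hpos : 0 < ‖J y‖ := (norm_nonneg _).lt_of_ne (Ne.symm h0)
      have h3 : (d/2 * ‖J y‖) * ‖J y‖ ≤ ‖y‖ * ‖J y‖ := by nlinarith
      have h4 := le_of_mul_le_mul_right h3 hpos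
      have h50 : 2/d * (d/2) = 1 := by field_simp
      have h5 : ‖J y‖ = 2/d * (d/2 * ‖J y‖) := by
        rw [show 2/d * (d/2 * ‖J y‖) = (2/d * (d/2)) * ‖J y‖ from by ring, h50,
          one_mul]
      rw [h5]
      exact mul_le_mul_of_nonneg_left h4 (by positivity)
  have hJo : ∀ y : H, ⟪y, ψ⟫ = 0 → ⟪J y, ψ⟫ = 0 := by
    intro y hy
    have h1 : ⟪Cop (J y), ψ⟫ = ⟪J y, ψ⟫ := by
      rw [hCapp, inner_add_left, hQsym (B (Q (J y))) ψ, hQψ, inner_zero_right,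
        hPapp, real_inner_smul_left, hψψ, mul_one, hcomm ψ (J y)]
      ring
    rw [hCJ y] at h1
    rw [← h1, hy]
  set b : H := Q (B ψ) with hbdef
  have hbψ : ⟪b, ψ⟫ = 0 := hQo _
  have hBψnorm : ‖B ψ‖ ≤ t := by
    have h1 : B ψ = -((T' - T) ψ) := by
      rw [hBapp]
      have : (T' - T) ψ = T' ψ - T ψ := by simp [ContinuousLinearMap.sub_apply]
      rw [this, hψ]
      abel
    rw [h1, norm_neg]
    calc ‖(T' - T) ψ‖ ≤ ‖T' - T‖ * ‖ψ‖ := (T' - T).le_opNorm ψ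
      _ = t := by rw [hψn, mul_one]
  have hbn : ‖b‖ ≤ 2 * t := by
    calc ‖b‖ ≤ 2 * ‖B ψ‖ := hQnorm _
      _ ≤ 2 * t := by linarith
  set k : H := J b with hkdef
  have hkψ : ⟪k, ψ⟫ = 0 := hJo b hbψ
  have hψk : ⟪ψ, k⟫ = 0 := by rw [hcomm]; exact hkψ
  have hkn : ‖k‖ ≤ 2/d * (2*t) :=
    (hJnorm b).trans (mul_le_mul_of_nonneg_left hbn (by positivity))
  set w : H := J (Q f) with hwdef
  have hwψ : ⟪w, ψ⟫ = 0 := hJo _ (hQo f)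
  have hψw : ⟪ψ, w⟫ = 0 := by rw [hcomm]; exact hwψ
  have hwn : ‖w‖ ≤ 2/d * 2 := by
    refine (hJnorm _).trans ?_
    have := hQnorm f
    have h2 : ‖Q f‖ ≤ 2 := by nlinarith
    exact mul_le_mul_of_nonneg_left h2 (by positivity)
  have hQk : Q k = k := hQfix k hkψ
  have hQw : Q w = w := hQfix w hwψ
  have hQBk : Q (B k) = b := by
    have h := hCJ b
    rw [hCapp, hQk, hPapp, hψk, zero_smul, add_zero] at h
    exact h
  have hQBw : Q (B w) = Q f := by
    have h := hCJ (Q f)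
    rw [hCapp, hQw, hPapp, hψw, zero_smul, add_zero] at h
    exact h
  have hBψdec : B ψ = (1 - ⟪T' ψ, ψ⟫) • ψ + b := by
    have h := hdecomp (B ψ)
    have h2 : ⟪ψ, B ψ⟫ = 1 - ⟪T' ψ, ψ⟫ := by
      rw [hBapp, inner_sub_right, hψψ, hcomm ψ (T' ψ)]
    rw [h2] at h
    rw [← hbdef] at h
    rw [h]
    abel
  have hψBk : ⟪ψ, B k⟫ = ⟪k, b⟫ := by
    rw [← hB_symm ψ k, hBψdec, inner_add_left, real_inner_smul_left, hψk,
      mul_zero, zero_add, hcomm b k]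
  have hψBw : ⟪ψ, B w⟫ = ⟪w, b⟫ := by
    rw [← hB_symm ψ w, hBψdec, inner_add_left, real_inner_smul_left, hψw,
      mul_zero, zero_add, hcomm b w]
  have hBk : B k = b + ⟪k, b⟫ • ψ := by
    have h := hdecomp (B k)
    rw [hψBk, hQBk] at h
    exact h
  have hBw : B w = Q f + ⟪w, b⟫ • ψ := by
    have h := hdecomp (B w)
    rw [hψBw, hQBw] at h
    exact h
  set a : ℝ := 1 - ⟪T' ψ, ψ⟫ + -⟪k, b⟫ with hadef
  have key1 : B (ψ - k) = a • ψ := by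
    rw [map_sub, hBψdec, hBk, hadef]
    module
  have hBinv : ∀ y : H, (Ring.inverse B) (B y) = y := by
    intro y
    have h := Ring.inverse_mul_cancel B hunit
    have h2 := congrArg (fun (S : H →L[ℝ] H) => S y) h
    simpa [ContinuousLinearMap.mul_apply] using h2
  have ha : a ≠ 0 := by
    intro h0
    have h1 : B (ψ - k) = 0 := by rw [key1, h0, zero_smul]
    have h2 : ψ - k = 0 := by rw [← hBinv (ψ - k), h1, map_zero]
    have h3 : ⟪ψ - k, ψ⟫ = 0 := by rw [h2, inner_zero_left]
    rw [inner_sub_left, hkψ, hψψ] at h3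
    norm_num at h3
  set α : ℝ := (⟪f, ψ⟫ - ⟪w, b⟫)/a with hαdef
  set x : H := α • (ψ - k) + w with hxdef
  have key2 : B x = f := by
    rw [hxdef, map_add, map_smul, key1, hBw, smul_smul,
      div_mul_cancel₀ _ ha]
    have hf2 : f = Q f + ⟪ψ, f⟫ • ψ := hdecomp f
    have hψf : ⟪ψ, f⟫ = ⟪f, ψ⟫ := hcomm ψ f
    conv_rhs => rw [hf2, hψf]
    module
  have hx : (Ring.inverse B) f = x := by rw [← key2]; exact hBinv x
  -- numeric bounds
  have habs_wb : |⟪w, b⟫| * d ≤ 8 * t := by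
    have h1 : |⟪w, b⟫| ≤ ‖w‖ * ‖b‖ := abs_real_inner_le_norm _ _
    have h2 : ‖w‖ * ‖b‖ ≤ (2/d * 2) * (2*t) :=
      mul_le_mul hwn hbn (norm_nonneg _) (by positivity)
    have h3 : (2/d * 2) * (2*t) * d = 8 * t := by field_simp; ring
    calc |⟪w, b⟫| * d ≤ (2/d * 2) * (2*t) * d := by nlinarith
      _ = 8 * t := h3
  have habs_kg : |⟪k, g⟫| * d ≤ 4 * t := by
    have h1 : |⟪k, g⟫| ≤ ‖k‖ * ‖g‖ := abs_real_inner_le_norm _ _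
    have h2 : ‖k‖ * ‖g‖ ≤ (2/d * (2*t)) * 1 :=
      mul_le_mul hkn hg (norm_nonneg _) (by positivity)
    have h3 : (2/d * (2*t)) * 1 * d = 4 * t := by field_simp; ring
    calc |⟪k, g⟫| * d ≤ (2/d * (2*t)) * 1 * d := by nlinarith
      _ = 4 * t := h3
  have habs_kb : |⟪k, b⟫| * d ≤ 8 * t^2 := by
    have h1 : |⟪k, b⟫| ≤ ‖k‖ * ‖b‖ := abs_real_inner_le_norm _ _
    have h2 : ‖k‖ * ‖b‖ ≤ (2/d * (2*t)) * (2*t) :=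
      mul_le_mul hkn hbn (norm_nonneg _) (by positivity)
    have h3 : (2/d * (2*t)) * (2*t) * d = 8 * t^2 := by field_simp; ring
    calc |⟪k, b⟫| * d ≤ (2/d * (2*t)) * (2*t) * d := by nlinarith
      _ = 8 * t^2 := h3
  have habs_ψg : |⟪ψ, g⟫| ≤ 1 := by
    have := abs_real_inner_le_norm ψ g
    rw [hψn, one_mul] at this
    linarith
  have habs_fψ : |⟪f, ψ⟫| ≤ 1 := by
    have := abs_real_inner_le_norm f ψ
    rw [hψn, mul_one] at this
    nlinarith [abs_nonneg ⟪f, ψ⟫, norm_nonneg f]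
  clear_value d t P Q B Cop J b k w a α x
  refine ⟨⟪w, b⟫ * ⟪k, g⟫ - ⟪w, b⟫ * ⟪ψ, g⟫ - ⟪f, ψ⟫ * ⟪k, g⟫, -⟪k, b⟫,
    ?_, ?_, ?_, ?_⟩
  · -- |e₁| ≤ C t
    rw [show (64:ℝ)/d^2 * t = (64*t)/d^2 from by ring,
      le_div_iff₀ (by positivity : (0:ℝ) < d^2)]
    have habs : |⟪w, b⟫ * ⟪k, g⟫ - ⟪w, b⟫ * ⟪ψ, g⟫ - ⟪f, ψ⟫ * ⟪k, g⟫|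
        ≤ |⟪w, b⟫| * |⟪k, g⟫| + |⟪w, b⟫| + |⟪k, g⟫| := by
      have h1 := abs_add_le (⟪w, b⟫ * ⟪k, g⟫ - ⟪w, b⟫ * ⟪ψ, g⟫) (-(⟪f, ψ⟫ * ⟪k, g⟫))
      have h2 := abs_add_le (⟪w, b⟫ * ⟪k, g⟫) (-(⟪w, b⟫ * ⟪ψ, g⟫))
      rw [abs_neg] at h1 h2
      have h3 : |⟪w, b⟫ * ⟪k, g⟫| = |⟪w, b⟫| * |⟪k, g⟫| := abs_mul _ _
      have h4 : |⟪w, b⟫ * ⟪ψ, g⟫| ≤ |⟪w, b⟫| := by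
        rw [abs_mul]
        exact mul_le_of_le_one_right (abs_nonneg _) habs_ψg
      have h5 : |⟪f, ψ⟫ * ⟪k, g⟫| ≤ |⟪k, g⟫| := by
        rw [abs_mul]
        exact mul_le_of_le_one_left (abs_nonneg _) habs_fψ
      have h6 : ⟪w, b⟫ * ⟪k, g⟫ - ⟪w, b⟫ * ⟪ψ, g⟫ - ⟪f, ψ⟫ * ⟪k, g⟫
          = (⟪w, b⟫ * ⟪k, g⟫ - ⟪w, b⟫ * ⟪ψ, g⟫) + -(⟪f, ψ⟫ * ⟪k, g⟫) := by ring
      rw [h6]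
      calc |(⟪w, b⟫ * ⟪k, g⟫ - ⟪w, b⟫ * ⟪ψ, g⟫) + -(⟪f, ψ⟫ * ⟪k, g⟫)|
          ≤ |⟪w, b⟫ * ⟪k, g⟫ - ⟪w, b⟫ * ⟪ψ, g⟫| + |⟪f, ψ⟫ * ⟪k, g⟫| := h1
        _ ≤ |⟪w, b⟫ * ⟪k, g⟫| + |⟪w, b⟫ * ⟪ψ, g⟫| + |⟪f, ψ⟫ * ⟪k, g⟫| := by
            have h7 : |⟪w, b⟫ * ⟪k, g⟫ - ⟪w, b⟫ * ⟪ψ, g⟫|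
                ≤ |⟪w, b⟫ * ⟪k, g⟫| + |⟪w, b⟫ * ⟪ψ, g⟫| := by
              have := abs_sub (⟪w, b⟫ * ⟪k, g⟫) (⟪w, b⟫ * ⟪ψ, g⟫)
              linarith [abs_sub_abs_le_abs_sub (⟪w, b⟫ * ⟪k, g⟫) (⟪w, b⟫ * ⟪ψ, g⟫),
                abs_sub_le_iff.mp (le_refl |⟪w, b⟫ * ⟪k, g⟫ - ⟪w, b⟫ * ⟪ψ, g⟫|)]
            linarith
        _ ≤ |⟪w, b⟫| * |⟪k, g⟫| + |⟪w, b⟫| + |⟪k, g⟫| := by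
            rw [h3]; linarith
    have p0 := mul_le_mul_of_nonneg_right habs (sq_nonneg d)
    have p1 : (|⟪w, b⟫| * d) * (|⟪k, g⟫| * d) ≤ (8*t) * (4*t) :=
      mul_le_mul habs_wb habs_kg (by positivity) (by positivity)
    have p2 : (|⟪w, b⟫| * d) * d ≤ (8*t) * d :=
      mul_le_mul_of_nonneg_right habs_wb hd0.le
    have p3 : (|⟪k, g⟫| * d) * d ≤ (4*t) * d :=
      mul_le_mul_of_nonneg_right habs_kg hd0.le
    have p4 : t * t ≤ t * (d/2) := mul_le_mul_of_nonneg_left htlt.le ht0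
    have p5 : t * d ≤ t * (1/2) := mul_le_mul_of_nonneg_left hd2 ht0
    nlinarith [p0, p1, p2, p3, p4, p5, ht0, hd0.le]
  · -- |e₂| ≤ C t²
    rw [show (64:ℝ)/d^2 * t^2 = (64*t^2)/d^2 from by ring,
      le_div_iff₀ (by positivity : (0:ℝ) < d^2)]
    rw [abs_neg]
    have p1 : (|⟪k, b⟫| * d) * d ≤ (8*t^2) * d :=
      mul_le_mul_of_nonneg_right habs_kb hd0.le
    nlinarith [p1, sq_nonneg t, hd0.le, hd2, ht0]
  · rw [← hadef]; exact ha
  · rw [hx, ← hadef]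
    have hxg : ⟪x, g⟫ = α * (⟪ψ, g⟫ - ⟪k, g⟫) + ⟪w, g⟫ := by
      rw [hxdef, inner_add_left, real_inner_smul_left, inner_sub_left]
    rw [hxg]
    have heq : α * (⟪ψ, g⟫ - ⟪k, g⟫)
        - (⟪f, ψ⟫ * ⟪ψ, g⟫ + (⟪w, b⟫ * ⟪k, g⟫ - ⟪w, b⟫ * ⟪ψ, g⟫
          - ⟪f, ψ⟫ * ⟪k, g⟫)) / a = 0 := by
      rw [hαdef]
      field_simp
      ring
    have hsimp : α * (⟪ψ, g⟫ - ⟪k, g⟫) + ⟪w, g⟫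
        - (⟪f, ψ⟫ * ⟪ψ, g⟫ + (⟪w, b⟫ * ⟪k, g⟫ - ⟪w, b⟫ * ⟪ψ, g⟫
          - ⟪f, ψ⟫ * ⟪k, g⟫)) / a = ⟪w, g⟫ := by
      have := heq
      linarith
    rw [hsimp]
    have h1 : |⟪w, g⟫| ≤ ‖w‖ * ‖g‖ := abs_real_inner_le_norm _ _
    have h2 : ‖w‖ * ‖g‖ ≤ (2/d * 2) * 1 :=
      mul_le_mul hwn hg (norm_nonneg _) (by positivity)
    have h3 : (2/d * 2) * 1 ≤ 64/d^2 := by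
      rw [show (2/d * 2) * 1 = 4/d from by ring,
        div_le_div_iff₀ hd0 (by positivity : (0:ℝ) < d^2)]
      calc 4*d^2 = (4*d)*d := by ring
        _ ≤ (4*d)*(1/2) := by
            apply mul_le_mul_of_nonneg_left hd2
            linarith only [hd0]
        _ = 2*d := by ring
        _ ≤ 64*d := by linarith only [hd0]
    linarith only [h1, h2, h3]
end

section
/- Let (S,μ) be a measure space, let T be a compact operator on L²(μ), and let (h_n) be a sequence of measurable functions S → [0,1] converging pointwise μ-a.e. to a measurable function h. For a measurable u : S → [0,1], let M_u denote the bounded multiplication operator f ↦ u·f on L²(μ). Then ‖M_{h_n} T M_{h_n} − M_h T M_h‖ → 0 in operator norm as n → ∞. -/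
open MeasureTheory Filter Topology Metric RealInnerProductSpace ENNReal NNReal

set_option maxHeartbeats 1000000

/-- Uniformly bounded, strongly-null operators composed after an operator with totally
bounded image of the unit ball converge to zero in operator norm. -/
lemma aux_comp_tendsto {E F G : Type*} [NormedAddCommGroup E] [NormedSpace ℝ E]
    [NormedAddCommGroup F] [NormedSpace ℝ F] [NormedAddCommGroup G] [NormedSpace ℝ G]
    (T : E →L[ℝ] F) (hTB : TotallyBounded (⇑T '' Metric.closedBall 0 1))
    (A : ℕ → F →L[ℝ] G) {C : ℝ} (hC : ∀ n, ‖A n‖ ≤ C)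
    (hs : ∀ y : F, Tendsto (fun n => A n y) atTop (𝓝 0)) :
    Tendsto (fun n => ‖(A n).comp T‖) atTop (𝓝 0) := by
  have hC0 : 0 ≤ C := (norm_nonneg _).trans (hC 0)
  rw [Metric.tendsto_atTop]
  intro ε hε
  set δ : ℝ := ε / (4 * (C + 1)) with hδdef
  have hδpos : 0 < δ := by positivity
  obtain ⟨t, htf, hcover⟩ := Metric.totallyBounded_iff.mp hTB δ hδpos
  have hev : ∀ᶠ n in atTop, ∀ y ∈ t, ‖A n y‖ < ε / 4 := by
    rw [Filter.eventually_all_finite htf]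
    intro y _
    have h1 : Tendsto (fun n => ‖A n y‖) atTop (𝓝 0) := by
      simpa using (hs y).norm
    exact h1.eventually_lt_const (by positivity)
  obtain ⟨N, hN⟩ := Filter.eventually_atTop.mp hev
  refine ⟨N, fun n hn => ?_⟩
  have key : ‖(A n).comp T‖ ≤ C * δ + ε / 4 := by
    refine ContinuousLinearMap.opNorm_le_of_unit_norm (by positivity) fun x hx => ?_
    have hmem : T x ∈ ⇑T '' Metric.closedBall 0 1 :=
      ⟨x, by simp [Metric.mem_closedBall, dist_eq_norm, hx], rfl⟩
    obtain ⟨y, hyt, hyd⟩ := Set.mem_iUnion₂.mp (hcover hmem)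
    have h1 : ‖A n y‖ < ε / 4 := hN n hn y hyt
    have h2 : ‖A n (T x) - A n y‖ ≤ C * δ := by
      rw [← map_sub]
      calc ‖A n (T x - y)‖ ≤ ‖A n‖ * ‖T x - y‖ := (A n).le_opNorm _
        _ ≤ C * δ := by
            refine mul_le_mul (hC n) ?_ (norm_nonneg _) hC0
            have : dist (T x) y < δ := Metric.mem_ball.mp hyd
            rw [dist_eq_norm] at this
            exact this.le
    calc ‖((A n).comp T) x‖ = ‖(A n (T x) - A n y) + A n y‖ := by
          simp [ContinuousLinearMap.comp_apply]
      _ ≤ ‖A n (T x) - A n y‖ + ‖A n y‖ := norm_add_le _ _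
      _ ≤ C * δ + ε / 4 := add_le_add h2 h1.le
  have hδval : δ * (4 * (C + 1)) = ε := by
    rw [hδdef]; field_simp
  have hlt : C * δ + ε / 4 < ε := by nlinarith [hδpos.le, hC0]
  have : ‖(A n).comp T‖ < ε := key.trans_lt hlt
  simpa [Real.dist_eq, abs_of_nonneg (norm_nonneg ((A n).comp T))] using this

/-- The image of the closed unit ball under the adjoint of a compact operator on a real
Hilbert space is totally bounded. -/
lemma aux_adjoint_tb {E : Type*} [NormedAddCommGroup E] [InnerProductSpace ℝ E] [CompleteSpace E]
    (T : E →L[ℝ] E) (hT : IsCompactOperator ⇑T) :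
    TotallyBounded (⇑(ContinuousLinearMap.adjoint T) '' Metric.closedBall 0 1) := by
  set T' := ContinuousLinearMap.adjoint T with hT'
  have hTT : IsCompactOperator ⇑((T.comp T' : E →L[ℝ] E) : E →ₗ[ℝ] E) := by
    have := hT.comp_clm T'
    simpa [Function.comp_def] using this
  have hK : IsCompact (closure (⇑(T.comp T') '' Metric.closedBall 0 1)) := by
    exact hTT.isCompact_closure_image_closedBall 1
  have hTTtb : TotallyBounded (⇑(T.comp T') '' Metric.closedBall 0 1) :=
    hK.totallyBounded.subset subset_closure
  rw [Metric.totallyBounded_iff]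
  intro ε hε
  obtain ⟨t, hts, htf, hcover⟩ :=
    totallyBounded_iff_subset.mp hTTtb _
      (Metric.dist_mem_uniformity (show (0:ℝ) < ε ^ 2 / 2 by positivity))
  have hch : ∀ z ∈ t, ∃ w : E, w ∈ Metric.closedBall 0 1 ∧ (T.comp T') w = z := by
    intro z hz
    obtain ⟨w, hw, hwz⟩ := hts hz
    exact ⟨w, hw, hwz⟩
  choose! g hg1 hg2 using hch
  refine ⟨(fun z => T' (g z)) '' t, htf.image _, ?_⟩
  rintro _ ⟨f, hf, rfl⟩
  have hmem := hcover ⟨f, hf, rfl⟩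
  obtain ⟨z, hz, hdz⟩ := Set.mem_iUnion₂.mp hmem
  refine Set.mem_iUnion₂.mpr ⟨T' (g z), Set.mem_image_of_mem _ hz, ?_⟩
  rw [Metric.mem_ball, dist_eq_norm]
  have key : ‖T' f - T' (g z)‖ ^ 2 ≤ ‖f - g z‖ * ‖(T.comp T') f - (T.comp T') (g z)‖ := by
    have h1 : ‖T' f - T' (g z)‖ ^ 2 = ⟪T' (f - g z), T' (f - g z)⟫ := by
      rw [real_inner_self_eq_norm_sq, map_sub]
    have h2 : ⟪T' (f - g z), T' (f - g z)⟫ = ⟪f - g z, T (T' (f - g z))⟫ := by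
      rw [hT', ContinuousLinearMap.adjoint_inner_left]
    have h3 : T (T' (f - g z)) = (T.comp T') f - (T.comp T') (g z) := by
      simp [ContinuousLinearMap.comp_apply, map_sub]
    rw [h1, h2, h3]
    exact real_inner_le_norm _ _
  have hfb : ‖f - g z‖ ≤ 2 := by
    have h1 : ‖f‖ ≤ 1 := by simpa [Metric.mem_closedBall, dist_eq_norm] using hf
    have h2 : ‖g z‖ ≤ 1 := by
      simpa [Metric.mem_closedBall, dist_eq_norm] using hg1 z hz
    calc ‖f - g z‖ ≤ ‖f‖ + ‖g z‖ := norm_sub_le _ _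
      _ ≤ 2 := by linarith
  have hdd : ‖(T.comp T') f - (T.comp T') (g z)‖ < ε ^ 2 / 2 := by
    have hd : dist ((T.comp T') f) z < ε ^ 2 / 2 := hdz
    rw [dist_eq_norm] at hd
    rw [hg2 z hz]
    exact hd
  have hsq : ‖T' f - T' (g z)‖ ^ 2 < ε ^ 2 := by
    calc ‖T' f - T' (g z)‖ ^ 2 ≤ ‖f - g z‖ * ‖(T.comp T') f - (T.comp T') (g z)‖ := key
      _ ≤ 2 * ‖(T.comp T') f - (T.comp T') (g z)‖ :=
          mul_le_mul_of_nonneg_right hfb (norm_nonneg _)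
      _ < 2 * (ε ^ 2 / 2) := by linarith [hdd]
      _ = ε ^ 2 := by ring
  nlinarith [norm_nonneg (T' f - T' (g z)), hε]

/-- If `T` is a compact operator on `L²(μ)`, `(hₙ)` are measurable `[0,1]`-valued
functions converging a.e. to `h`, and `M u` denotes the multiplication operator by `u`,
then `M_{hₙ} T M_{hₙ} → M_h T M_h` in operator norm. -/
theorem stmt_11 {S : Type*} [MeasurableSpace S] (μ : Measure S)
    (T : Lp ℝ 2 μ →L[ℝ] Lp ℝ 2 μ) (hT : IsCompactOperator ⇑T)
    (h : ℕ → S → ℝ) (hmeas : ∀ n, Measurable (h n))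
    (hmem : ∀ n x, h n x ∈ Set.Icc (0 : ℝ) 1)
    (hlim : S → ℝ) (hlimmeas : Measurable hlim)
    (hlimmem : ∀ x, hlim x ∈ Set.Icc (0 : ℝ) 1)
    (hconv : ∀ᵐ x ∂μ, Tendsto (fun n => h n x) atTop (nhds (hlim x)))
    (M : (S → ℝ) → Lp ℝ 2 μ →L[ℝ] Lp ℝ 2 μ)
    (hM : ∀ u : S → ℝ, Measurable u → (∀ x, u x ∈ Set.Icc (0 : ℝ) 1) →
      ∀ f : Lp ℝ 2 μ, ⇑(M u f) =ᵐ[μ] fun x => u x * f x) :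
    Tendsto
      (fun n => ‖(M (h n)).comp (T.comp (M (h n))) - (M hlim).comp (T.comp (M hlim))‖)
      atTop (nhds 0) := by
  classical
  -- operator norm bound for multiplication operators
  have hMb : ∀ (u : S → ℝ), Measurable u → (∀ x, u x ∈ Set.Icc (0:ℝ) 1) → ‖M u‖ ≤ 1 := by
    intro u hu hmemu
    refine ContinuousLinearMap.opNorm_le_bound _ zero_le_one fun f => ?_
    rw [one_mul, Lp.norm_def, Lp.norm_def]
    have h1 : eLpNorm (⇑(M u f)) 2 μ = eLpNorm (fun x => u x * f x) 2 μ :=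
      eLpNorm_congr_ae (hM u hu hmemu f)
    rw [h1]
    refine ENNReal.toReal_mono (Lp.eLpNorm_lt_top f).ne ?_
    refine eLpNorm_mono_ae (Filter.Eventually.of_forall fun x => ?_)
    rw [norm_mul]
    have h2 := (hmemu x).1
    have h3 := (hmemu x).2
    calc ‖u x‖ * ‖f x‖ ≤ 1 * ‖f x‖ := by
          refine mul_le_mul_of_nonneg_right ?_ (norm_nonneg _)
          rw [Real.norm_eq_abs, abs_le]
          constructor <;> linarith
      _ = ‖f x‖ := one_mul _
  -- self-adjointness of multiplication operators
  have hadj : ∀ (u : S → ℝ), Measurable u → (∀ x, u x ∈ Set.Icc (0:ℝ) 1) →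
      ContinuousLinearMap.adjoint (M u) = M u := by
    intro u hu hmemu
    symm
    rw [ContinuousLinearMap.eq_adjoint_iff]
    intro f g
    rw [MeasureTheory.L2.inner_def, MeasureTheory.L2.inner_def]
    refine integral_congr_ae ?_
    filter_upwards [hM u hu hmemu f, hM u hu hmemu g] with x h1 h2
    simp only [RCLike.inner_apply, conj_trivial]
    rw [h1, h2]
    ring
  -- the difference operators
  set A : ℕ → (Lp ℝ 2 μ →L[ℝ] Lp ℝ 2 μ) := fun n => M (h n) - M hlim with hA
  have hAb : ∀ n, ‖A n‖ ≤ 2 := by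
    intro n
    calc ‖A n‖ ≤ ‖M (h n)‖ + ‖M hlim‖ := norm_sub_le _ _
      _ ≤ 2 := by
          have := hMb (h n) (hmeas n) (hmem n)
          have := hMb hlim hlimmeas hlimmem
          linarith
  -- strong convergence of `A n` to 0
  have hAstrong : ∀ f : Lp ℝ 2 μ, Tendsto (fun n => A n f) atTop (𝓝 0) := by
    intro f
    rw [tendsto_zero_iff_norm_tendsto_zero]
    have hae : ∀ n, ⇑(A n f) =ᵐ[μ] fun x => (h n x - hlim x) * f x := by
      intro n
      filter_upwards [Lp.coeFn_sub ((M (h n)) f) ((M hlim) f), hM (h n) (hmeas n) (hmem n) f,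
        hM hlim hlimmeas hlimmem f] with x h1 h2 h3
      simp only [hA, ContinuousLinearMap.sub_apply]
      rw [h1, Pi.sub_apply, h2, h3, sub_mul]
    have hfin : ∫⁻ x, ((‖f x‖₊ : ℝ≥0∞)) ^ (2:ℝ) ∂μ ≠ ∞ := by
      have h2 : eLpNorm (⇑f) 2 μ = (∫⁻ x, ((‖f x‖₊ : ℝ≥0∞)) ^ (2:ℝ) ∂μ) ^ ((1:ℝ)/2) := by
        rw [eLpNorm_eq_lintegral_rpow_enorm_toReal two_ne_zero ENNReal.ofNat_ne_top]
        simp only [enorm_eq_nnnorm]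
        norm_num
      have h3 := Lp.eLpNorm_lt_top f
      rw [h2] at h3
      intro hcon
      rw [hcon] at h3
      simp [ENNReal.top_rpow_of_pos (show (0:ℝ) < 1/2 by norm_num)] at h3
    have hbound_fin : ∫⁻ x, (2:ℝ≥0∞) ^ (2:ℝ) * ((‖f x‖₊ : ℝ≥0∞)) ^ (2:ℝ) ∂μ ≠ ∞ := by
      rw [lintegral_const_mul' _ _ (by simp [ENNReal.rpow_natCast] : (2:ℝ≥0∞) ^ (2:ℝ) ≠ ∞)]
      exact ENNReal.mul_ne_top (by simp [ENNReal.rpow_natCast]) hfin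
    have hlint : Tendsto
        (fun n => ∫⁻ x, ((‖(h n x - hlim x) * f x‖₊ : ℝ≥0∞)) ^ (2:ℝ) ∂μ) atTop (𝓝 0) := by
      have h0 : (𝓝 (0:ℝ≥0∞)) = 𝓝 (∫⁻ x, ((‖(0:ℝ)‖₊ : ℝ≥0∞)) ^ (2:ℝ) ∂μ) := by
        norm_num
      rw [h0]
      refine tendsto_lintegral_of_dominated_convergence'
        (fun x => (2:ℝ≥0∞) ^ (2:ℝ) * ((‖f x‖₊ : ℝ≥0∞)) ^ (2:ℝ)) (fun n => ?_) (fun n => ?_)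
        hbound_fin ?_
      · exact ((((hmeas n).sub hlimmeas).aemeasurable.mul
          (Lp.aestronglyMeasurable f).aemeasurable).enorm).pow_const (2:ℝ)
      · refine Filter.Eventually.of_forall fun x => ?_
        show ((‖(h n x - hlim x) * f x‖₊ : ℝ≥0∞)) ^ (2:ℝ)
          ≤ (2:ℝ≥0∞) ^ (2:ℝ) * ((‖f x‖₊ : ℝ≥0∞)) ^ (2:ℝ)
        rw [← ENNReal.mul_rpow_of_nonneg _ _ (by norm_num : (0:ℝ) ≤ 2)]
        refine ENNReal.rpow_le_rpow ?_ (by norm_num)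
        have hb : ‖(h n x - hlim x) * f x‖₊ ≤ 2 * ‖f x‖₊ := by
          rw [← NNReal.coe_le_coe]
          push_cast
          rw [norm_mul]
          have h2 := (hmem n x).1
          have h3 := (hmem n x).2
          have h4 := (hlimmem x).1
          have h5 := (hlimmem x).2
          refine mul_le_mul_of_nonneg_right ?_ (norm_nonneg _)
          rw [Real.norm_eq_abs, abs_le]
          constructor <;> linarith
        calc ((‖(h n x - hlim x) * f x‖₊ : ℝ≥0∞)) ≤ ((2 * ‖f x‖₊ : ℝ≥0) : ℝ≥0∞) := by
              exact_mod_cast hb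
          _ = 2 * (‖f x‖₊ : ℝ≥0∞) := by push_cast; ring
      · filter_upwards [hconv] with x hx
        have hx' : Tendsto (fun n => (h n x - hlim x) * f x) atTop (𝓝 0) := by
          have h1 : Tendsto (fun n => h n x - hlim x) atTop (𝓝 0) := by
            simpa using hx.sub (tendsto_const_nhds (x := hlim x))
          simpa using h1.mul_const (f x)
        have hcont : Continuous (fun r : ℝ => ((‖r‖₊ : ℝ≥0∞)) ^ (2:ℝ)) :=
          ENNReal.continuous_rpow_const.comp (ENNReal.continuous_coe.comp continuous_nnnorm)
        have hcomp := (hcont.tendsto 0).comp hx'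
        simp only [Function.comp_def] at hcomp
        exact hcomp
    have hnorm : ∀ n, ‖A n f‖
        = ((∫⁻ x, ((‖(h n x - hlim x) * f x‖₊ : ℝ≥0∞)) ^ (2:ℝ) ∂μ) ^ ((1:ℝ)/2)).toReal := by
      intro n
      rw [Lp.norm_def, eLpNorm_congr_ae (hae n),
        eLpNorm_eq_lintegral_rpow_enorm_toReal two_ne_zero ENNReal.ofNat_ne_top]
      simp only [enorm_eq_nnnorm]
      norm_num
    simp only [hnorm]
    have h1 : Tendsto
        (fun n => (∫⁻ x, ((‖(h n x - hlim x) * f x‖₊ : ℝ≥0∞)) ^ (2:ℝ) ∂μ) ^ ((1:ℝ)/2))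
        atTop (𝓝 0) := by
      have := (ENNReal.continuous_rpow_const (y := (1:ℝ)/2)).tendsto 0 |>.comp hlint
      simpa [Function.comp_def, ENNReal.zero_rpow_of_pos (show (0:ℝ) < 1/2 by norm_num)] using this
    have := (ENNReal.tendsto_toReal (by simp : (0:ℝ≥0∞) ≠ ∞)).comp h1
    simpa [Function.comp_def] using this
  -- adjoints
  have hAadj : ∀ n, ContinuousLinearMap.adjoint (A n) = A n := by
    intro n
    simp only [hA, map_sub]
    rw [hadj (h n) (hmeas n) (hmem n), hadj hlim hlimmeas hlimmem]
  -- totally bounded images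
  have hT' : IsCompactOperator ⇑((T : Lp ℝ 2 μ →L[ℝ] Lp ℝ 2 μ) : Lp ℝ 2 μ →ₗ[ℝ] Lp ℝ 2 μ) := by
    simpa using hT
  have hTB : TotallyBounded (⇑T '' Metric.closedBall 0 1) := by
    have hK := hT'.isCompact_closure_image_closedBall 1
    have : TotallyBounded (⇑((T : Lp ℝ 2 μ →L[ℝ] Lp ℝ 2 μ) : Lp ℝ 2 μ →ₗ[ℝ] Lp ℝ 2 μ) ''
        Metric.closedBall 0 1) := hK.totallyBounded.subset subset_closure
    simpa using this
  have hTB' : TotallyBounded (⇑(ContinuousLinearMap.adjoint T) '' Metric.closedBall 0 1) :=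
    aux_adjoint_tb T hT
  -- norm convergences
  have h1 : Tendsto (fun n => ‖(A n).comp T‖) atTop (𝓝 0) :=
    aux_comp_tendsto T hTB A hAb hAstrong
  have h2 : Tendsto (fun n => ‖(A n).comp (ContinuousLinearMap.adjoint T)‖) atTop (𝓝 0) :=
    aux_comp_tendsto _ hTB' A hAb hAstrong
  have h2' : Tendsto (fun n => ‖T.comp (A n)‖) atTop (𝓝 0) := by
    have heq : ∀ n, ‖T.comp (A n)‖ = ‖(A n).comp (ContinuousLinearMap.adjoint T)‖ := by
      intro n
      calc ‖T.comp (A n)‖ = ‖ContinuousLinearMap.adjoint (T.comp (A n))‖ :=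
            (LinearIsometryEquiv.norm_map ContinuousLinearMap.adjoint _).symm
        _ = ‖(ContinuousLinearMap.adjoint (A n)).comp (ContinuousLinearMap.adjoint T)‖ := by
            rw [ContinuousLinearMap.adjoint_comp]
        _ = ‖(A n).comp (ContinuousLinearMap.adjoint T)‖ := by rw [hAadj n]
    simp only [heq]
    exact h2
  -- splitting
  have hsplit : ∀ n, (M (h n)).comp (T.comp (M (h n))) - (M hlim).comp (T.comp (M hlim))
      = ((A n).comp T).comp (M (h n)) + (M hlim).comp (T.comp (A n)) := by
    intro n
    simp only [hA, ContinuousLinearMap.sub_comp, ContinuousLinearMap.comp_sub,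
      ContinuousLinearMap.comp_assoc]
    abel
  have hbound : ∀ n, ‖(M (h n)).comp (T.comp (M (h n))) - (M hlim).comp (T.comp (M hlim))‖
      ≤ ‖(A n).comp T‖ + ‖T.comp (A n)‖ := by
    intro n
    rw [hsplit n]
    calc ‖((A n).comp T).comp (M (h n)) + (M hlim).comp (T.comp (A n))‖
        ≤ ‖((A n).comp T).comp (M (h n))‖ + ‖(M hlim).comp (T.comp (A n))‖ := norm_add_le _ _
      _ ≤ ‖(A n).comp T‖ * ‖M (h n)‖ + ‖M hlim‖ * ‖T.comp (A n)‖ :=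
          add_le_add (ContinuousLinearMap.opNorm_comp_le _ _)
            (ContinuousLinearMap.opNorm_comp_le _ _)
      _ ≤ ‖(A n).comp T‖ * 1 + 1 * ‖T.comp (A n)‖ := by
          refine add_le_add ?_ ?_
          · exact mul_le_mul_of_nonneg_left (hMb (h n) (hmeas n) (hmem n)) (norm_nonneg _)
          · exact mul_le_mul_of_nonneg_right (hMb hlim hlimmeas hlimmem) (norm_nonneg _)
      _ = ‖(A n).comp T‖ + ‖T.comp (A n)‖ := by ring
  have hsum : Tendsto (fun n => ‖(A n).comp T‖ + ‖T.comp (A n)‖) atTop (𝓝 0) := by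
    have := h1.add h2'
    rw [add_zero] at this
    exact this
  exact squeeze_zero (fun n => norm_nonneg _) hbound hsum
end

section
/- Let S = (0,1] with Lebesgue measure μ, and let κ(x,y) = 1/max(x,y) − 1 (the CHKNS kernel). Fix 0 < λ < 1/4 and set α = (1+√(1−4λ))/2. Then the function f(x) = x^{α−1} is nonnegative, belongs to L²((0,1]), and is the unique nonnegative L² solution of the equation f(x) = 1 + λ∫₀¹ κ(x,y)f(y) dy (a.e.). Moreover ∑_{j=0}^∞ λ^j (T_κ^j 1)(x) = x^{α−1} for a.e. x ∈ (0,1], and sus(λκ) = ∫₀¹ x^{α−1} dx = 1/α = (1−√(1−4λ))/(2λ). -/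
open MeasureTheory Filter Topology ENNReal

/-- The susceptibility of the kernel `κ`: `sus(κ) = ∑_{j≥0} ⟨T_κ^j 1, 1⟩`. -/
noncomputable def susG {S : Type*} [MeasurableSpace S] (κ : S → S → ℝ) (μ : Measure S) :
    ℝ≥0∞ :=
  ∑' j : ℕ, ∫⁻ x, (Tker κ μ)^[j] (fun _ => 1) x ∂μ

namespace S13
open Set
local notation "μ₀" => MeasureTheory.volume.restrict (Set.Ioc (0:ℝ) 1)

noncomputable def Top (l : ℝ) : (ℝ → ℝ≥0∞) → ℝ → ℝ≥0∞ :=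
  Tker (fun p q => l * (1 / max p q - 1)) μ₀

variable {β x l a : ℝ}

lemma contOn (hβ0 : 0 < β) (hx : x ∈ Ioc (0:ℝ) 1) :
    ContinuousOn (fun y => (1 / max x y - 1) * y ^ (β - 1)) (Icc x 1) := by
  have hmax : ContinuousOn (fun y : ℝ => max x y) (Icc x 1) :=
    (continuous_const.max continuous_id).continuousOn
  refine ContinuousOn.mul (ContinuousOn.sub (ContinuousOn.div continuousOn_const hmax ?_)
    continuousOn_const) (ContinuousOn.rpow_const continuousOn_id ?_)
  · exact fun y hy => ne_of_gt (lt_of_lt_of_le hx.1 (le_max_left _ _))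
  · exact fun y hy => Or.inl (ne_of_gt (lt_of_lt_of_le hx.1 hy.1))

lemma integrableOn_left (hβ0 : 0 < β) (hx : x ∈ Ioc (0:ℝ) 1) :
    IntegrableOn (fun y => (1 / max x y - 1) * y ^ (β - 1)) (Ioc (0:ℝ) x) := by
  have h1 : IntegrableOn (fun y : ℝ => (1 / x - 1) * y ^ (β - 1)) (Ioc (0:ℝ) x) := by
    have := (intervalIntegral.intervalIntegrable_rpow' (a := 0) (b := x)
      (r := β - 1) (by linarith)).const_mul (1 / x - 1)
    rwa [intervalIntegrable_iff_integrableOn_Ioc_of_le hx.1.le] at this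
  refine h1.congr_fun (fun y hy => ?_) measurableSet_Ioc
  rw [max_eq_left hy.2]

lemma integrableOn_right (hβ0 : 0 < β) (hx : x ∈ Ioc (0:ℝ) 1) :
    IntegrableOn (fun y => (1 / max x y - 1) * y ^ (β - 1)) (Ioc x 1) :=
  ((contOn hβ0 hx).integrableOn_compact isCompact_Icc).mono_set Ioc_subset_Icc_self

lemma integrableOn_ker (hβ0 : 0 < β) (hx : x ∈ Ioc (0:ℝ) 1) :
    IntegrableOn (fun y => (1 / max x y - 1) * y ^ (β - 1)) (Ioc (0:ℝ) 1) := by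
  rw [← Ioc_union_Ioc_eq_Ioc hx.1.le hx.2]
  exact (integrableOn_left hβ0 hx).union (integrableOn_right hβ0 hx)

lemma key_integral (hβ0 : 0 < β) (hβ1 : β < 1) (hx : x ∈ Ioc (0:ℝ) 1) :
    ∫ y in Ioc (0:ℝ) 1, (1 / max x y - 1) * y ^ (β - 1)
      = (x ^ (β - 1) - 1) / (β * (1 - β)) := by
  have hx0 : (0:ℝ) < x := hx.1
  have hβ1' : β - 1 ≠ 0 := by linarith
  have hsplit : ∫ y in Ioc (0:ℝ) 1, (1 / max x y - 1) * y ^ (β - 1)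
      = (∫ y in Ioc (0:ℝ) x, (1 / max x y - 1) * y ^ (β - 1))
        + ∫ y in Ioc x 1, (1 / max x y - 1) * y ^ (β - 1) := by
    rw [← Ioc_union_Ioc_eq_Ioc hx0.le hx.2]
    exact setIntegral_union (Ioc_disjoint_Ioc_of_le le_rfl) measurableSet_Ioc
      (integrableOn_left hβ0 hx) (integrableOn_right hβ0 hx)
  have hleft : ∫ y in Ioc (0:ℝ) x, (1 / max x y - 1) * y ^ (β - 1)
      = (1 / x - 1) * (x ^ β / β) := by
    rw [setIntegral_congr_fun measurableSet_Ioc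
      (g := fun y => (1 / x - 1) * y ^ (β - 1)) (fun y hy => by rw [max_eq_left hy.2]),
      integral_const_mul, ← intervalIntegral.integral_of_le hx0.le,
      integral_rpow (Or.inl (by linarith))]
    rw [Real.zero_rpow (by linarith : β - 1 + 1 ≠ 0)]
    ring_nf
  have hright : ∫ y in Ioc x 1, (1 / max x y - 1) * y ^ (β - 1)
      = ((1:ℝ) ^ (β - 1) - x ^ (β - 1)) / (β - 1) - (1 - x ^ β) / β := by
    rw [setIntegral_congr_fun measurableSet_Ioc
      (g := fun y => y ^ (β - 2) - y ^ (β - 1)) (fun y hy => by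
        have hy0 : (0:ℝ) < y := lt_trans hx0 hy.1
        have h1 : y ^ (β - 1) = y ^ β / y := Real.rpow_sub_one hy0.ne' β
        have h2 : y ^ (β - 2) = y ^ β / (y * y) := by
          rw [Real.rpow_sub hy0, show (2:ℝ) = ((2:ℕ):ℝ) by norm_num,
            Real.rpow_natCast]
          ring_nf
        rw [max_eq_right hy.1.le]
        simp only [h1, h2]
        field_simp),
      ← intervalIntegral.integral_of_le hx.2]
    have hne : (0:ℝ) ∉ Set.uIcc x (1:ℝ) := by
      rw [Set.uIcc_of_le hx.2]; exact fun h => absurd h.1 (not_le.mpr hx0)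
    rw [intervalIntegral.integral_sub
      (intervalIntegral.intervalIntegrable_rpow (Or.inr hne))
      (intervalIntegral.intervalIntegrable_rpow (Or.inr hne)),
      integral_rpow (Or.inr ⟨by intro h; apply hβ1'; linarith, hne⟩),
      integral_rpow (Or.inr ⟨by intro h; apply hβ0.ne'; linarith, hne⟩),
      show β - 2 + 1 = β - 1 by ring, show β - 1 + 1 = β by ring]
    norm_num [Real.one_rpow]
  have hxb : x ^ β = x ^ (β - 1) * x := by
    rw [Real.rpow_sub_one hx0.ne' β]; field_simp
  rw [hsplit, hleft, hright, Real.one_rpow, hxb]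
  have hβ0' : β ≠ 0 := hβ0.ne'
  have hβm : β - 1 ≠ 0 := hβ1'
  generalize x ^ (β - 1) = u
  have hbb : β * (1 - β) ≠ 0 := mul_ne_zero hβ0' (by linarith)
  rw [eq_div_iff hbb]
  field_simp
  ring


lemma knonneg {y : ℝ} (hx : x ∈ Ioc (0:ℝ) 1) (hy : y ∈ Ioc (0:ℝ) 1) :
    0 ≤ 1 / max x y - 1 := by
  have hm0 : 0 < max x y := lt_max_of_lt_left hx.1
  have hm1 : max x y ≤ 1 := max_le hx.2 hy.2
  have : (1:ℝ) ≤ 1 / max x y := by rw [le_div_iff₀ hm0]; linarith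
  linarith

lemma kmeas : Measurable (fun p : ℝ × ℝ => 1 / max p.1 p.2 - 1) := by
  have : Measurable (fun p : ℝ × ℝ => max p.1 p.2) := measurable_fst.max measurable_snd
  have h2 : Measurable fun p : ℝ × ℝ => (max p.1 p.2)⁻¹ - 1 := this.inv.sub measurable_const
  simpa [one_div] using h2

lemma Tmeas' {φ : ℝ → ℝ≥0∞} (hφ : Measurable φ) :
    Measurable (Tker (fun a b => l * (1 / max a b - 1)) μ₀ φ) := by
  apply Measurable.lintegral_prod_right' (f := fun p : ℝ × ℝ =>
    ENNReal.ofReal (l * (1 / max p.1 p.2 - 1)) * φ p.2)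
  exact ((measurable_const.mul kmeas).ennreal_ofReal).mul (hφ.comp measurable_snd)

lemma Tmono' {φ ψ : ℝ → ℝ≥0∞} (h : φ ≤ᵐ[μ₀] ψ) (x : ℝ) :
    Tker (fun a b => l * (1 / max a b - 1)) μ₀ φ x
      ≤ Tker (fun a b => l * (1 / max a b - 1)) μ₀ ψ x :=
  lintegral_mono_ae (h.mono fun y hy => mul_le_mul_right hy _)

lemma Tcongr' {φ ψ : ℝ → ℝ≥0∞} (h : φ =ᵐ[μ₀] ψ) (x : ℝ) :
    Tker (fun a b => l * (1 / max a b - 1)) μ₀ φ x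
      = Tker (fun a b => l * (1 / max a b - 1)) μ₀ ψ x :=
  lintegral_congr_ae (h.mono fun y hy => by simp only [hy])

lemma Tadd' {φ ψ : ℝ → ℝ≥0∞} (hφ : Measurable φ) (x : ℝ) :
    Tker (fun a b => l * (1 / max a b - 1)) μ₀ (fun y => φ y + ψ y) x
      = Tker (fun a b => l * (1 / max a b - 1)) μ₀ φ x
        + Tker (fun a b => l * (1 / max a b - 1)) μ₀ ψ x := by
  unfold Tker
  simp only [mul_add]
  exact lintegral_add_left (((measurable_const.mul
    (kmeas.comp (measurable_prodMk_left (x := x)))).ennreal_ofReal).mul hφ) _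

lemma Trpow' (hl0 : 0 < l) (hβ0 : 0 < β) (hβ1 : β < 1) (hx : x ∈ Ioc (0:ℝ) 1) :
    Tker (fun a b => l * (1 / max a b - 1)) μ₀ (fun y => ENNReal.ofReal (y ^ (β - 1))) x
      = ENNReal.ofReal (l * ((x ^ (β - 1) - 1) / (β * (1 - β)))) := by
  have hint : Integrable (fun y => l * ((1 / max x y - 1) * y ^ (β - 1))) μ₀ :=
    (integrableOn_ker hβ0 hx).const_mul l
  have hnn : 0 ≤ᵐ[μ₀] fun y => l * ((1 / max x y - 1) * y ^ (β - 1)) := by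
    filter_upwards [ae_restrict_mem measurableSet_Ioc] with y hy
    exact mul_nonneg hl0.le (mul_nonneg (knonneg hx hy) (Real.rpow_nonneg hy.1.le _))
  have h1 : Tker (fun a b => l * (1 / max a b - 1)) μ₀
      (fun y => ENNReal.ofReal (y ^ (β - 1))) x
      = ∫⁻ y, ENNReal.ofReal (l * ((1 / max x y - 1) * y ^ (β - 1))) ∂μ₀ := by
    refine lintegral_congr_ae ?_
    filter_upwards [ae_restrict_mem measurableSet_Ioc] with y hy
    rw [← ENNReal.ofReal_mul (mul_nonneg hl0.le (knonneg hx hy)), mul_assoc]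
  rw [h1, ← ofReal_integral_eq_lintegral_ofReal hint hnn, integral_const_mul,
    key_integral hβ0 hβ1 hx]

lemma TFa' (hl0 : 0 < l) (ha0 : 0 < a) (ha1 : a < 1) (hla : l = a * (1 - a))
    (hx : x ∈ Ioc (0:ℝ) 1) :
    Tker (fun a b => l * (1 / max a b - 1)) μ₀ (fun y => ENNReal.ofReal (y ^ (a - 1))) x
      = ENNReal.ofReal (x ^ (a - 1) - 1) := by
  rw [Trpow' hl0 ha0 ha1 hx, ← hla, mul_div_cancel₀ _ hl0.ne']

lemma schur_w' (hl0 : 0 < l) (hx : x ∈ Ioc (0:ℝ) 1) :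
    Tker (fun a b => l * (1 / max a b - 1)) μ₀
      (fun y => ENNReal.ofReal (y ^ ((1/2:ℝ) - 1))) x
      ≤ ENNReal.ofReal (4 * l) * ENNReal.ofReal (x ^ ((1/2:ℝ) - 1)) := by
  rw [Trpow' hl0 (by norm_num) (by norm_num) hx, ← ENNReal.ofReal_mul (by linarith)]
  apply ENNReal.ofReal_le_ofReal
  have hx1 : 0 ≤ x ^ ((1/2:ℝ) - 1) := Real.rpow_nonneg hx.1.le _
  have h4 : (x ^ ((1/2:ℝ) - 1) - 1) / (1/2 * (1 - 1/2)) = 4 * (x ^ ((1/2:ℝ) - 1) - 1) := by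
    ring
  rw [h4]
  nlinarith

lemma schur' (hl0 : 0 < l) {φ : ℝ → ℝ≥0∞} (hφ : Measurable φ) :
    ∫⁻ x, (Tker (fun a b => l * (1 / max a b - 1)) μ₀ φ x) ^ (2:ℝ) ∂μ₀
      ≤ ENNReal.ofReal (4 * l) ^ (2:ℝ) * ∫⁻ x, φ x ^ (2:ℝ) ∂μ₀ := by
  set c : ℝ≥0∞ := ENNReal.ofReal (4 * l) with hc
  set K : ℝ → ℝ → ℝ≥0∞ := fun x y => ENNReal.ofReal (l * (1 / max x y - 1)) with hK
  set w : ℝ → ℝ≥0∞ := fun x => ENNReal.ofReal (x ^ ((1/2:ℝ) - 1)) with hw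
  have hwm : Measurable w := by fun_prop
  have hKm : Measurable (fun p : ℝ × ℝ => K p.1 p.2) :=
    (measurable_const.mul kmeas).ennreal_ofReal
  have hKm1 : ∀ x, Measurable (fun y => K x y) := fun x =>
    hKm.comp measurable_prodMk_left
  have hKsym : ∀ x y, K x y = K y x := fun x y => by simp [hK, max_comm]
  have hwne : ∀ y ∈ Ioc (0:ℝ) 1, w y ≠ 0 := fun y hy => by
    simp only [hw, ne_eq, ENNReal.ofReal_eq_zero, not_le]
    exact Real.rpow_pos_of_pos hy.1 _
  have hwnt : ∀ y, w y ≠ ∞ := fun y => ENNReal.ofReal_ne_top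
  set I : ℝ → ℝ≥0∞ := fun x => ∫⁻ y, K x y * (w y)⁻¹ * φ y ^ (2:ℝ) ∂μ₀ with hI
  -- pointwise Cauchy-Schwarz + Schur bound
  have hCS : ∀ x ∈ Ioc (0:ℝ) 1, (Tker (fun a b => l * (1 / max a b - 1)) μ₀ φ x) ^ (2:ℝ)
      ≤ c * w x * I x := by
    intro x hx
    set A : ℝ → ℝ≥0∞ := fun y => (K x y * w y) ^ ((1:ℝ)/2) with hA
    set B : ℝ → ℝ≥0∞ := fun y => (K x y * (w y)⁻¹ * φ y ^ (2:ℝ)) ^ ((1:ℝ)/2) with hB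
    have hTeq : Tker (fun a b => l * (1 / max a b - 1)) μ₀ φ x = ∫⁻ y, (A * B) y ∂μ₀ := by
      refine lintegral_congr_ae ?_
      filter_upwards [ae_restrict_mem measurableSet_Ioc] with y hy
      show K x y * φ y = (A * B) y
      have h1 : (A * B) y = (K x y * w y * (K x y * (w y)⁻¹ * φ y ^ (2:ℝ))) ^ ((1:ℝ)/2) := by
        simp only [Pi.mul_apply, hA, hB]
        rw [← ENNReal.mul_rpow_of_nonneg _ _ (by norm_num : (0:ℝ) ≤ 1/2)]
      have h2 : K x y * w y * (K x y * (w y)⁻¹ * φ y ^ (2:ℝ))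
          = (K x y * φ y) ^ (2:ℝ) := by
        rw [ENNReal.rpow_two, ENNReal.rpow_two, mul_pow, pow_two, pow_two]
        calc K x y * w y * (K x y * (w y)⁻¹ * (φ y * φ y))
            = K x y * K x y * (φ y * φ y) * (w y * (w y)⁻¹) := by ring
          _ = K x y * K x y * (φ y * φ y) := by
              rw [ENNReal.mul_inv_cancel (hwne y hy) (hwnt y), mul_one]
      rw [h1, h2, ← ENNReal.rpow_mul]
      norm_num
    have hAm : AEMeasurable A μ₀ := ((hKm1 x).mul hwm).pow_const _ |>.aemeasurable
    have hBm : AEMeasurable B μ₀ :=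
      (((hKm1 x).mul hwm.inv).mul (hφ.pow_const _)).pow_const _ |>.aemeasurable
    have hHolder := ENNReal.lintegral_mul_le_Lp_mul_Lq μ₀
      Real.HolderConjugate.two_two hAm hBm
    have hA2 : ∀ y, A y ^ (2:ℝ) = K x y * w y := fun y => by
      rw [hA, ← ENNReal.rpow_mul]; norm_num
    have hB2 : ∀ y, B y ^ (2:ℝ) = K x y * (w y)⁻¹ * φ y ^ (2:ℝ) := fun y => by
      rw [hB, ← ENNReal.rpow_mul]; norm_num
    have hAint : ∫⁻ y, A y ^ (2:ℝ) ∂μ₀ ≤ c * w x := by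
      simp only [hA2]; exact schur_w' hl0 hx
    have key : Tker (fun a b => l * (1 / max a b - 1)) μ₀ φ x
        ≤ (c * w x) ^ ((1:ℝ)/2) * I x ^ ((1:ℝ)/2) := by
      rw [hTeq]
      refine le_trans hHolder (mul_le_mul' (ENNReal.rpow_le_rpow ?_ (by norm_num))
        (ENNReal.rpow_le_rpow ?_ (by norm_num)))
      · simpa only [hA2] using hAint
      · simp only [hB2]
        exact le_rfl
    calc (Tker (fun a b => l * (1 / max a b - 1)) μ₀ φ x) ^ (2:ℝ)
        ≤ ((c * w x) ^ ((1:ℝ)/2) * I x ^ ((1:ℝ)/2)) ^ (2:ℝ) :=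
          ENNReal.rpow_le_rpow key (by norm_num)
      _ = c * w x * I x := by
          rw [ENNReal.mul_rpow_of_nonneg _ _ (by norm_num : (0:ℝ) ≤ 2),
            ← ENNReal.rpow_mul, ← ENNReal.rpow_mul]
          norm_num
  -- integrate
  have hmain : ∫⁻ x, w x * I x ∂μ₀ ≤ c * ∫⁻ y, φ y ^ (2:ℝ) ∂μ₀ := by
    have hswap : ∫⁻ x, w x * I x ∂μ₀
        = ∫⁻ y, ∫⁻ x, w x * (K x y * (w y)⁻¹ * φ y ^ (2:ℝ)) ∂μ₀ ∂μ₀ := by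
      rw [← lintegral_lintegral_swap]
      · refine lintegral_congr fun x => ?_
        exact (lintegral_const_mul' (w x) _ (hwnt x)).symm
      · exact ((hwm.comp measurable_fst).mul ((hKm.mul
          ((hwm.comp measurable_snd).inv)).mul
          ((hφ.comp measurable_snd).pow_const _))).aemeasurable
    rw [hswap]
    have hinner : ∀ y ∈ Ioc (0:ℝ) 1,
        ∫⁻ x, w x * (K x y * (w y)⁻¹ * φ y ^ (2:ℝ)) ∂μ₀
          ≤ (c * w y) * ((w y)⁻¹ * φ y ^ (2:ℝ)) := by
      intro y hy
      have hrw : ∫⁻ x, w x * (K x y * (w y)⁻¹ * φ y ^ (2:ℝ)) ∂μ₀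
          = (∫⁻ x, K y x * w x ∂μ₀) * ((w y)⁻¹ * φ y ^ (2:ℝ)) := by
        rw [← lintegral_mul_const (f := fun x => K y x * w x) _ ((hKm1 y).mul hwm)]
        refine lintegral_congr fun x => ?_
        rw [hKsym y x]; ring
      rw [hrw]
      exact mul_le_mul_left (schur_w' hl0 hy) _
    calc ∫⁻ y, ∫⁻ x, w x * (K x y * (w y)⁻¹ * φ y ^ (2:ℝ)) ∂μ₀ ∂μ₀
        ≤ ∫⁻ y, (c * w y) * ((w y)⁻¹ * φ y ^ (2:ℝ)) ∂μ₀ := by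
          refine lintegral_mono_ae ?_
          filter_upwards [ae_restrict_mem measurableSet_Ioc] with y hy
          exact hinner y hy
      _ = ∫⁻ y, c * φ y ^ (2:ℝ) ∂μ₀ := by
          refine lintegral_congr_ae ?_
          filter_upwards [ae_restrict_mem measurableSet_Ioc] with y hy
          calc (c * w y) * ((w y)⁻¹ * φ y ^ (2:ℝ))
              = c * (w y * (w y)⁻¹) * φ y ^ (2:ℝ) := by ring
            _ = c * φ y ^ (2:ℝ) := by
                rw [ENNReal.mul_inv_cancel (hwne y hy) (hwnt y), mul_one]
      _ = c * ∫⁻ y, φ y ^ (2:ℝ) ∂μ₀ := lintegral_const_mul' c _ ofReal_ne_top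
  calc ∫⁻ x, (Tker (fun a b => l * (1 / max a b - 1)) μ₀ φ x) ^ (2:ℝ) ∂μ₀
      ≤ ∫⁻ x, c * (w x * I x) ∂μ₀ := by
        refine lintegral_mono_ae ?_
        filter_upwards [ae_restrict_mem measurableSet_Ioc] with x hx
        simpa [mul_assoc] using hCS x hx
    _ = c * ∫⁻ x, w x * I x ∂μ₀ := lintegral_const_mul' c _ ofReal_ne_top
    _ ≤ c * (c * ∫⁻ y, φ y ^ (2:ℝ) ∂μ₀) := mul_le_mul_right hmain c
    _ = c ^ (2:ℝ) * ∫⁻ x, φ x ^ (2:ℝ) ∂μ₀ := by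
        rw [ENNReal.rpow_two, pow_two, mul_assoc]


lemma Tmeas {φ : ℝ → ℝ≥0∞} (hφ : Measurable φ) : Measurable (Top l φ) := Tmeas' hφ

lemma Tmono {φ ψ : ℝ → ℝ≥0∞} (h : φ ≤ᵐ[μ₀] ψ) (x : ℝ) : Top l φ x ≤ Top l ψ x :=
  Tmono' h x

lemma Tcongr {φ ψ : ℝ → ℝ≥0∞} (h : φ =ᵐ[μ₀] ψ) (x : ℝ) : Top l φ x = Top l ψ x :=
  Tcongr' h x

lemma Tadd {φ ψ : ℝ → ℝ≥0∞} (hφ : Measurable φ) (x : ℝ) :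
    Top l (fun y => φ y + ψ y) x = Top l φ x + Top l ψ x := Tadd' hφ x

lemma TFa (hl0 : 0 < l) (ha0 : 0 < a) (ha1 : a < 1) (hla : l = a * (1 - a))
    (hx : x ∈ Ioc (0:ℝ) 1) :
    Top l (fun y => ENNReal.ofReal (y ^ (a - 1))) x = ENNReal.ofReal (x ^ (a - 1) - 1) :=
  TFa' hl0 ha0 ha1 hla hx

lemma schur (hl0 : 0 < l) {φ : ℝ → ℝ≥0∞} (hφ : Measurable φ) :
    ∫⁻ x, (Top l φ x) ^ (2:ℝ) ∂μ₀
      ≤ ENNReal.ofReal (4 * l) ^ (2:ℝ) * ∫⁻ x, φ x ^ (2:ℝ) ∂μ₀ := schur' hl0 hφ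

lemma iter_meas (l : ℝ) (n : ℕ) {φ : ℝ → ℝ≥0∞} (hφ : Measurable φ) :
    Measurable ((Top l)^[n] φ) := by
  induction n generalizing φ with
  | zero => simpa using hφ
  | succ n ih => rw [Function.iterate_succ_apply]; exact ih (Tmeas hφ)

lemma schur_iter (hl0 : 0 < l) (n : ℕ) {φ : ℝ → ℝ≥0∞} (hφ : Measurable φ) :
    ∫⁻ x, ((Top l)^[n] φ x) ^ (2:ℝ) ∂μ₀
      ≤ (ENNReal.ofReal (4 * l) ^ (2:ℝ)) ^ n * ∫⁻ x, φ x ^ (2:ℝ) ∂μ₀ := by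
  induction n generalizing φ with
  | zero => simp
  | succ n ih =>
    rw [Function.iterate_succ_apply]
    refine le_trans (ih (Tmeas hφ)) ?_
    calc (ENNReal.ofReal (4 * l) ^ (2:ℝ)) ^ n * ∫⁻ x, (Top l φ x) ^ (2:ℝ) ∂μ₀
        ≤ (ENNReal.ofReal (4 * l) ^ (2:ℝ)) ^ n
            * (ENNReal.ofReal (4 * l) ^ (2:ℝ) * ∫⁻ x, φ x ^ (2:ℝ) ∂μ₀) :=
          mul_le_mul_right (schur hl0 hφ) _
      _ = (ENNReal.ofReal (4 * l) ^ (2:ℝ)) ^ (n+1) * ∫⁻ x, φ x ^ (2:ℝ) ∂μ₀ := by ring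

lemma hc2lt (hl0 : 0 < l) (hl4 : 4 * l < 1) : ENNReal.ofReal (4 * l) ^ (2:ℝ) < 1 := by
  have h1 : ENNReal.ofReal (4 * l) < 1 := by
    rw [← ENNReal.ofReal_one]
    exact ENNReal.ofReal_lt_ofReal_iff_of_nonneg (by linarith) |>.mpr hl4
  calc ENNReal.ofReal (4 * l) ^ (2:ℝ) = ENNReal.ofReal (4 * l) ^ (2:ℕ) :=
        ENNReal.rpow_two _
    _ < 1 := by
        have := ENNReal.pow_lt_pow_left (n := 2) (by norm_num) h1
        simpa using this

lemma F_sq_ne_top (ha0 : 1/2 < a) (ha1 : a < 1) :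
    ∫⁻ x, (ENNReal.ofReal (x ^ (a - 1))) ^ (2:ℝ) ∂μ₀ ≠ ∞ := by
  have hint : IntegrableOn (fun x : ℝ => x ^ (2*a - 2)) (Ioc (0:ℝ) 1) volume := by
    rw [← intervalIntegrable_iff_integrableOn_Ioc_of_le zero_le_one]
    exact intervalIntegral.intervalIntegrable_rpow' (by linarith)
  have hnn : 0 ≤ᵐ[μ₀] fun x : ℝ => x ^ (2*a - 2) := by
    filter_upwards [ae_restrict_mem measurableSet_Ioc] with y hy
    exact Real.rpow_nonneg hy.1.le _
  have h1 : ∫⁻ x, (ENNReal.ofReal (x ^ (a - 1))) ^ (2:ℝ) ∂μ₀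
      = ∫⁻ x, ENNReal.ofReal (x ^ (2*a - 2)) ∂μ₀ := by
    refine lintegral_congr_ae ?_
    filter_upwards [ae_restrict_mem measurableSet_Ioc] with y hy
    rw [ENNReal.ofReal_rpow_of_nonneg (Real.rpow_nonneg hy.1.le _) (by norm_num),
      ← Real.rpow_mul hy.1.le]
    ring_nf
  rw [h1]
  exact ((hasFiniteIntegral_iff_ofReal hnn).mp hint.2).ne

lemma series (ha0 : 1/2 < a) (ha1 : a < 1) (hla : l = a * (1 - a)) :
    ∀ᵐ x ∂μ₀, (∑' j : ℕ, (Top l)^[j] (fun _ => 1) x) = ENNReal.ofReal (x ^ (a - 1)) := by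
  have hl0 : 0 < l := by nlinarith
  have hl4 : 4 * l < 1 := by nlinarith
  have hFm : Measurable (fun x : ℝ => ENNReal.ofReal (x ^ (a - 1))) := by fun_prop
  have hF1 : ∀ x ∈ Ioc (0:ℝ) 1, ENNReal.ofReal (x ^ (a - 1))
      = 1 + Top l (fun y => ENNReal.ofReal (y ^ (a - 1))) x := by
    intro x hx
    have h1 : (1:ℝ) ≤ x ^ (a - 1) :=
      Real.one_le_rpow_of_pos_of_le_one_of_nonpos hx.1 hx.2 (by linarith)
    rw [TFa hl0 (by linarith) ha1 hla hx,
      ← ENNReal.ofReal_one, ← ENNReal.ofReal_add (by norm_num) (by linarith)]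
    norm_num
  have hgsum : ∀ n : ℕ, ∀ᵐ x ∂μ₀,
      (Top l)^[n] (fun y => ENNReal.ofReal (y ^ (a - 1))) x
        = (Top l)^[n] (fun _ => 1) x
          + (Top l)^[n+1] (fun y => ENNReal.ofReal (y ^ (a - 1))) x := by
    intro n
    induction n with
    | zero =>
      filter_upwards [ae_restrict_mem measurableSet_Ioc] with x hx
      simpa using hF1 x hx
    | succ n ih =>
      refine Eventually.of_forall (fun x => ?_)
      rw [Function.iterate_succ_apply' (Top l) n, Tcongr ih x,
        Tadd (iter_meas l n measurable_const) x,
        ← Function.iterate_succ_apply' (Top l) (n+1),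
        ← Function.iterate_succ_apply' (Top l) n (fun _ => 1)]
  have hR0 : ∀ᵐ x ∂μ₀,
      (⨅ n : ℕ, (Top l)^[n] (fun y => ENNReal.ofReal (y ^ (a - 1))) x) = 0 := by
    have hRm : Measurable fun x =>
        ⨅ n : ℕ, (Top l)^[n] (fun y => ENNReal.ofReal (y ^ (a - 1))) x :=
      Measurable.iInf (fun n => iter_meas l n hFm)
    have hbound : ∀ n : ℕ,
        ∫⁻ x, (⨅ m : ℕ, (Top l)^[m] (fun y => ENNReal.ofReal (y ^ (a - 1))) x) ^ (2:ℝ) ∂μ₀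
        ≤ (ENNReal.ofReal (4 * l) ^ (2:ℝ)) ^ n
            * ∫⁻ x, (ENNReal.ofReal (x ^ (a - 1))) ^ (2:ℝ) ∂μ₀ := by
      intro n
      refine le_trans ?_ (schur_iter hl0 n hFm)
      exact lintegral_mono fun x => ENNReal.rpow_le_rpow (iInf_le _ n) (by norm_num)
    have htend : Tendsto (fun n : ℕ => (ENNReal.ofReal (4 * l) ^ (2:ℝ)) ^ n
        * ∫⁻ x, (ENNReal.ofReal (x ^ (a - 1))) ^ (2:ℝ) ∂μ₀) atTop (𝓝 0) := by
      have := ENNReal.Tendsto.mul_const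
        (ENNReal.tendsto_pow_atTop_nhds_zero_of_lt_one (hc2lt hl0 hl4))
        (Or.inr (F_sq_ne_top ha0 ha1))
      simpa using this
    have hz : ∫⁻ x, (⨅ m : ℕ, (Top l)^[m]
        (fun y => ENNReal.ofReal (y ^ (a - 1))) x) ^ (2:ℝ) ∂μ₀ = 0 :=
      le_antisymm (ge_of_tendsto' htend hbound) zero_le
    have := (lintegral_eq_zero_iff (by fun_prop : Measurable fun x =>
      (⨅ m : ℕ, (Top l)^[m] (fun y => ENNReal.ofReal (y ^ (a - 1))) x) ^ (2:ℝ))).mp hz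
    filter_upwards [this] with x hx
    simpa [ENNReal.rpow_eq_zero_iff] using hx
  have hae := (ae_restrict_mem (μ := volume) (s := Ioc (0:ℝ) 1)
    measurableSet_Ioc).and ((ae_all_iff.mpr hgsum).and hR0)
  filter_upwards [hae] with x hx
  obtain ⟨hx1, hrec, hr0⟩ := hx
  have hdecomp : ∀ n : ℕ, ENNReal.ofReal (x ^ (a - 1))
      = (∑ j ∈ Finset.range n, (Top l)^[j] (fun _ => 1) x)
        + (Top l)^[n] (fun y => ENNReal.ofReal (y ^ (a - 1))) x := by
    intro n
    induction n with
    | zero => simp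
    | succ n ih => rw [ih, hrec n, Finset.sum_range_succ]; ring
  have le1 : (∑' j : ℕ, (Top l)^[j] (fun _ => 1) x) ≤ ENNReal.ofReal (x ^ (a - 1)) := by
    rw [ENNReal.tsum_eq_iSup_nat]
    exact iSup_le fun n => by rw [hdecomp n]; exact le_self_add
  have le2 : ENNReal.ofReal (x ^ (a - 1)) ≤ ∑' j : ℕ, (Top l)^[j] (fun _ => 1) x := by
    have h1 : ∀ n : ℕ, ENNReal.ofReal (x ^ (a - 1))
        ≤ (∑' j : ℕ, (Top l)^[j] (fun _ => 1) x)
          + (Top l)^[n] (fun y => ENNReal.ofReal (y ^ (a - 1))) x := by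
      intro n
      rw [hdecomp n]
      exact add_le_add_left (ENNReal.sum_le_tsum _) _
    have h2 := le_iInf h1
    rwa [← ENNReal.add_iInf, hr0, add_zero] at h2
  exact le_antisymm le1 le2

lemma f_nonneg : 0 ≤ᵐ[μ₀] fun x : ℝ => x ^ (a - 1) := by
  filter_upwards [ae_restrict_mem measurableSet_Ioc] with x hx
  exact Real.rpow_nonneg hx.1.le _

lemma memf (ha0 : 1/2 < a) (ha1 : a < 1) : MemLp (fun x : ℝ => x ^ (a - 1)) 2 μ₀ := by
  rw [memLp_two_iff_integrable_sq
    ((by fun_prop : Measurable fun x : ℝ => x ^ (a - 1)).aestronglyMeasurable)]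
  have hint : IntegrableOn (fun x : ℝ => x ^ (2*a - 2)) (Ioc (0:ℝ) 1) volume := by
    rw [← intervalIntegrable_iff_integrableOn_Ioc_of_le zero_le_one]
    exact intervalIntegral.intervalIntegrable_rpow' (by linarith)
  refine hint.congr ?_
  filter_upwards [ae_restrict_mem measurableSet_Ioc] with x hx
  rw [show (2:ℝ)*a - 2 = (a-1) * ((2:ℕ):ℝ) by push_cast; ring,
    Real.rpow_mul hx.1.le, Real.rpow_natCast]

lemma eq_fixed (ha0 : 1/2 < a) (ha1 : a < 1) (hla : l = a * (1 - a)) :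
    ∀ᵐ x ∂μ₀, x ^ (a - 1)
      = 1 + l * ∫ y, (1 / max x y - 1) * (y ^ (a - 1)) ∂μ₀ := by
  have hl0 : 0 < l := by nlinarith
  filter_upwards [ae_restrict_mem measurableSet_Ioc] with x hx
  rw [show (∫ y, (1 / max x y - 1) * (y ^ (a - 1)) ∂μ₀)
      = ∫ y in Ioc (0:ℝ) 1, (1 / max x y - 1) * y ^ (a - 1) from rfl,
    key_integral (by linarith) ha1 hx, ← hla, mul_div_cancel₀ _ hl0.ne']
  ring

lemma int_val (ha0 : 0 < a) : ∫ x in Ioc (0:ℝ) 1, x ^ (a - 1) = a⁻¹ := by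
  rw [← intervalIntegral.integral_of_le zero_le_one,
    integral_rpow (Or.inl (by linarith)), show a - 1 + 1 = a by ring,
    Real.one_rpow, Real.zero_rpow ha0.ne']
  norm_num

lemma sus_val (ha0 : 1/2 < a) (ha1 : a < 1) (hla : l = a * (1 - a)) :
    (∑' j : ℕ, ∫⁻ x, (Top l)^[j] (fun _ => 1) x ∂μ₀)
      = ENNReal.ofReal (∫ x in Ioc (0:ℝ) 1, x ^ (a - 1)) := by
  rw [← lintegral_tsum (fun j => (iter_meas l j measurable_const).aemeasurable)]
  have h1 : ∫⁻ x, (∑' j : ℕ, (Top l)^[j] (fun _ => 1) x) ∂μ₀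
      = ∫⁻ x, ENNReal.ofReal (x ^ (a - 1)) ∂μ₀ :=
    lintegral_congr_ae (series ha0 ha1 hla)
  have hint : IntegrableOn (fun x : ℝ => x ^ (a - 1)) (Ioc (0:ℝ) 1) volume := by
    rw [← intervalIntegrable_iff_integrableOn_Ioc_of_le zero_le_one]
    exact intervalIntegral.intervalIntegrable_rpow' (by linarith)
  rw [h1, ← ofReal_integral_eq_lintegral_ofReal hint f_nonneg]

lemma finMeas : IsFiniteMeasure (volume.restrict (Ioc (0:ℝ) 1)) :=
  ⟨by simp [Measure.restrict_apply_univ, Real.volume_Ioc]⟩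

lemma unique (ha0 : 1/2 < a) (ha1 : a < 1) (hla : l = a * (1 - a)) (g : ℝ → ℝ)
    (hg : MemLp g 2 μ₀) (hgnn : 0 ≤ᵐ[μ₀] g)
    (hfix : ∀ᵐ x ∂μ₀, g x = 1 + l * ∫ y, (1 / max x y - 1) * g y ∂μ₀) :
    g =ᵐ[μ₀] fun x => x ^ (a - 1) := by
  haveI := finMeas
  have hl0 : 0 < l := by nlinarith
  have hl4 : 4 * l < 1 := by nlinarith
  set f : ℝ → ℝ := fun x => x ^ (a - 1) with hf
  have hfm : Measurable f := by fun_prop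
  have hgi : Integrable g μ₀ := hg.integrable (by norm_num)
  have hfi : Integrable f μ₀ := (memf ha0 ha1).integrable (by norm_num)
  -- integrability of kernel products
  have hkint : ∀ (u : ℝ → ℝ), Integrable u μ₀ → ∀ x ∈ Ioc (0:ℝ) 1,
      Integrable (fun y => (1 / max x y - 1) * u y) μ₀ := by
    intro u hu x hx
    refine hu.bdd_mul ((kmeas.comp measurable_prodMk_left).aestronglyMeasurable)
      (c := 1 / x + 1) (ae_of_all _ fun y => ?_)
    have hm : 0 < max x y := lt_max_of_lt_left hx.1
    have h1 : 1 / max x y ≤ 1 / x := one_div_le_one_div_of_le hx.1 (le_max_left _ _)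
    have h2 : 0 < 1 / max x y := by positivity
    rw [Real.norm_eq_abs]
    exact abs_le.mpr ⟨by linarith, by linarith⟩
  -- difference satisfies homogeneous equation
  have hsub : ∀ᵐ x ∂μ₀, g x - f x
      = l * ∫ y, (1 / max x y - 1) * (g y - f y) ∂μ₀ := by
    filter_upwards [hfix, eq_fixed ha0 ha1 hla, ae_restrict_mem measurableSet_Ioc]
      with x hgx hfx hx
    have h1 : (fun y => (1 / max x y - 1) * (g y - f y))
        = fun y => (1 / max x y - 1) * g y - (1 / max x y - 1) * f y := by
      funext y; ring
    rw [h1, integral_sub (hkint g hgi x hx) (hkint f hfi x hx)]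
    have hfx' : f x = 1 + l * ∫ y, (1 / max x y - 1) * f y ∂μ₀ := hfx
    rw [hgx, hfx']
    ring
  -- pass to ℝ≥0∞
  have hdm : AEMeasurable (fun x => g x - f x) μ₀ :=
    hg.aestronglyMeasurable.aemeasurable.sub hfm.aemeasurable
  set h' : ℝ → ℝ := hdm.mk _ with hh'
  have hh'm : Measurable h' := hdm.measurable_mk
  have hheq : (fun x => g x - f x) =ᵐ[μ₀] h' := hdm.ae_eq_mk
  set H : ℝ → ℝ≥0∞ := fun x => ENNReal.ofReal |g x - f x| with hH
  set H' : ℝ → ℝ≥0∞ := fun x => ENNReal.ofReal |h' x| with hH'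
  have hH'm : Measurable H' := hh'm.abs.ennreal_ofReal
  have hHeq : H =ᵐ[μ₀] H' := hheq.mono fun x hx => by simp only [hH, hH', hx]
  have hstep : ∀ᵐ x ∂μ₀, H x ≤ Top l H' x := by
    filter_upwards [hsub, ae_restrict_mem measurableSet_Ioc] with x hx hx1
    have hint1 : Integrable (fun y => (1 / max x y - 1) * (g y - f y)) μ₀ :=
      hkint _ (hgi.sub hfi) x hx1
    have habs : |g x - f x| ≤ l * ∫ y, |(1 / max x y - 1) * (g y - f y)| ∂μ₀ := by
      rw [hx, abs_mul, abs_of_pos hl0]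
      refine mul_le_mul_of_nonneg_left ?_ hl0.le
      have := norm_integral_le_integral_norm
        (μ := μ₀) (fun y => (1 / max x y - 1) * (g y - f y))
      simpa only [Real.norm_eq_abs] using this
    have h2 : ENNReal.ofReal (l * ∫ y, |(1 / max x y - 1) * (g y - f y)| ∂μ₀)
        = ∫⁻ y, ENNReal.ofReal (l * |(1 / max x y - 1) * (g y - f y)|) ∂μ₀ := by
      rw [← integral_const_mul l]
      refine ofReal_integral_eq_lintegral_ofReal ((hint1.abs).const_mul l) ?_
      exact Eventually.of_forall fun y => mul_nonneg hl0.le (abs_nonneg _)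
    have h3 : ∫⁻ y, ENNReal.ofReal (l * |(1 / max x y - 1) * (g y - f y)|) ∂μ₀
        = Top l H x := by
      refine lintegral_congr_ae ?_
      filter_upwards [ae_restrict_mem measurableSet_Ioc] with y hy
      rw [abs_mul, abs_of_nonneg (knonneg hx1 hy), ← mul_assoc,
        ENNReal.ofReal_mul (mul_nonneg hl0.le (knonneg hx1 hy))]
    calc H x ≤ ENNReal.ofReal (l * ∫ y, |(1 / max x y - 1) * (g y - f y)| ∂μ₀) :=
          ENNReal.ofReal_le_ofReal habs
      _ = Top l H x := by rw [h2, h3]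
      _ = Top l H' x := Tcongr hHeq x
  have hstep' : H' ≤ᵐ[μ₀] Top l H' := hHeq.symm.le.trans hstep
  -- pointwise monotone chain of iterates
  have hmono_iter : ∀ n : ℕ, ∀ x, (Top l)^[n+1] H' x ≤ (Top l)^[n+2] H' x := by
    intro n
    induction n with
    | zero => exact fun x => Tmono hstep' x
    | succ n ih =>
      intro x
      rw [Function.iterate_succ_apply' (Top l) (n+1) H',
        Function.iterate_succ_apply' (Top l) (n+2) H']
      exact Tmono (Eventually.of_forall ih) x
  have hae2 : ∀ n : ℕ, ∀ᵐ x ∂μ₀, H' x ≤ (Top l)^[n] H' x := by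
    intro n
    match n with
    | 0 => exact Eventually.of_forall fun x => le_rfl
    | (m+1) =>
      filter_upwards [hstep'] with x hx
      induction m with
      | zero => exact hx
      | succ m ihm => exact le_trans ihm (hmono_iter m x)
  -- L² bound forces H' = 0
  set t : ℝ≥0∞ := ∫⁻ x, H' x ^ (2:ℝ) ∂μ₀ with ht
  have ht_fin : t ≠ ∞ := by
    have hsq : Integrable (fun x => (g x - f x)^2) μ₀ :=
      (memLp_two_iff_integrable_sq
        (hg.aestronglyMeasurable.sub hfm.aestronglyMeasurable)).mp (hg.sub (memf ha0 ha1))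
    have hnn : 0 ≤ᵐ[μ₀] fun x => (g x - f x)^2 :=
      Eventually.of_forall fun x => sq_nonneg _
    have h1 : t = ∫⁻ x, ENNReal.ofReal ((g x - f x)^2) ∂μ₀ := by
      refine lintegral_congr_ae ?_
      filter_upwards [hHeq] with x hx
      rw [← hx, hH]
      rw [ENNReal.ofReal_rpow_of_nonneg (abs_nonneg _) (by norm_num : (0:ℝ) ≤ 2)]
      congr 1
      rw [Real.rpow_two, sq_abs]
    rw [h1]
    exact ((hasFiniteIntegral_iff_ofReal hnn).mp hsq.2).ne
  have hbound : ∀ n : ℕ, t ≤ (ENNReal.ofReal (4 * l) ^ (2:ℝ)) ^ n * t := by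
    intro n
    calc t ≤ ∫⁻ x, ((Top l)^[n] H' x) ^ (2:ℝ) ∂μ₀ := by
          refine lintegral_mono_ae ?_
          filter_upwards [hae2 n] with x hx
          exact ENNReal.rpow_le_rpow hx (by norm_num)
      _ ≤ (ENNReal.ofReal (4 * l) ^ (2:ℝ)) ^ n * t := schur_iter hl0 n hH'm
  have ht0 : t = 0 := by
    have htend : Tendsto (fun n : ℕ => (ENNReal.ofReal (4 * l) ^ (2:ℝ)) ^ n * t)
        atTop (𝓝 0) := by
      have := ENNReal.Tendsto.mul_const
        (ENNReal.tendsto_pow_atTop_nhds_zero_of_lt_one (hc2lt hl0 hl4)) (Or.inr ht_fin)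
      simpa using this
    exact le_antisymm (ge_of_tendsto' htend hbound) zero_le
  have hH'0 : H' =ᵐ[μ₀] 0 :=
    ENNReal.ae_eq_zero_of_lintegral_rpow_eq_zero (by norm_num) hH'm.aemeasurable ht0
  filter_upwards [hHeq, hH'0] with x hx h0
  have h1 : ENNReal.ofReal |g x - f x| = 0 := hx.trans h0
  have habs0 : |g x - f x| ≤ 0 := by simpa [ENNReal.ofReal_eq_zero] using h1
  have h2 : g x - f x = 0 := abs_eq_zero.mp (le_antisymm habs0 (abs_nonneg _))
  have : f x = x ^ (a - 1) := rfl
  linarith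


end S13

/-- The CHKNS kernel `κ(x,y) = 1/max(x,y) - 1` on `(0,1]`: for `0 < λ < 1/4` and
`α = (1+√(1-4λ))/2`, the function `f(x) = x^(α-1)` is the unique nonnegative `L²`
solution of `f = 1 + λ T_κ f`, `∑_j λ^j T_κ^j 1 = f` a.e., and
`sus(λκ) = ∫₀¹ x^(α-1) dx = 1/α = (1-√(1-4λ))/(2λ)`. -/
theorem stmt_13 (l : ℝ) (hl0 : 0 < l) (hl : l < 1 / 4) :
    let μ : Measure ℝ := volume.restrict (Set.Ioc (0 : ℝ) 1)
    let κ : ℝ → ℝ → ℝ := fun x y => 1 / max x y - 1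
    let α : ℝ := (1 + Real.sqrt (1 - 4 * l)) / 2
    let f : ℝ → ℝ := fun x => x ^ (α - 1)
    (0 ≤ᵐ[μ] f) ∧ MemLp f 2 μ ∧
    (∀ᵐ x ∂μ, f x = 1 + l * ∫ y, κ x y * f y ∂μ) ∧
    (∀ g : ℝ → ℝ, MemLp g 2 μ → 0 ≤ᵐ[μ] g →
      (∀ᵐ x ∂μ, g x = 1 + l * ∫ y, κ x y * g y ∂μ) → g =ᵐ[μ] f) ∧
    (∀ᵐ x ∂μ,
      (∑' j : ℕ, (Tker (fun a b => l * κ a b) μ)^[j] (fun _ => 1) x)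
        = ENNReal.ofReal (f x)) ∧
    susG (fun a b => l * κ a b) μ =
      ENNReal.ofReal (∫ x in Set.Ioc (0 : ℝ) 1, x ^ (α - 1)) ∧
    susG (fun a b => l * κ a b) μ = ENNReal.ofReal α⁻¹ ∧
    susG (fun a b => l * κ a b) μ =
      ENNReal.ofReal ((1 - Real.sqrt (1 - 4 * l)) / (2 * l)) := by
  intro μ κ α f
  have h4l : (0:ℝ) ≤ 1 - 4 * l := by linarith
  have hs2 : Real.sqrt (1 - 4 * l) ^ 2 = 1 - 4 * l := Real.sq_sqrt h4l
  have hs0 : 0 < Real.sqrt (1 - 4 * l) := Real.sqrt_pos.mpr (by linarith)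
  have hs1 : Real.sqrt (1 - 4 * l) < 1 := by nlinarith
  have ha0 : 1/2 < α := by show 1/2 < (1 + Real.sqrt (1 - 4 * l)) / 2; linarith
  have ha1 : α < 1 := by show (1 + Real.sqrt (1 - 4 * l)) / 2 < 1; linarith
  have hla : l = α * (1 - α) := by
    show l = (1 + Real.sqrt (1 - 4 * l)) / 2 * (1 - (1 + Real.sqrt (1 - 4 * l)) / 2)
    nlinarith
  have hTk : Tker (fun a b => l * κ a b) μ = S13.Top l := rfl
  have hsus : susG (fun a b => l * κ a b) μ
      = ∑' j : ℕ, ∫⁻ x, (S13.Top l)^[j] (fun _ => 1) x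
          ∂(volume.restrict (Set.Ioc (0:ℝ) 1)) := rfl
  have hinv : α⁻¹ = (1 - Real.sqrt (1 - 4 * l)) / (2 * l) := by
    show ((1 + Real.sqrt (1 - 4 * l)) / 2)⁻¹ = (1 - Real.sqrt (1 - 4 * l)) / (2 * l)
    rw [inv_eq_one_div, div_eq_div_iff (by linarith) (by linarith)]
    nlinarith
  have hsv : susG (fun a b => l * κ a b) μ
      = ENNReal.ofReal (∫ x in Set.Ioc (0:ℝ) 1, x ^ (α - 1)) := by
    rw [hsus]
    exact S13.sus_val ha0 ha1 hla
  have hsv2 : susG (fun a b => l * κ a b) μ = ENNReal.ofReal α⁻¹ := by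
    rw [hsv, S13.int_val (by linarith : (0:ℝ) < α)]
  refine ⟨S13.f_nonneg, S13.memf ha0 ha1, S13.eq_fixed ha0 ha1 hla,
    fun g hg hgnn hfix => S13.unique ha0 ha1 hla g hg hgnn hfix, ?_, hsv, hsv2,
    by rw [hsv2, hinv]⟩
  rw [hTk]
  exact S13.series ha0 ha1 hla
end

section
/- Let (S,μ) be a probability space, let ψ : S → (0,∞) be measurable with ∫_S ψ² dμ < ∞, and let κ(x,y) = ψ(x)ψ(y) (the rank 1 case). Then ‖T_κ‖ = ∫_S ψ² dμ, and for every λ with 0 < λ < (∫_S ψ² dμ)⁻¹, sus(λκ) = 1 + λ(∫_S ψ dμ)² / (1 − λ∫_S ψ² dμ). -/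
open MeasureTheory Filter Topology ENNReal

/-- The `L²`-operator norm of `T_κ`. -/
noncomputable def Knorm {S : Type*} [MeasurableSpace S] (κ : S → S → ℝ) (μ : Measure S) :
    ℝ≥0∞ :=
  ⨆ f : {f : S → ℝ≥0∞ // Measurable f ∧ (∫⁻ x, f x ^ 2 ∂μ) ≤ 1},
    (∫⁻ x, (Tker κ μ f.1 x) ^ 2 ∂μ) ^ (1 / 2 : ℝ)

lemma Tker_rank1 {S : Type*} [MeasurableSpace S] (μ : Measure S) (ψ : S → ℝ)
    (hψ : ∀ x, 0 ≤ ψ x) (f : S → ℝ≥0∞) (x : S) :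
    Tker (fun x y => ψ x * ψ y) μ f x
      = ENNReal.ofReal (ψ x) * ∫⁻ y, ENNReal.ofReal (ψ y) * f y ∂μ := by
  have : ∀ y, ENNReal.ofReal (ψ x * ψ y) * f y
      = ENNReal.ofReal (ψ x) * (ENNReal.ofReal (ψ y) * f y) := by
    intro y
    rw [ENNReal.ofReal_mul (hψ x), mul_assoc]
  simp only [Tker, this]
  exact lintegral_const_mul' _ _ ENNReal.ofReal_ne_top

lemma Tker_smul {S : Type*} [MeasurableSpace S] (μ : Measure S) (κ : S → S → ℝ)
    (l : ℝ) (hl : 0 ≤ l) (f : S → ℝ≥0∞) (x : S) :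
    Tker (fun x y => l * κ x y) μ f x = ENNReal.ofReal l * Tker κ μ f x := by
  have : ∀ y, ENNReal.ofReal (l * κ x y) * f y
      = ENNReal.ofReal l * (ENNReal.ofReal (κ x y) * f y) := by
    intro y
    rw [ENNReal.ofReal_mul hl, mul_assoc]
  simp only [Tker, this]
  exact lintegral_const_mul' _ _ ENNReal.ofReal_ne_top

/-- The rank 1 case `κ(x,y) = ψ(x)ψ(y)` with `ψ > 0` square-integrable:
`‖T_κ‖ = ∫ψ²`, and for `0 < λ < (∫ψ²)⁻¹`,
`sus(λκ) = 1 + λ(∫ψ)²/(1 - λ∫ψ²)`. -/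
theorem stmt_17 {S : Type*} [MeasurableSpace S] (μ : Measure S) [IsProbabilityMeasure μ]
    (ψ : S → ℝ) (hψmeas : Measurable ψ) (hψpos : ∀ x, 0 < ψ x)
    (hψ2 : Integrable (fun x => ψ x ^ 2) μ) :
    Knorm (fun x y => ψ x * ψ y) μ = ENNReal.ofReal (∫ x, ψ x ^ 2 ∂μ) ∧
    ∀ l : ℝ, 0 < l → l < (∫ x, ψ x ^ 2 ∂μ)⁻¹ →
      susG (fun x y => l * (ψ x * ψ y)) μ =
        ENNReal.ofReal
          (1 + l * (∫ x, ψ x ∂μ) ^ 2 / (1 - l * ∫ x, ψ x ^ 2 ∂μ)) := by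
  set A := ∫ x, ψ x ^ 2 ∂μ with hAdef
  set B := ∫ x, ψ x ∂μ with hBdef
  have hψnn : ∀ x, 0 ≤ ψ x := fun x => (hψpos x).le
  have hψint : Integrable ψ μ := by
    refine Integrable.mono' ((integrable_const 1).add hψ2) hψmeas.aestronglyMeasurable ?_
    filter_upwards with x
    have := hψpos x
    simp only [Pi.add_apply]
    rw [Real.norm_eq_abs, abs_of_pos this]
    nlinarith
  have hA : 0 < A := by
    rw [hAdef, integral_pos_iff_support_of_nonneg (fun x => sq_nonneg (ψ x)) hψ2]
    have : Function.support (fun x => ψ x ^ 2) = Set.univ := by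
      ext x
      simp only [Function.support, Set.mem_setOf_eq, Set.mem_univ, iff_true]
      exact pow_ne_zero 2 (hψpos x).ne'
    rw [this]
    simp
  have hB : 0 ≤ B := integral_nonneg hψnn
  have hl1 : (∫⁻ y, ENNReal.ofReal (ψ y) ∂μ) = ENNReal.ofReal B := by
    rw [hBdef, ofReal_integral_eq_lintegral_ofReal hψint (Filter.Eventually.of_forall hψnn)]
  have hl2 : (∫⁻ y, ENNReal.ofReal (ψ y) ^ 2 ∂μ) = ENNReal.ofReal A := by
    have h : ∀ y, ENNReal.ofReal (ψ y) ^ 2 = ENNReal.ofReal (ψ y ^ 2) := fun y =>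
      (ENNReal.ofReal_pow (hψnn y) 2).symm
    simp only [h]
    rw [hAdef, ofReal_integral_eq_lintegral_ofReal hψ2
      (Filter.Eventually.of_forall fun x => sq_nonneg _)]
  have hAne0 : ENNReal.ofReal A ≠ 0 := (ENNReal.ofReal_pos.mpr hA).ne'
  have hAnetop : ENNReal.ofReal A ≠ ⊤ := ENNReal.ofReal_ne_top
  have hmm : ∀ x x' : ℝ≥0∞, x * x' = x ^ 2 → True := fun _ _ _ => trivial
  have hsqrt : ((ENNReal.ofReal A) * (ENNReal.ofReal A)) ^ (1/2 : ℝ) = ENNReal.ofReal A := by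
    rw [← sq, ← ENNReal.rpow_natCast (ENNReal.ofReal A) 2, ← ENNReal.rpow_mul]
    norm_num
  constructor
  · -- operator norm
    apply le_antisymm
    · apply iSup_le
      rintro ⟨f, hfm, hf2⟩
      simp only
      have hc : (∫⁻ y, ENNReal.ofReal (ψ y) * f y ∂μ) ≤ (ENNReal.ofReal A) ^ (1/2 : ℝ) := by
        have hold := ENNReal.lintegral_mul_le_Lp_mul_Lq μ
          (Real.HolderTriple.mk (p := 2) (q := 2) (r := 1) (by norm_num) (by norm_num) (by norm_num))
          (f := fun y => ENNReal.ofReal (ψ y)) (g := f)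
          (by fun_prop) hfm.aemeasurable
        simp only [Pi.mul_apply] at hold
        have h2 : (2 : ℝ) = ((2 : ℕ) : ℝ) := by norm_num
        simp only [h2, ENNReal.rpow_natCast] at hold
        refine hold.trans ?_
        rw [hl2]
        calc (ENNReal.ofReal A) ^ (1/(2:ℝ)) * (∫⁻ a, f a ^ 2 ∂μ) ^ (1/(2:ℝ))
            ≤ (ENNReal.ofReal A) ^ (1/(2:ℝ)) * 1 ^ (1/(2:ℝ)) := by
              gcongr
          _ = (ENNReal.ofReal A) ^ (1/2 : ℝ) := by rw [ENNReal.one_rpow, mul_one]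
      set c := ∫⁻ y, ENNReal.ofReal (ψ y) * f y ∂μ with hcdef
      have hTf : ∀ x, Tker (fun x y => ψ x * ψ y) μ f x = ENNReal.ofReal (ψ x) * c :=
        fun x => Tker_rank1 μ ψ hψnn f x
      have hcne : c ≠ ⊤ := by
        refine ne_top_of_le_ne_top ?_ hc
        exact ENNReal.rpow_ne_top_of_nonneg (by norm_num) hAnetop
      have hint : (∫⁻ x, (Tker (fun x y => ψ x * ψ y) μ f x) ^ 2 ∂μ)
          = ENNReal.ofReal A * c ^ 2 := by
        simp only [hTf, mul_pow]
        rw [lintegral_mul_const' _ _ (ENNReal.pow_ne_top hcne), hl2]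
      rw [hint]
      have hc2 : c ^ 2 ≤ ENNReal.ofReal A := by
        calc c ^ 2 ≤ ((ENNReal.ofReal A) ^ (1/2 : ℝ)) ^ 2 := by gcongr
          _ = ENNReal.ofReal A := by
              rw [← ENNReal.rpow_natCast _ 2, ← ENNReal.rpow_mul]
              norm_num
      calc (ENNReal.ofReal A * c ^ 2) ^ (1/2 : ℝ)
          ≤ (ENNReal.ofReal A * ENNReal.ofReal A) ^ (1/2 : ℝ) := by gcongr
        _ = ENNReal.ofReal A := hsqrt
    · -- lower bound
      set c0 : ℝ≥0∞ := ((ENNReal.ofReal A) ^ (1/2 : ℝ))⁻¹ with hc0def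
      have hc0ne : c0 ≠ ⊤ := by
        rw [hc0def, ENNReal.inv_ne_top]
        exact (ENNReal.rpow_pos (ENNReal.ofReal_pos.mpr hA) hAnetop).ne'
      have hc0sq : c0 ^ 2 = (ENNReal.ofReal A)⁻¹ := by
        rw [hc0def, ← ENNReal.inv_pow, ← ENNReal.rpow_natCast _ 2, ← ENNReal.rpow_mul]
        norm_num
      set g : S → ℝ≥0∞ := fun x => ENNReal.ofReal (ψ x) * c0 with hgdef
      have hgm : Measurable g := by
        apply Measurable.mul _ measurable_const
        fun_prop
      have hg2 : (∫⁻ x, g x ^ 2 ∂μ) = 1 := by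
        simp only [hgdef, mul_pow]
        rw [lintegral_mul_const' _ _ (by simp [hc0sq, hAne0]), hl2, hc0sq,
          ENNReal.mul_inv_cancel hAne0 hAnetop]
      have hint : (∫⁻ y, ENNReal.ofReal (ψ y) * g y ∂μ) = ENNReal.ofReal A * c0 := by
        simp only [hgdef, ← mul_assoc, ← sq]
        rw [lintegral_mul_const' _ _ hc0ne, hl2]
      have hval : (∫⁻ x, (Tker (fun x y => ψ x * ψ y) μ g x) ^ 2 ∂μ) ^ (1/2 : ℝ)
          = ENNReal.ofReal A := by
        have hTg : ∀ x, Tker (fun x y => ψ x * ψ y) μ g x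
            = ENNReal.ofReal (ψ x) * (ENNReal.ofReal A * c0) := by
          intro x
          rw [Tker_rank1 μ ψ hψnn g x, hint]
        have hsq : (ENNReal.ofReal A * c0) ^ 2 = ENNReal.ofReal A := by
          rw [mul_pow, hc0sq, sq, mul_assoc, ENNReal.mul_inv_cancel hAne0 hAnetop, mul_one]
        have hTg2 : ∀ x, (Tker (fun x y => ψ x * ψ y) μ g x) ^ 2
            = ENNReal.ofReal (ψ x) ^ 2 * ENNReal.ofReal A := by
          intro x
          rw [hTg x, mul_pow, hsq]
        simp only [hTg2]
        rw [lintegral_mul_const' _ _ hAnetop, hl2, hsqrt]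
      calc ENNReal.ofReal A = (∫⁻ x, (Tker (fun x y => ψ x * ψ y) μ g x) ^ 2 ∂μ) ^ (1/2 : ℝ) :=
            hval.symm
        _ ≤ _ := le_iSup (fun f : {f : S → ℝ≥0∞ // Measurable f ∧ (∫⁻ x, f x ^ 2 ∂μ) ≤ 1} =>
            (∫⁻ x, (Tker (fun x y => ψ x * ψ y) μ f.1 x) ^ 2 ∂μ) ^ (1/2 : ℝ))
            ⟨g, hgm, hg2.le⟩
  · -- susceptibility
    intro l hl hlA
    have hlA' : l * A < 1 := by
      rw [lt_inv_comm₀ hl] at hlA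
      · calc l * A < l * l⁻¹ := by gcongr
          _ = 1 := mul_inv_cancel₀ hl.ne'
      · exact hA
    have hden : 0 < 1 - l * A := by linarith
    set T := Tker (fun x y => l * (ψ x * ψ y)) μ with hTdef
    have hT1 : ∀ (f : S → ℝ≥0∞) (x : S),
        T f x = ENNReal.ofReal l * (ENNReal.ofReal (ψ x) * ∫⁻ y, ENNReal.ofReal (ψ y) * f y ∂μ) := by
      intro f x
      rw [hTdef, Tker_smul μ _ l hl.le f x, Tker_rank1 μ ψ hψnn f x]
    have hiter : ∀ j : ℕ, T^[j+1] (fun _ => 1)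
        = fun x => ENNReal.ofReal l ^ (j+1) * ENNReal.ofReal A ^ j * ENNReal.ofReal B
            * ENNReal.ofReal (ψ x) := by
      intro j
      induction j with
      | zero =>
        funext x
        rw [Function.iterate_one, hT1]
        simp only [mul_one, hl1]
        ring
      | succ n ih =>
        funext x
        rw [Function.iterate_succ_apply', ih, hT1]
        have hC : ENNReal.ofReal l ^ (n+1) * ENNReal.ofReal A ^ n * ENNReal.ofReal B ≠ ⊤ := by
          apply ENNReal.mul_ne_top (ENNReal.mul_ne_top _ _) ENNReal.ofReal_ne_top
          · exact ENNReal.pow_ne_top ENNReal.ofReal_ne_top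
          · exact ENNReal.pow_ne_top ENNReal.ofReal_ne_top
        have : (∫⁻ y, ENNReal.ofReal (ψ y) *
            (ENNReal.ofReal l ^ (n+1) * ENNReal.ofReal A ^ n * ENNReal.ofReal B
              * ENNReal.ofReal (ψ y)) ∂μ)
            = ENNReal.ofReal l ^ (n+1) * ENNReal.ofReal A ^ n * ENNReal.ofReal B
              * ENNReal.ofReal A := by
          have heq : ∀ y, ENNReal.ofReal (ψ y) *
              (ENNReal.ofReal l ^ (n+1) * ENNReal.ofReal A ^ n * ENNReal.ofReal B
                * ENNReal.ofReal (ψ y))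
              = (ENNReal.ofReal l ^ (n+1) * ENNReal.ofReal A ^ n * ENNReal.ofReal B)
                * ENNReal.ofReal (ψ y) ^ 2 := by
            intro y; ring
          simp only [heq]
          rw [lintegral_const_mul' _ _ hC, hl2]
        rw [this]
        ring
    have hterm : ∀ j : ℕ, (∫⁻ x, T^[j+1] (fun _ => 1) x ∂μ)
        = (ENNReal.ofReal l * ENNReal.ofReal A) ^ j
          * (ENNReal.ofReal l * ENNReal.ofReal B ^ 2) := by
      intro j
      rw [hiter j]
      have hC : ENNReal.ofReal l ^ (j+1) * ENNReal.ofReal A ^ j * ENNReal.ofReal B ≠ ⊤ := by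
        apply ENNReal.mul_ne_top (ENNReal.mul_ne_top _ _) ENNReal.ofReal_ne_top
        · exact ENNReal.pow_ne_top ENNReal.ofReal_ne_top
        · exact ENNReal.pow_ne_top ENNReal.ofReal_ne_top
      rw [lintegral_const_mul'
        (ENNReal.ofReal l ^ (j+1) * ENNReal.ofReal A ^ j * ENNReal.ofReal B)
        (fun x => ENNReal.ofReal (ψ x)) hC, hl1]
      ring
    have hsum : susG (fun x y => l * (ψ x * ψ y)) μ
        = 1 + (1 - ENNReal.ofReal l * ENNReal.ofReal A)⁻¹
            * (ENNReal.ofReal l * ENNReal.ofReal B ^ 2) := by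
      rw [susG, ← hTdef, tsum_eq_zero_add' ENNReal.summable]
      have h0 : (∫⁻ x, T^[0] (fun _ => 1) x ∂μ) = 1 := by
        simp [Function.iterate_zero]
      rw [h0]
      congr 1
      simp only [hterm]
      rw [ENNReal.tsum_mul_right, ENNReal.tsum_geometric]
    rw [hsum]
    have hofReal : ENNReal.ofReal (1 + l * B ^ 2 / (1 - l * A))
        = 1 + (1 - ENNReal.ofReal l * ENNReal.ofReal A)⁻¹
            * (ENNReal.ofReal l * ENNReal.ofReal B ^ 2) := by
      rw [ENNReal.ofReal_add (by norm_num) (by positivity)]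
      congr 1
      · exact ENNReal.ofReal_one
      · rw [ENNReal.ofReal_div_of_pos hden, ENNReal.div_eq_inv_mul]
        congr 1
        · rw [ENNReal.ofReal_sub _ (by positivity), ENNReal.ofReal_one,
            ENNReal.ofReal_mul hl.le]
        · rw [ENNReal.ofReal_mul hl.le, ENNReal.ofReal_pow hB]
    rw [hofReal]
end

section
/- Let (S,μ) be a probability space and ψ : S → (0,∞) measurable with ∫_S ψ dμ < ∞ and ∫_S ψ² dμ < ∞; set λ_c := (∫_S ψ² dμ)⁻¹. For ξ > 0 define λ(ξ) := ξ / ∫_S (1 − e^{−ξψ(x)})ψ(x) dμ(x). Then λ(·) is real-analytic and strictly increasing on (0,∞), λ(ξ) > λ_c for all ξ > 0, λ(ξ) → λ_c as ξ → 0⁺, and λ(ξ) → ∞ as ξ → ∞; consequently ξ ↦ λ(ξ) is a bijection from (0,∞) onto (λ_c,∞). -/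
open MeasureTheory Filter Topology

section Aux

-- pointwise real inequalities
lemma aux_one_sub_exp_pos {u : ℝ} (hu : 0 < u) : 0 < 1 - Real.exp (-u) := by
  have : Real.exp (-u) < 1 := Real.exp_lt_one_iff.2 (by linarith)
  linarith

lemma aux_one_sub_exp_lt {u : ℝ} (hu : 0 < u) : 1 - Real.exp (-u) < u := by
  have := Real.add_one_lt_exp (neg_ne_zero.2 hu.ne')
  linarith

lemma aux_strictAnti (t : ℝ) (ht : 0 < t) :
    StrictAntiOn (fun s : ℝ => (1 - Real.exp (-(s * t))) / s) (Set.Ioi 0) := by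
  have hderiv : ∀ s : ℝ, 0 < s → HasDerivAt (fun s : ℝ => (1 - Real.exp (-(s * t))) / s)
      ((t * Real.exp (-(s * t)) * s - (1 - Real.exp (-(s * t))) * 1) / s ^ 2) s := by
    intro s hs
    have h1 : HasDerivAt (fun s : ℝ => -(s * t)) (-t) s := by
      simpa [Pi.neg_def] using ((hasDerivAt_id s).mul_const t).neg
    have h2 : HasDerivAt (fun s : ℝ => Real.exp (-(s * t))) (Real.exp (-(s * t)) * (-t)) s :=
      (Real.hasDerivAt_exp _).comp s h1
    have h3 : HasDerivAt (fun s : ℝ => 1 - Real.exp (-(s * t))) (t * Real.exp (-(s * t))) s := by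
      simpa [mul_comm, mul_assoc, Pi.sub_def] using ((hasDerivAt_const s (1:ℝ)).sub h2)
    exact h3.div (hasDerivAt_id s) hs.ne'
  apply strictAntiOn_of_deriv_neg (convex_Ioi 0)
  · intro s hs
    exact ((hderiv s hs).continuousAt).continuousWithinAt
  · intro s hs
    rw [interior_Ioi] at hs
    have hs' : (0:ℝ) < s := hs
    rw [(hderiv s hs).deriv]
    apply div_neg_of_neg_of_pos _ (by positivity)
    have hu : 0 < s * t := mul_pos hs ht
    have h2 : s * t + 1 < Real.exp (s * t) := Real.add_one_lt_exp hu.ne'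
    have h3 : Real.exp (-(s * t)) = (Real.exp (s * t))⁻¹ := Real.exp_neg _
    have h4 : 0 < Real.exp (s * t) := Real.exp_pos _
    rw [h3]
    have h5 : 0 < (Real.exp (s * t))⁻¹ * (Real.exp (s * t) - 1 - s * t) :=
      mul_pos (inv_pos.2 h4) (by linarith)
    have h6 : (Real.exp (s * t))⁻¹ * Real.exp (s * t) = 1 := inv_mul_cancel₀ h4.ne'
    nlinarith [h5, h6]

end Aux

set_option linter.unusedSectionVars false

section Meas
variable {S : Type*} [MeasurableSpace S] {μ : Measure S} [IsProbabilityMeasure μ]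
  {ψ : S → ℝ}

lemma aux_int_lt {f g : S → ℝ} (hf : Integrable f μ) (hg : Integrable g μ)
    (h : ∀ x, f x < g x) : ∫ x, f x ∂μ < ∫ x, g x ∂μ := by
  have h1 : 0 < ∫ x, (g x - f x) ∂μ := by
    rw [integral_pos_iff_support_of_nonneg (fun x => sub_nonneg.2 (h x).le) (hg.sub hf)]
    have hs : Function.support (fun x => g x - f x) = Set.univ := by
      ext x; simp [Function.mem_support, sub_ne_zero.2 (h x).ne']
    rw [hs]; simp
  rw [integral_sub hg hf] at h1
  linarith

lemma aux_integrable_exp (hψmeas : Measurable ψ) (hψpos : ∀ x, 0 < ψ x)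
    (hψ1 : Integrable ψ μ) {ξ : ℝ} (hξ : 0 ≤ ξ) :
    Integrable (fun x => Real.exp (-(ξ * ψ x)) * ψ x) μ := by
  refine hψ1.mono ?_ (Eventually.of_forall fun x => ?_)
  · exact ((hψmeas.const_mul ξ).neg.exp.mul hψmeas).aestronglyMeasurable
  · have h1 : 0 < ψ x := hψpos x
    have h2 : Real.exp (-(ξ * ψ x)) ≤ 1 :=
      Real.exp_le_one_iff.2 (by nlinarith)
    rw [Real.norm_eq_abs, Real.norm_eq_abs, abs_of_pos h1,
      abs_of_pos (mul_pos (Real.exp_pos _) h1)]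
    nlinarith [Real.exp_pos (-(ξ * ψ x))]

lemma aux_integrable_main (hψmeas : Measurable ψ) (hψpos : ∀ x, 0 < ψ x)
    (hψ1 : Integrable ψ μ) {ξ : ℝ} (hξ : 0 ≤ ξ) :
    Integrable (fun x => (1 - Real.exp (-(ξ * ψ x))) * ψ x) μ := by
  have := hψ1.sub (aux_integrable_exp hψmeas hψpos hψ1 hξ)
  refine this.congr (Eventually.of_forall fun x => ?_)
  simp only [Pi.sub_apply]
  ring

end Meas

section Analytic
variable {S : Type*} [MeasurableSpace S] {μ : Measure S} [IsProbabilityMeasure μ]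
  {ψ : S → ℝ}

lemma aux_G_diff (hψmeas : Measurable ψ) (hψpos : ∀ x, 0 < ψ x)
    (hψ1 : Integrable ψ μ) (hψ2 : Integrable (fun x => ψ x ^ 2) μ) :
    DifferentiableOn ℂ (fun z => ∫ x, Complex.exp (-(z * ψ x)) * ψ x ∂μ) {z : ℂ | 0 < z.re} := by
  have hm : ∀ z : ℂ, AEStronglyMeasurable (fun x => Complex.exp (-(z * ψ x)) * ψ x) μ :=
    fun z => (((Complex.measurable_ofReal.comp hψmeas).const_mul z).neg.cexp.mul
      (Complex.measurable_ofReal.comp hψmeas)).aestronglyMeasurable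
  have hm' : ∀ z : ℂ, AEStronglyMeasurable
      (fun x => Complex.exp (-(z * ψ x)) * (-(ψ x : ℂ)) * ψ x) μ := fun z =>
    ((((Complex.measurable_ofReal.comp hψmeas).const_mul z).neg.cexp.mul
      (Complex.measurable_ofReal.comp hψmeas).neg).mul
      (Complex.measurable_ofReal.comp hψmeas)).aestronglyMeasurable
  intro z₀ hz₀
  have hz₀' : (0:ℝ) < z₀.re := hz₀
  have key := hasDerivAt_integral_of_dominated_loc_of_deriv_le (μ := μ)
    (F := fun (z : ℂ) x => Complex.exp (-(z * ψ x)) * ψ x)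
    (F' := fun (z : ℂ) x => Complex.exp (-(z * ψ x)) * (-(ψ x : ℂ)) * ψ x)
    (bound := fun x => ψ x ^ 2) (x₀ := z₀) (Metric.ball_mem_nhds z₀ hz₀')
    (Eventually.of_forall fun z => hm z) ?_ (hm' z₀) ?_ ?_ ?_
  · exact (key.2.differentiableAt).differentiableWithinAt
  · -- Integrable (F z₀)
    refine hψ1.mono (hm z₀) (Eventually.of_forall fun x => ?_)
    have h1 : 0 < ψ x := hψpos x
    rw [norm_mul, Complex.norm_exp]
    have : (-(z₀ * ψ x)).re = -(z₀.re * ψ x) := by simp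
    rw [this]
    have h2 : Real.exp (-(z₀.re * ψ x)) ≤ 1 := Real.exp_le_one_iff.2 (by nlinarith)
    have h3 : ‖((ψ x : ℝ) : ℂ)‖ = ψ x := by
      rw [Complex.norm_real, Real.norm_eq_abs, abs_of_pos h1]
    rw [h3, Real.norm_eq_abs, abs_of_pos h1]
    nlinarith [Real.exp_pos (-(z₀.re * ψ x))]
  · -- bound
    refine Eventually.of_forall fun x => fun z hz => ?_
    have h1 : 0 < ψ x := hψpos x
    have hzre : 0 < z.re := by
      have hd : |z.re - z₀.re| ≤ dist z z₀ := by
        rw [Complex.dist_eq]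
        simpa using Complex.abs_re_le_norm (z - z₀)
      have := Metric.mem_ball.1 hz
      have := abs_lt.1 (lt_of_le_of_lt hd this)
      linarith [this.1]
    rw [norm_mul, norm_mul, Complex.norm_exp]
    have he : (-(z * ψ x)).re = -(z.re * ψ x) := by simp
    rw [he]
    have h2 : Real.exp (-(z.re * ψ x)) ≤ 1 := Real.exp_le_one_iff.2 (by nlinarith)
    have h3 : ‖((ψ x : ℝ) : ℂ)‖ = ψ x := by
      rw [Complex.norm_real, Real.norm_eq_abs, abs_of_pos h1]
    rw [norm_neg, h3]
    nlinarith [Real.exp_pos (-(z.re * ψ x))]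
  · exact hψ2
  · -- HasDerivAt
    refine Eventually.of_forall fun x z hz => ?_
    have h1 : HasDerivAt (fun z : ℂ => -(z * (ψ x : ℂ))) (-(ψ x : ℂ)) z := by
      simpa [Pi.neg_def] using ((hasDerivAt_id z).mul_const (ψ x : ℂ)).neg
    have h2 : HasDerivAt (fun z : ℂ => Complex.exp (-(z * ψ x)))
        (Complex.exp (-(z * ψ x)) * (-(ψ x : ℂ))) z :=
      (Complex.hasDerivAt_exp _).comp z h1
    simpa using h2.mul_const ((ψ x : ℝ) : ℂ)

end Analytic

section Analytic2
variable {S : Type*} [MeasurableSpace S] {μ : Measure S} [IsProbabilityMeasure μ]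
  {ψ : S → ℝ}

lemma aux_analytic_m (hψmeas : Measurable ψ) (hψpos : ∀ x, 0 < ψ x)
    (hψ1 : Integrable ψ μ) (hψ2 : Integrable (fun x => ψ x ^ 2) μ) :
    AnalyticOnNhd ℝ (fun ξ : ℝ => ∫ x, Real.exp (-(ξ * ψ x)) * ψ x ∂μ) (Set.Ioi 0) := by
  set G : ℂ → ℂ := fun z => ∫ x, Complex.exp (-(z * ψ x)) * ψ x ∂μ with hGdef
  have hopen : IsOpen {z : ℂ | 0 < z.re} := isOpen_lt continuous_const Complex.continuous_re
  have hG : AnalyticOnNhd ℂ G {z : ℂ | 0 < z.re} :=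
    (aux_G_diff hψmeas hψpos hψ1 hψ2).analyticOnNhd hopen
  intro ξ hξ
  have hGat : AnalyticAt ℝ G (↑ξ : ℂ) := (hG _ (by simpa using (Set.mem_Ioi.1 hξ))).restrictScalars
  have hofReal : AnalyticAt ℝ (fun t : ℝ => (t : ℂ)) ξ := Complex.ofRealCLM.analyticAt ξ
  have hre : AnalyticAt ℝ Complex.re ((G ∘ (fun t : ℝ => (t : ℂ))) ξ) := Complex.reCLM.analyticAt _
  have hcomp : AnalyticAt ℝ (G ∘ (fun t : ℝ => (t : ℂ))) ξ := hGat.comp hofReal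
  have h1 : AnalyticAt ℝ (Complex.re ∘ (G ∘ (fun t : ℝ => (t : ℂ)))) ξ := hre.comp hcomp
  have heq : ∀ t : ℝ, (G (t : ℂ)).re = ∫ x, Real.exp (-(t * ψ x)) * ψ x ∂μ := by
    intro t
    have h0 : (fun x => Complex.exp (-((t:ℂ) * ψ x)) * (ψ x : ℂ)) =
        fun x => ((Real.exp (-(t * ψ x)) * ψ x : ℝ) : ℂ) := by
      funext x
      rw [Complex.ofReal_mul, Complex.ofReal_exp]
      push_cast
      ring_nf
    have h2 : G (t : ℂ) = ((∫ x, Real.exp (-(t * ψ x)) * ψ x ∂μ : ℝ) : ℂ) := by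
      rw [hGdef]; simp only; rw [h0]; exact integral_ofReal
    rw [h2, Complex.ofReal_re]
  exact h1.congr (Eventually.of_forall heq)

lemma aux_slope (t : ℝ) (ht : 0 < t) :
    Tendsto (fun ξ : ℝ => (1 - Real.exp (-(ξ * t))) * t / ξ) (𝓝[>] (0:ℝ)) (𝓝 (t ^ 2)) := by
  have hf : HasDerivAt (fun ξ : ℝ => 1 - Real.exp (-(ξ * t))) t 0 := by
    have h1 : HasDerivAt (fun ξ : ℝ => -(ξ * t)) (-t) 0 := by
      simpa [Pi.neg_def] using ((hasDerivAt_id (0:ℝ)).mul_const t).neg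
    have h2 : HasDerivAt (fun ξ : ℝ => Real.exp (-(ξ * t))) (Real.exp (-(0 * t)) * (-t)) 0 :=
      (Real.hasDerivAt_exp _).comp 0 h1
    have := ((hasDerivAt_const (0:ℝ) (1:ℝ)).sub h2)
    simpa [Pi.sub_def] using this
  have hs : Tendsto (slope (fun ξ : ℝ => 1 - Real.exp (-(ξ * t))) 0) (𝓝[≠] (0:ℝ)) (𝓝 t) :=
    hasDerivAt_iff_tendsto_slope.1 hf
  have hs' : Tendsto (slope (fun ξ : ℝ => 1 - Real.exp (-(ξ * t))) 0) (𝓝[>] (0:ℝ)) (𝓝 t) :=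
    hs.mono_left (nhdsWithin_mono 0 fun x hx => ne_of_gt hx)
  have h2 : (fun ξ : ℝ => slope (fun ξ : ℝ => 1 - Real.exp (-(ξ * t))) 0 ξ * t)
      =ᶠ[𝓝[>] (0:ℝ)] (fun ξ : ℝ => (1 - Real.exp (-(ξ * t))) * t / ξ) := by
    filter_upwards [self_mem_nhdsWithin] with ξ (hξ : (0:ℝ) < ξ)
    have hξ0 : (ξ:ℝ) ≠ 0 := ne_of_gt hξ
    rw [slope_def_field]
    field_simp
    simp only [mul_zero, neg_zero, Real.exp_zero, sub_self, sub_zero]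
    ring
  have h3 := (hs'.mul_const t).congr' h2
  simpa [pow_two] using h3

end Analytic2

/-- In the rank 1 setting, the parametrization
`λ(ξ) = ξ / ∫ (1 - e^{-ξψ})ψ dμ` of the supercritical regime: `λ` is real-analytic and
strictly increasing on `(0,∞)`, takes values `> λ_c = (∫ψ²)⁻¹`, tends to `λ_c` as
`ξ → 0⁺` and to `∞` as `ξ → ∞`, and is a bijection from `(0,∞)` onto `(λ_c,∞)`. -/
theorem stmt_18 {S : Type*} [MeasurableSpace S] (μ : Measure S) [IsProbabilityMeasure μ]
    (ψ : S → ℝ) (hψmeas : Measurable ψ) (hψpos : ∀ x, 0 < ψ x)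
    (hψ1 : Integrable ψ μ) (hψ2 : Integrable (fun x => ψ x ^ 2) μ) :
    let lc : ℝ := (∫ x, ψ x ^ 2 ∂μ)⁻¹
    let lam : ℝ → ℝ := fun ξ => ξ / ∫ x, (1 - Real.exp (-(ξ * ψ x))) * ψ x ∂μ
    StrictMonoOn lam (Set.Ioi 0) ∧
    AnalyticOnNhd ℝ lam (Set.Ioi 0) ∧
    (∀ ξ : ℝ, 0 < ξ → lc < lam ξ) ∧
    Tendsto lam (nhdsWithin 0 (Set.Ioi 0)) (nhds lc) ∧
    Tendsto lam atTop atTop ∧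
    Set.BijOn lam (Set.Ioi 0) (Set.Ioi lc) := by
  intro lc lam
  have hlc : lc = (∫ x, ψ x ^ 2 ∂μ)⁻¹ := rfl
  have hlam : ∀ ξ : ℝ, lam ξ = ξ / ∫ x, (1 - Real.exp (-(ξ * ψ x))) * ψ x ∂μ := fun _ => rfl
  have hsupp : ∀ f : S → ℝ, (∀ x, 0 < f x) → Function.support f = Set.univ := by
    intro f hf; ext x; simp [Function.mem_support, (hf x).ne']
  have hI : 0 < ∫ x, ψ x ^ 2 ∂μ := by
    rw [integral_pos_iff_support_of_nonneg (fun x => sq_nonneg _) hψ2,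
      hsupp _ (fun x => pow_pos (hψpos x) 2)]
    simp
  have hJ : 0 < ∫ x, ψ x ∂μ := by
    rw [integral_pos_iff_support_of_nonneg (fun x => (hψpos x).le) hψ1, hsupp _ hψpos]
    simp
  have hmain : ∀ ξ : ℝ, 0 ≤ ξ → Integrable (fun x => (1 - Real.exp (-(ξ * ψ x))) * ψ x) μ :=
    fun ξ hξ => aux_integrable_main hψmeas hψpos hψ1 hξ
  have hgpos : ∀ ξ : ℝ, 0 < ξ → 0 < ∫ x, (1 - Real.exp (-(ξ * ψ x))) * ψ x ∂μ := by
    intro ξ hξ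
    have := aux_int_lt (integrable_zero _ _ μ) (hmain ξ hξ.le) (fun x =>
      mul_pos (aux_one_sub_exp_pos (mul_pos hξ (hψpos x))) (hψpos x))
    simpa using this
  have hub : ∀ ξ : ℝ, 0 < ξ →
      (∫ x, (1 - Real.exp (-(ξ * ψ x))) * ψ x ∂μ) < ξ * ∫ x, ψ x ^ 2 ∂μ := by
    intro ξ hξ
    have h1 := aux_int_lt (hmain ξ hξ.le) (hψ2.const_mul ξ) (fun x => by
      have hu := aux_one_sub_exp_lt (mul_pos hξ (hψpos x))
      have ht := hψpos x
      nlinarith)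
    rwa [integral_const_mul] at h1
  have hg_le : ∀ ξ : ℝ, 0 ≤ ξ →
      (∫ x, (1 - Real.exp (-(ξ * ψ x))) * ψ x ∂μ) ≤ ∫ x, ψ x ∂μ := by
    intro ξ hξ
    refine integral_mono (hmain ξ hξ) hψ1 fun x => ?_
    have ht := hψpos x
    have he : 0 < Real.exp (-(ξ * ψ x)) := Real.exp_pos _
    nlinarith
  have hmono : StrictMonoOn lam (Set.Ioi 0) := by
    intro a ha b hb hab
    have ha0 : (0:ℝ) < a := ha
    have hb0 : (0:ℝ) < b := hb
    have hpt : ∀ x, a * ((1 - Real.exp (-(b * ψ x))) * ψ x)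
        < b * ((1 - Real.exp (-(a * ψ x))) * ψ x) := by
      intro x
      have ht := hψpos x
      have h1 := (aux_strictAnti (ψ x) ht) ha hb hab
      simp only at h1
      rw [div_lt_div_iff₀ hb0 ha0] at h1
      nlinarith
    have h2 := aux_int_lt ((hmain b hb0.le).const_mul a) ((hmain a ha0.le).const_mul b) hpt
    rw [integral_const_mul, integral_const_mul] at h2
    rw [hlam a, hlam b, div_lt_div_iff₀ (hgpos a ha0) (hgpos b hb0)]
    linarith
  have hanal : AnalyticOnNhd ℝ lam (Set.Ioi 0) := by
    have hm := aux_analytic_m hψmeas hψpos hψ1 hψ2 (μ := μ)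
    intro ξ hξ
    have hξ0 : (0:ℝ) < ξ := hξ
    have hden : AnalyticAt ℝ
        (fun t : ℝ => (∫ x, ψ x ∂μ) - ∫ x, Real.exp (-(t * ψ x)) * ψ x ∂μ) ξ :=
      analyticAt_const.sub (hm ξ hξ)
    have hsub : ∀ t : ℝ, 0 < t → (∫ x, ψ x ∂μ) - (∫ x, Real.exp (-(t * ψ x)) * ψ x ∂μ)
        = ∫ x, (1 - Real.exp (-(t * ψ x))) * ψ x ∂μ := by
      intro t ht
      rw [← integral_sub hψ1 (aux_integrable_exp hψmeas hψpos hψ1 ht.le)]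
      congr 1; funext x; ring
    have h1 : AnalyticAt ℝ (fun t : ℝ =>
        t / ((∫ x, ψ x ∂μ) - ∫ x, Real.exp (-(t * ψ x)) * ψ x ∂μ)) ξ := by
      apply AnalyticAt.div analyticAt_id hden
      rw [hsub ξ hξ0]
      exact (hgpos ξ hξ0).ne'
    refine h1.congr ?_
    filter_upwards [isOpen_Ioi.mem_nhds hξ] with t (ht : (0:ℝ) < t)
    rw [hsub t ht]
  have hgt : ∀ ξ : ℝ, 0 < ξ → lc < lam ξ := by
    intro ξ hξ
    rw [hlam ξ, hlc, ← one_div, div_lt_div_iff₀ hI (hgpos ξ hξ)]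
    linarith [hub ξ hξ]
  have h0 : Tendsto lam (𝓝[>] (0:ℝ)) (𝓝 lc) := by
    have hcv : Tendsto (fun ξ : ℝ => ∫ x, (1 - Real.exp (-(ξ * ψ x))) * ψ x / ξ ∂μ)
        (𝓝[>] (0:ℝ)) (𝓝 (∫ x, ψ x ^ 2 ∂μ)) := by
      apply tendsto_integral_filter_of_dominated_convergence (fun x => ψ x ^ 2)
      · exact Eventually.of_forall fun ξ =>
          (((measurable_const.sub ((hψmeas.const_mul ξ).neg.exp)).mul
            hψmeas).div_const ξ).aestronglyMeasurable
      · filter_upwards [self_mem_nhdsWithin] with ξ (hξ : (0:ℝ) < ξ)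
        refine Eventually.of_forall fun x => ?_
        have ht := hψpos x
        have hu := mul_pos hξ ht
        have h1 := aux_one_sub_exp_pos hu
        have h2 := aux_one_sub_exp_lt hu
        rw [Real.norm_eq_abs, abs_of_nonneg (by positivity)]
        rw [div_le_iff₀ hξ]
        nlinarith
      · exact hψ2
      · exact Eventually.of_forall fun x => aux_slope (ψ x) (hψpos x)
    simp only [integral_div] at hcv
    have hinv := hcv.inv₀ hI.ne'
    refine hinv.congr fun ξ => ?_
    rw [inv_div]
  have hatTop : Tendsto lam atTop atTop := by
    have hbase : Tendsto (fun ξ : ℝ => ξ / ∫ x, ψ x ∂μ) atTop atTop :=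
      tendsto_id.atTop_div_const hJ
    apply tendsto_atTop_mono' atTop ?_ hbase
    filter_upwards [eventually_gt_atTop (0:ℝ)] with ξ hξ
    rw [hlam ξ]
    apply div_le_div_of_nonneg_left hξ.le
    · exact hgpos ξ hξ
    · exact hg_le ξ hξ.le
  refine ⟨hmono, hanal, hgt, h0, hatTop, fun ξ hξ => hgt ξ hξ, hmono.injOn, ?_⟩
  intro y hy
  have hy' : lc < y := hy
  have hev : ∀ᶠ ξ in 𝓝[>] (0:ℝ), lam ξ < y := h0 (Iio_mem_nhds hy')
  obtain ⟨a, hay, ha0⟩ := (hev.and self_mem_nhdsWithin).exists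
  have ha0' : (0:ℝ) < a := ha0
  obtain ⟨b, hby, hab⟩ := ((hatTop.eventually_gt_atTop y).and (eventually_ge_atTop a)).exists
  have hcont : ContinuousOn lam (Set.Icc a b) := fun t htt =>
    ((hanal t (Set.mem_Ioi.2 (lt_of_lt_of_le ha0' htt.1))).continuousAt).continuousWithinAt
  obtain ⟨ξ, hmem, heq⟩ := intermediate_value_Icc hab hcont ⟨hay.le, hby.le⟩
  exact ⟨ξ, Set.mem_Ioi.2 (lt_of_lt_of_le ha0' hmem.1), heq⟩
end

section
/- Let (S,μ) be a probability space and ψ : S → (0,∞) measurable with ∫_S ψ dμ < ∞, ∫_S ψ² dμ < ∞ and ∫_S ψ³ dμ < ∞; set λ_c := (∫_S ψ² dμ)⁻¹. For ξ > 0 define λ(ξ) := ξ / ∫_S (1 − e^{−ξψ})ψ dμ and S(ξ) := ∫_S e^{−ξψ} dμ + ξ(∫_S e^{−ξψ}ψ dμ)² / ∫_S (1 − e^{−ξψ}(1+ξψ))ψ dμ. Then, as ξ → 0⁺: λ(ξ) = λ_c + (ξ/2)·(∫_S ψ³ dμ)/(∫_S ψ² dμ)² + o(ξ), and (λ(ξ)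 − λ_c)·S(ξ) → (∫_S ψ dμ)²/(∫_S ψ² dμ)². -/
open MeasureTheory Filter Topology Asymptotics Real

private lemma aux_mono {F F' : ℝ → ℝ} (hd : ∀ t, HasDerivAt F (F' t) t)
    (h : ∀ t, 0 ≤ t → 0 ≤ F' t) {t : ℝ} (ht : 0 ≤ t) : F 0 ≤ F t := by
  have hdiff : Differentiable ℝ F := fun x => (hd x).differentiableAt
  have hmono : MonotoneOn F (Set.Ici (0:ℝ)) := by
    refine monotoneOn_of_deriv_nonneg (convex_Ici 0) hdiff.continuous.continuousOn
      hdiff.differentiableOn ?_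
    intro x hx
    rw [interior_Ici] at hx
    rw [(hd x).deriv]
    exact h x hx.le
  exact hmono Set.self_mem_Ici ht ht

private lemma hasDerivAt_expNeg (t : ℝ) :
    HasDerivAt (fun t : ℝ => Real.exp (-t)) (-Real.exp (-t)) t := by
  exact ((Real.hasDerivAt_exp (-t)).comp t ((hasDerivAt_id t).neg)).congr_deriv (by simp)

private lemma exp_bound1 {t : ℝ} (ht : 0 ≤ t) : Real.exp (-t) ≤ 1 - t + t ^ 2 / 2 := by
  have := aux_mono (F := fun t => 1 - t + t ^ 2 / 2 - Real.exp (-t))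
    (F' := fun t => -1 + t + Real.exp (-t)) ?_ ?_ ht
  · simpa using this
  · intro s
    have h1 : HasDerivAt (fun t : ℝ => 1 - t + t ^ 2 / 2) (-1 + s) s := by
      have := ((hasDerivAt_const s (1:ℝ)).sub (hasDerivAt_id s)).add
        (((hasDerivAt_pow 2 s)).div_const 2)
      exact this.congr_deriv (by push_cast; ring)
    exact (h1.sub (hasDerivAt_expNeg s)).congr_deriv (by simp)
  · intro s hs
    have := Real.add_one_le_exp (-s)
    linarith

private lemma exp_bound2 {t : ℝ} (ht : 0 ≤ t) :
    1 - t + t ^ 2 / 2 - t ^ 3 / 6 ≤ Real.exp (-t) := by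
  have := aux_mono (F := fun t => Real.exp (-t) - (1 - t + t ^ 2 / 2 - t ^ 3 / 6))
    (F' := fun t => -Real.exp (-t) - (-1 + t - t ^ 2 / 2)) ?_ ?_ ht
  · simpa using this
  · intro s
    have h1 : HasDerivAt (fun t : ℝ => 1 - t + t ^ 2 / 2 - t ^ 3 / 6) (-1 + s - s ^ 2 / 2) s := by
      have := (((hasDerivAt_const s (1:ℝ)).sub (hasDerivAt_id s)).add
        ((hasDerivAt_pow 2 s).div_const 2)).sub ((hasDerivAt_pow 3 s).div_const 6)
      exact this.congr_deriv (by push_cast; ring)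
    exact (hasDerivAt_expNeg s).sub h1
  · intro s hs
    have := exp_bound1 hs
    linarith

private lemma exp_bound3 {t : ℝ} (ht : 0 ≤ t) : 1 - t ^ 2 / 2 ≤ Real.exp (-t) * (1 + t) := by
  have := aux_mono (F := fun t => Real.exp (-t) * (1 + t) - 1 + t ^ 2 / 2)
    (F' := fun t => t - t * Real.exp (-t)) ?_ ?_ ht
  · have h := this; simp only [neg_zero, Real.exp_zero] at h; linarith
  · intro s
    have hb : HasDerivAt (fun t : ℝ => 1 + t) 1 s := by
      exact ((hasDerivAt_const s (1:ℝ)).add (hasDerivAt_id s)).congr_deriv (by simp)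
    have h1 : HasDerivAt (fun t : ℝ => Real.exp (-t) * (1 + t))
        (-Real.exp (-s) * (1 + s) + Real.exp (-s) * 1) s :=
      (hasDerivAt_expNeg s).mul hb
    have h2 := (h1.sub (hasDerivAt_const s (1:ℝ))).add ((hasDerivAt_pow 2 s).div_const 2)
    exact h2.congr_deriv (by push_cast; ring)
  · intro s hs
    have h1 : Real.exp (-s) ≤ 1 := Real.exp_le_one_iff.mpr (by linarith)
    nlinarith

private lemma exp_bound4 {t : ℝ} (ht : 0 ≤ t) :
    Real.exp (-t) * (1 + t) - 1 + t ^ 2 / 2 ≤ t ^ 3 / 3 := by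
  have := aux_mono (F := fun t => t ^ 3 / 3 - (Real.exp (-t) * (1 + t) - 1 + t ^ 2 / 2))
    (F' := fun t => t ^ 2 - (t - t * Real.exp (-t))) ?_ ?_ ht
  · simpa using this
  · intro s
    have h1 : HasDerivAt (fun t : ℝ => Real.exp (-t) * (1 + t) - 1 + t ^ 2 / 2)
        (s - s * Real.exp (-s)) s := by
      have hb : HasDerivAt (fun t : ℝ => 1 + t) 1 s := by
        exact ((hasDerivAt_const s (1:ℝ)).add (hasDerivAt_id s)).congr_deriv (by simp)
      have h1 : HasDerivAt (fun t : ℝ => Real.exp (-t) * (1 + t))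
          (-Real.exp (-s) * (1 + s) + Real.exp (-s) * 1) s :=
        (hasDerivAt_expNeg s).mul hb
      have h2 := (h1.sub (hasDerivAt_const s (1:ℝ))).add ((hasDerivAt_pow 2 s).div_const 2)
      exact h2.congr_deriv (by push_cast; ring)
    have h2 := ((hasDerivAt_pow 3 s).div_const 3).sub h1
    exact h2.congr_deriv (by push_cast; ring)
  · intro s hs
    have h1 : 1 - s ≤ Real.exp (-s) := by have := Real.add_one_le_exp (-s); linarith
    nlinarith

set_option linter.unusedSectionVars false
section helpers
variable {S : Type*} [MeasurableSpace S] {μ : Measure S} [IsProbabilityMeasure μ] {ψ : S → ℝ}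

private lemma E_le_one {t : ℝ} (ht : 0 ≤ t) : Real.exp (-t) ≤ 1 := by
  rw [← Real.exp_zero]; exact Real.exp_le_exp.mpr (by linarith)

private lemma E_mul_le_one (t : ℝ) : Real.exp (-t) * (1 + t) ≤ 1 := by
  have h1 : Real.exp (-t) * (1 + t) ≤ Real.exp (-t) * Real.exp t :=
    mul_le_mul_of_nonneg_left (by linarith [Real.add_one_le_exp t]) (Real.exp_pos _).le
  have h2 : Real.exp (-t) * Real.exp t = 1 := by rw [← Real.exp_add]; simp
  linarith

private lemma E_mul_lt_one {t : ℝ} (ht : 0 < t) : Real.exp (-t) * (1 + t) < 1 := by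
  have h1 : Real.exp (-t) * (1 + t) < Real.exp (-t) * Real.exp t :=
    mul_lt_mul_of_pos_left (by linarith [Real.add_one_lt_exp ht.ne']) (Real.exp_pos _)
  have h2 : Real.exp (-t) * Real.exp t = 1 := by rw [← Real.exp_add]; simp
  linarith

private lemma meas_E (hψm : Measurable ψ) (ξ : ℝ) :
    Measurable fun x => Real.exp (-(ξ * ψ x)) := ((hψm.const_mul ξ).neg).exp

private lemma int_pos {f : S → ℝ} (hf : ∀ x, 0 < f x) (hfi : Integrable f μ) :
    0 < ∫ x, f x ∂μ := by
  rw [integral_pos_iff_support_of_nonneg (fun x => (hf x).le) hfi]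
  have h : Function.support f = Set.univ := Set.eq_univ_of_forall fun x => (hf x).ne'
  rw [h, measure_univ]; norm_num

private lemma intg_E (hψm : Measurable ψ) (hψpos : ∀ x, 0 < ψ x) {ξ : ℝ} (hξ : 0 ≤ ξ) :
    Integrable (fun x => Real.exp (-(ξ * ψ x))) μ := by
  refine (integrable_const (1:ℝ)).mono' (meas_E hψm ξ).aestronglyMeasurable
    (ae_of_all _ fun x => ?_)
  rw [Real.norm_eq_abs, abs_of_pos (Real.exp_pos _)]
  exact E_le_one (mul_nonneg hξ (hψpos x).le)

private lemma intg_Eψ (hψm : Measurable ψ) (hψpos : ∀ x, 0 < ψ x) (hψ1 : Integrable ψ μ)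
    {ξ : ℝ} (hξ : 0 ≤ ξ) :
    Integrable (fun x => Real.exp (-(ξ * ψ x)) * ψ x) μ := by
  refine hψ1.mono' ((meas_E hψm ξ).mul hψm).aestronglyMeasurable (ae_of_all _ fun x => ?_)
  rw [Real.norm_eq_abs, abs_of_nonneg (mul_nonneg (Real.exp_pos _).le (hψpos x).le)]
  nlinarith [E_le_one (mul_nonneg hξ (hψpos x).le), (hψpos x).le, Real.exp_pos (-(ξ * ψ x))]

private lemma intg_A (hψm : Measurable ψ) (hψpos : ∀ x, 0 < ψ x) (hψ1 : Integrable ψ μ)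
    {ξ : ℝ} (hξ : 0 ≤ ξ) :
    Integrable (fun x => (1 - Real.exp (-(ξ * ψ x))) * ψ x) μ := by
  refine hψ1.mono' ((measurable_const.sub (meas_E hψm ξ)).mul hψm).aestronglyMeasurable
    (ae_of_all _ fun x => ?_)
  have h1 := E_le_one (mul_nonneg hξ (hψpos x).le)
  have h2 := Real.exp_pos (-(ξ * ψ x))
  rw [Real.norm_eq_abs, abs_of_nonneg (by nlinarith [(hψpos x).le])]
  nlinarith [(hψpos x).le]

private lemma intg_G (hψm : Measurable ψ) (hψpos : ∀ x, 0 < ψ x) (hψ1 : Integrable ψ μ)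
    {ξ : ℝ} (hξ : 0 ≤ ξ) :
    Integrable (fun x => (1 - Real.exp (-(ξ * ψ x)) * (1 + ξ * ψ x)) * ψ x) μ := by
  refine hψ1.mono'
    ((measurable_const.sub ((meas_E hψm ξ).mul (measurable_const.add (hψm.const_mul ξ)))).mul
      hψm).aestronglyMeasurable (ae_of_all _ fun x => ?_)
  have ht : 0 ≤ ξ * ψ x := mul_nonneg hξ (hψpos x).le
  have h1 := E_mul_le_one (ξ * ψ x)
  have h2 : 0 ≤ Real.exp (-(ξ * ψ x)) * (1 + ξ * ψ x) := by positivity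
  rw [Real.norm_eq_abs, abs_of_nonneg (by nlinarith [(hψpos x).le])]
  nlinarith [(hψpos x).le]

end helpers

section dct
variable {S : Type*} [MeasurableSpace S] {μ : Measure S} [IsProbabilityMeasure μ] {ψ : S → ℝ}

private lemma tendB (hψm : Measurable ψ) (hψpos : ∀ x, 0 < ψ x) :
    Tendsto (fun ξ : ℝ => ∫ x, Real.exp (-(ξ * ψ x)) ∂μ) (nhdsWithin 0 (Set.Ioi 0))
      (nhds 1) := by
  have key := tendsto_integral_filter_of_dominated_convergence (μ := μ)
    (l := nhdsWithin (0:ℝ) (Set.Ioi 0)) (F := fun ξ x => Real.exp (-(ξ * ψ x)))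
    (f := fun _ => (1:ℝ)) (bound := fun _ => (1:ℝ))
    (Eventually.of_forall fun ξ => (meas_E hψm ξ).aestronglyMeasurable)
    ?_ (integrable_const 1) ?_
  · simpa using key
  · filter_upwards [self_mem_nhdsWithin] with ξ (hξ : 0 < ξ)
    refine ae_of_all _ fun x => ?_
    rw [Real.norm_eq_abs, abs_of_pos (Real.exp_pos _)]
    exact E_le_one (mul_nonneg hξ.le (hψpos x).le)
  · refine ae_of_all _ fun x => ?_
    have hc : Continuous fun ξ : ℝ => Real.exp (-(ξ * ψ x)) :=
      Real.continuous_exp.comp ((continuous_id.mul continuous_const).neg)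
    have h2 : Tendsto (fun ξ : ℝ => Real.exp (-(ξ * ψ x))) (nhdsWithin 0 (Set.Ioi 0))
        (nhds (Real.exp (-(0 * ψ x)))) := (hc.tendsto 0).mono_left nhdsWithin_le_nhds
    simpa using h2

private lemma tendC (hψm : Measurable ψ) (hψpos : ∀ x, 0 < ψ x) (hψ1 : Integrable ψ μ) :
    Tendsto (fun ξ : ℝ => ∫ x, Real.exp (-(ξ * ψ x)) * ψ x ∂μ) (nhdsWithin 0 (Set.Ioi 0))
      (nhds (∫ x, ψ x ∂μ)) := by
  refine tendsto_integral_filter_of_dominated_convergence (μ := μ)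
    (bound := ψ)
    (Eventually.of_forall fun ξ => ((meas_E hψm ξ).mul hψm).aestronglyMeasurable)
    ?_ hψ1 ?_
  · filter_upwards [self_mem_nhdsWithin] with ξ (hξ : 0 < ξ)
    refine ae_of_all _ fun x => ?_
    rw [Real.norm_eq_abs, abs_of_nonneg (mul_nonneg (Real.exp_pos _).le (hψpos x).le)]
    nlinarith [E_le_one (mul_nonneg hξ.le (hψpos x).le), (hψpos x).le,
      Real.exp_pos (-(ξ * ψ x))]
  · refine ae_of_all _ fun x => ?_
    have hc : Continuous fun ξ : ℝ => Real.exp (-(ξ * ψ x)) * ψ x :=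
      (Real.continuous_exp.comp ((continuous_id.mul continuous_const).neg)).mul
        continuous_const
    have h2 : Tendsto (fun ξ : ℝ => Real.exp (-(ξ * ψ x)) * ψ x) (nhdsWithin 0 (Set.Ioi 0))
        (nhds (Real.exp (-(0 * ψ x)) * ψ x)) := (hc.tendsto 0).mono_left nhdsWithin_le_nhds
    simpa using h2

private lemma tendG (hψm : Measurable ψ) (hψpos : ∀ x, 0 < ψ x) (hψ3 : Integrable (fun x => ψ x ^ 3) μ) :
    Tendsto (fun ξ : ℝ => (∫ x, (1 - Real.exp (-(ξ * ψ x)) * (1 + ξ * ψ x)) * ψ x ∂μ) / ξ ^ 2)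
      (nhdsWithin 0 (Set.Ioi 0)) (nhds ((∫ x, ψ x ^ 3 ∂μ) / 2)) := by
  have key := tendsto_integral_filter_of_dominated_convergence (μ := μ)
    (l := nhdsWithin (0:ℝ) (Set.Ioi 0))
    (F := fun ξ x => (1 - Real.exp (-(ξ * ψ x)) * (1 + ξ * ψ x)) * ψ x / ξ ^ 2)
    (f := fun x => ψ x ^ 3 / 2) (bound := fun x => ψ x ^ 3 / 2)
    (Eventually.of_forall fun ξ =>
      (((measurable_const.sub ((meas_E hψm ξ).mul (measurable_const.add
        (hψm.const_mul ξ)))).mul hψm).div_const _).aestronglyMeasurable)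
    ?_ (hψ3.div_const 2) ?_
  · simpa only [integral_div] using key
  · filter_upwards [self_mem_nhdsWithin] with ξ (hξ : 0 < ξ)
    refine ae_of_all _ fun x => ?_
    have ht : 0 ≤ ξ * ψ x := mul_nonneg hξ.le (hψpos x).le
    have hξ2 : (0:ℝ) < ξ ^ 2 := by positivity
    have h1 := E_mul_le_one (ξ * ψ x)
    have h3 := exp_bound3 ht
    have hnum : 0 ≤ (1 - Real.exp (-(ξ * ψ x)) * (1 + ξ * ψ x)) * ψ x := by
      nlinarith [(hψpos x).le]
    rw [Real.norm_eq_abs, abs_of_nonneg (div_nonneg hnum hξ2.le), div_le_iff₀ hξ2]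
    nlinarith [(hψpos x).le]
  · refine ae_of_all _ fun x => ?_
    have hs : Tendsto (fun ξ : ℝ => ψ x ^ 3 / 2 -
        (1 - Real.exp (-(ξ * ψ x)) * (1 + ξ * ψ x)) * ψ x / ξ ^ 2)
        (nhdsWithin 0 (Set.Ioi 0)) (nhds 0) := by
      apply squeeze_zero' (g := fun ξ : ℝ => ξ * (ψ x ^ 4 / 3))
      · filter_upwards [self_mem_nhdsWithin] with ξ (hξ : 0 < ξ)
        have ht : 0 ≤ ξ * ψ x := mul_nonneg hξ.le (hψpos x).le
        have hξ2 : (0:ℝ) < ξ ^ 2 := by positivity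
        have h3 := exp_bound3 ht
        rw [sub_nonneg, div_le_iff₀ hξ2]
        nlinarith [(hψpos x).le]
      · filter_upwards [self_mem_nhdsWithin] with ξ (hξ : 0 < ξ)
        have ht : 0 ≤ ξ * ψ x := mul_nonneg hξ.le (hψpos x).le
        have hξ2 : (0:ℝ) < ξ ^ 2 := by positivity
        have h4 := exp_bound4 ht
        have h5 : (ψ x ^ 3 / 2 - ξ * (ψ x ^ 4 / 3)) * ξ ^ 2 ≤
            (1 - Real.exp (-(ξ * ψ x)) * (1 + ξ * ψ x)) * ψ x := by
          nlinarith [(hψpos x).le]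
        have h6 := (le_div_iff₀ hξ2).mpr h5
        linarith
      · have : Tendsto (fun ξ : ℝ => ξ * (ψ x ^ 4 / 3)) (nhds 0)
            (nhds (0 * (ψ x ^ 4 / 3))) := (continuous_id.mul continuous_const).tendsto 0
        simpa using this.mono_left nhdsWithin_le_nhds
    have h7 : Tendsto (fun ξ : ℝ => ψ x ^ 3 / 2 - (ψ x ^ 3 / 2 -
        (1 - Real.exp (-(ξ * ψ x)) * (1 + ξ * ψ x)) * ψ x / ξ ^ 2))
        (nhdsWithin 0 (Set.Ioi 0)) (nhds (ψ x ^ 3 / 2 - 0)) := tendsto_const_nhds.sub hs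
    simp only [sub_sub_cancel, sub_zero] at h7
    exact h7

private lemma tendA (hψm : Measurable ψ) (hψpos : ∀ x, 0 < ψ x) (hψ1 : Integrable ψ μ)
    (hψ2 : Integrable (fun x => ψ x ^ 2) μ) (hψ3 : Integrable (fun x => ψ x ^ 3) μ) :
    Tendsto (fun ξ : ℝ => ((∫ x, (1 - Real.exp (-(ξ * ψ x))) * ψ x ∂μ)
        - ξ * ∫ x, ψ x ^ 2 ∂μ + ξ ^ 2 / 2 * ∫ x, ψ x ^ 3 ∂μ) / ξ ^ 2)
      (nhdsWithin 0 (Set.Ioi 0)) (nhds 0) := by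
  have key := tendsto_integral_filter_of_dominated_convergence (μ := μ)
    (l := nhdsWithin (0:ℝ) (Set.Ioi 0))
    (F := fun ξ x => ((1 - Real.exp (-(ξ * ψ x))) * ψ x - ξ * ψ x ^ 2
      + ξ ^ 2 / 2 * ψ x ^ 3) / ξ ^ 2)
    (f := fun _ => (0:ℝ)) (bound := fun x => ψ x ^ 3 / 2)
    (Eventually.of_forall fun ξ =>
      (((((measurable_const.sub (meas_E hψm ξ)).mul hψm).sub
        ((hψm.pow_const 2).const_mul ξ)).add
        ((hψm.pow_const 3).const_mul (ξ ^ 2 / 2))).div_const _).aestronglyMeasurable)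
    ?_ (hψ3.div_const 2) ?_
  · simp only [integral_zero] at key
    refine key.congr' ?_
    filter_upwards [self_mem_nhdsWithin] with ξ (hξ : 0 < ξ)
    have i1 : Integrable (fun x => (1 - Real.exp (-(ξ * ψ x))) * ψ x - ξ * ψ x ^ 2) μ :=
      (intg_A hψm hψpos hψ1 hξ.le).sub (hψ2.const_mul ξ)
    have i2 : Integrable (fun x => ξ ^ 2 / 2 * ψ x ^ 3) μ := hψ3.const_mul _
    rw [integral_div, integral_add i1 i2,
      integral_sub (intg_A hψm hψpos hψ1 hξ.le) (hψ2.const_mul ξ),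
      integral_const_mul, integral_const_mul]
  · filter_upwards [self_mem_nhdsWithin] with ξ (hξ : 0 < ξ)
    refine ae_of_all _ fun x => ?_
    have ht : 0 ≤ ξ * ψ x := mul_nonneg hξ.le (hψpos x).le
    have hξ2 : (0:ℝ) < ξ ^ 2 := by positivity
    have h1 := exp_bound1 ht
    have h2 : 1 - ξ * ψ x ≤ Real.exp (-(ξ * ψ x)) := by
      linarith [Real.add_one_le_exp (-(ξ * ψ x))]
    have hnum : 0 ≤ (1 - Real.exp (-(ξ * ψ x))) * ψ x - ξ * ψ x ^ 2
        + ξ ^ 2 / 2 * ψ x ^ 3 := by nlinarith [(hψpos x).le]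
    rw [Real.norm_eq_abs, abs_of_nonneg (div_nonneg hnum hξ2.le), div_le_iff₀ hξ2]
    nlinarith [(hψpos x).le]
  · refine ae_of_all _ fun x => ?_
    apply squeeze_zero' (g := fun ξ : ℝ => ξ * (ψ x ^ 4 / 6))
    · filter_upwards [self_mem_nhdsWithin] with ξ (hξ : 0 < ξ)
      have ht : 0 ≤ ξ * ψ x := mul_nonneg hξ.le (hψpos x).le
      have hξ2 : (0:ℝ) < ξ ^ 2 := by positivity
      have h1 := exp_bound1 ht
      have hnum : 0 ≤ (1 - Real.exp (-(ξ * ψ x))) * ψ x - ξ * ψ x ^ 2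
          + ξ ^ 2 / 2 * ψ x ^ 3 := by nlinarith [(hψpos x).le]
      positivity
    · filter_upwards [self_mem_nhdsWithin] with ξ (hξ : 0 < ξ)
      have ht : 0 ≤ ξ * ψ x := mul_nonneg hξ.le (hψpos x).le
      have hξ2 : (0:ℝ) < ξ ^ 2 := by positivity
      have h2 := exp_bound2 ht
      rw [div_le_iff₀ hξ2]
      nlinarith [(hψpos x).le, hξ.le]
    · have : Tendsto (fun ξ : ℝ => ξ * (ψ x ^ 4 / 6)) (nhds 0)
          (nhds (0 * (ψ x ^ 4 / 6))) := (continuous_id.mul continuous_const).tendsto 0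
      simpa using this.mono_left nhdsWithin_le_nhds

end dct

/-- Critical behaviour in the rank 1 case: with
`λ(ξ) = ξ / ∫ (1 - e^{-ξψ})ψ dμ`, `λ_c = (∫ψ²)⁻¹` and
`S(ξ) = ∫ e^{-ξψ} dμ + ξ(∫ e^{-ξψ}ψ dμ)² / ∫ (1 - e^{-ξψ}(1+ξψ))ψ dμ`, as `ξ → 0⁺`:
`λ(ξ) = λ_c + (ξ/2)·(∫ψ³)/(∫ψ²)² + o(ξ)` and
`(λ(ξ) - λ_c)·S(ξ) → (∫ψ)²/(∫ψ²)²`. -/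
theorem stmt_19 {S : Type*} [MeasurableSpace S] (μ : Measure S) [IsProbabilityMeasure μ]
    (ψ : S → ℝ) (hψmeas : Measurable ψ) (hψpos : ∀ x, 0 < ψ x)
    (hψ1 : Integrable ψ μ) (hψ2 : Integrable (fun x => ψ x ^ 2) μ)
    (hψ3 : Integrable (fun x => ψ x ^ 3) μ) :
    let lc : ℝ := (∫ x, ψ x ^ 2 ∂μ)⁻¹
    let lam : ℝ → ℝ := fun ξ => ξ / ∫ x, (1 - Real.exp (-(ξ * ψ x))) * ψ x ∂μ
    let Sq : ℝ → ℝ := fun ξ =>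
      (∫ x, Real.exp (-(ξ * ψ x)) ∂μ) +
        ξ * (∫ x, Real.exp (-(ξ * ψ x)) * ψ x ∂μ) ^ 2 /
          ∫ x, (1 - Real.exp (-(ξ * ψ x)) * (1 + ξ * ψ x)) * ψ x ∂μ
    (fun ξ : ℝ =>
        lam ξ - lc - ξ / 2 * ((∫ x, ψ x ^ 3 ∂μ) / (∫ x, ψ x ^ 2 ∂μ) ^ 2))
      =o[nhdsWithin 0 (Set.Ioi 0)] (fun ξ : ℝ => ξ) ∧
    Tendsto (fun ξ : ℝ => (lam ξ - lc) * Sq ξ) (nhdsWithin 0 (Set.Ioi 0))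
      (nhds ((∫ x, ψ x ∂μ) ^ 2 / (∫ x, ψ x ^ 2 ∂μ) ^ 2)) := by
  intro lc lam Sq
  have hlam : lam = fun ξ => ξ / ∫ x, (1 - Real.exp (-(ξ * ψ x))) * ψ x ∂μ := rfl
  have hlc : lc = (∫ x, ψ x ^ 2 ∂μ)⁻¹ := rfl
  have hSqd : Sq = fun ξ =>
      (∫ x, Real.exp (-(ξ * ψ x)) ∂μ) +
        ξ * (∫ x, Real.exp (-(ξ * ψ x)) * ψ x ∂μ) ^ 2 /
          ∫ x, (1 - Real.exp (-(ξ * ψ x)) * (1 + ξ * ψ x)) * ψ x ∂μ := rfl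
  simp only [hlam, hlc, hSqd]
  set M1 := ∫ x, ψ x ∂μ with hM1def
  set M2 := ∫ x, ψ x ^ 2 ∂μ with hM2def
  set M3 := ∫ x, ψ x ^ 3 ∂μ with hM3def
  set l := nhdsWithin (0:ℝ) (Set.Ioi 0) with hldef
  have hM2 : 0 < M2 := by
    rw [hM2def]; exact int_pos (fun x => pow_pos (hψpos x) 2) hψ2
  have hM3 : 0 < M3 := by
    rw [hM3def]; exact int_pos (fun x => pow_pos (hψpos x) 3) hψ3
  have hApos : ∀ ξ : ℝ, 0 < ξ → 0 < ∫ x, (1 - Real.exp (-(ξ * ψ x))) * ψ x ∂μ := by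
    intro ξ hξ
    refine int_pos (fun x => mul_pos ?_ (hψpos x)) (intg_A hψmeas hψpos hψ1 hξ.le)
    have h1 : Real.exp (-(ξ * ψ x)) < 1 := by
      rw [← Real.exp_zero]
      exact Real.exp_lt_exp.mpr (by nlinarith [hψpos x])
    linarith
  have hGpos : ∀ ξ : ℝ, 0 < ξ →
      0 < ∫ x, (1 - Real.exp (-(ξ * ψ x)) * (1 + ξ * ψ x)) * ψ x ∂μ := by
    intro ξ hξ
    refine int_pos (fun x => mul_pos ?_ (hψpos x)) (intg_G hψmeas hψpos hψ1 hξ.le)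
    have h1 := E_mul_lt_one (mul_pos hξ (hψpos x))
    linarith
  have hξ0 : Tendsto (fun ξ : ℝ => ξ) l (nhds 0) :=
    tendsto_id.mono_right nhdsWithin_le_nhds
  have hr := tendA hψmeas hψpos hψ1 hψ2 hψ3 (μ := μ)
  rw [← hM2def, ← hM3def, ← hldef] at hr
  have hAdiv : Tendsto (fun ξ : ℝ =>
      (∫ x, (1 - Real.exp (-(ξ * ψ x))) * ψ x ∂μ) / ξ) l (nhds M2) := by
    have h1 : Tendsto (fun ξ : ℝ =>
        ξ * (((∫ x, (1 - Real.exp (-(ξ * ψ x))) * ψ x ∂μ) - ξ * M2 + ξ ^ 2 / 2 * M3) / ξ ^ 2)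
          + (M2 - ξ / 2 * M3)) l (nhds (0 * 0 + (M2 - 0 / 2 * M3))) :=
      (hξ0.mul hr).add (tendsto_const_nhds.sub ((hξ0.div_const 2).mul_const M3))
    rw [show (0:ℝ) * 0 + (M2 - 0 / 2 * M3) = M2 by ring] at h1
    apply Tendsto.congr' _ h1
    filter_upwards [self_mem_nhdsWithin] with ξ (hξ : 0 < ξ)
    field_simp
    ring
  have hT1 : Tendsto (fun ξ : ℝ =>
      (ξ / (∫ x, (1 - Real.exp (-(ξ * ψ x))) * ψ x ∂μ) - M2⁻¹) / ξ) l
      (nhds (M3 / (2 * M2 ^ 2))) := by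
    have h1 : Tendsto (fun ξ : ℝ =>
        (M3 / 2 - ((∫ x, (1 - Real.exp (-(ξ * ψ x))) * ψ x ∂μ) - ξ * M2 + ξ ^ 2 / 2 * M3) / ξ ^ 2)
          / (((∫ x, (1 - Real.exp (-(ξ * ψ x))) * ψ x ∂μ) / ξ) * M2)) l
        (nhds ((M3 / 2 - 0) / (M2 * M2))) :=
      Tendsto.div (tendsto_const_nhds.sub hr) (hAdiv.mul_const M2)
        (by positivity)
    rw [show (M3 / 2 - 0) / (M2 * M2) = M3 / (2 * M2 ^ 2) from by
      rw [sub_zero]; ring] at h1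
    apply Tendsto.congr' _ h1
    filter_upwards [self_mem_nhdsWithin] with ξ (hξ : 0 < ξ)
    have hA := hApos ξ hξ
    generalize (∫ x, (1 - Real.exp (-(ξ * ψ x))) * ψ x ∂μ) = A at hA ⊢
    field_simp
    ring
  have hT0 : Tendsto (fun ξ : ℝ =>
      (ξ / (∫ x, (1 - Real.exp (-(ξ * ψ x))) * ψ x ∂μ) - M2⁻¹ - ξ / 2 * (M3 / M2 ^ 2)) / ξ) l
      (nhds 0) := by
    have h1 := hT1.sub_const (M3 / (2 * M2 ^ 2))
    rw [sub_self] at h1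
    apply Tendsto.congr' _ h1
    filter_upwards [self_mem_nhdsWithin] with ξ (hξ : 0 < ξ)
    have hA := hApos ξ hξ
    field_simp
  constructor
  · refine (Asymptotics.isLittleO_iff_tendsto' ?_).mpr hT0
    filter_upwards [self_mem_nhdsWithin] with ξ (hξ : 0 < ξ)
    intro h
    exact absurd h hξ.ne'
  · have hB := tendB hψmeas hψpos (μ := μ)
    have hC := tendC hψmeas hψpos hψ1 (μ := μ)
    have hG := tendG hψmeas hψpos hψ3 (μ := μ)
    rw [← hldef] at hB
    rw [← hM1def, ← hldef] at hC
    rw [← hM3def, ← hldef] at hG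
    have hlam0 : Tendsto (fun ξ : ℝ =>
        ξ / (∫ x, (1 - Real.exp (-(ξ * ψ x))) * ψ x ∂μ) - M2⁻¹) l (nhds 0) := by
      have h1 := hξ0.mul hT1
      rw [zero_mul] at h1
      apply Tendsto.congr' _ h1
      filter_upwards [self_mem_nhdsWithin] with ξ (hξ : 0 < ξ)
      field_simp
    have hGi : Tendsto (fun ξ : ℝ =>
        ξ ^ 2 / ∫ x, (1 - Real.exp (-(ξ * ψ x)) * (1 + ξ * ψ x)) * ψ x ∂μ) l
        (nhds (2 / M3)) := by
      have h1 := hG.inv₀ ((div_pos hM3 two_pos).ne')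
      simpa only [inv_div] using h1
    have main := (hlam0.mul hB).add ((hT1.mul (hC.pow 2)).mul hGi)
    rw [show (0:ℝ) * 1 + M3 / (2 * M2 ^ 2) * M1 ^ 2 * (2 / M3) = M1 ^ 2 / M2 ^ 2 from by
      field_simp; ring] at main
    apply Tendsto.congr' _ main
    filter_upwards [self_mem_nhdsWithin] with ξ (hξ : 0 < ξ)
    have hA := hApos ξ hξ
    have hGp := hGpos ξ hξ
    field_simp
end
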